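/- arXiv:2601.15496 — 16 statements merged into one kernel-verified Lean document; each statement's English description precedes it below -/
import Mathlib

section
/- Let 0 < λ₁ < λ₂ < 1 and set w = λ₁λ₂, x = λ₁(1−λ₂), y = (1−λ₁)λ₂, z = (1−λ₁)(1−λ₂). Suppose V : {1,2,...} × {0,1,2,...} → ℝ is nonnegative, the family (V_{i,j}) is summable with total sum 1, the family (i·V_{i,j}) is summable, and, writing Q_j = Σ_{i≥1} V_{i,j}, the stationary balance equations hold: V_{1,j} = w·Q_j + y·Q_{j+1} for all j ≥ 0; V_{i+1,0} = (1−λ₁)·V_{i,0} for all i ≥ 1; and V_{i+1,j} = x·V_{i,j−1} + z·V_{i,j} for all i ≥ 1 and j ≥ 1. Then Σ_{i≥1} Σ_{j≥0} i·V_{i,j} = 1/λ₁. -/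
open scoped BigOperators

/-!
Summing the balance equations over the age index shows that the queue-length marginal
`Q j = ∑ᵢ V i j` obeys the cut equation `y Q (j+1) = x Q j`, so it is geometric with ratio `x / y`
and `y Q 0 = y - x = λ₂ - λ₁`; the empty-queue column is geometric with ratio `1 - λ₁`, whence
`V 0 0 = λ₁ Q 0`. Summing over the queue index instead, the age marginal obeys
`R (i+1) = (1 - λ₂) R i + y V i 0`. Multiplying by `i + 1` and summing gives
`λ₂ ∑ (i+1) R i = ∑ R i + y V 0 0 / λ₁² = 1 + (λ₂ - λ₁) / λ₁ = λ₂ / λ₁`.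
-/

theorem eq_pow_mul_of_succ_eq_mul {M : Type*} [Monoid M] {q : ℕ → M} {r : M}
    (h : ∀ n, q (n + 1) = r * q n) (n : ℕ) : q n = r ^ n * q 0 := by
  induction n with
  | zero => simp
  | succ n ih => rw [h, ih, pow_succ', mul_assoc]

theorem tsum_eq_of_succ_eq_mul {𝕜 : Type*} [NormedDivisionRing 𝕜] [CompleteSpace 𝕜]
    {q : ℕ → 𝕜} {r : 𝕜} (hr : ‖r‖ < 1) (h : ∀ n, q (n + 1) = r * q n) :
    ∑' n, q n = (1 - r)⁻¹ * q 0 := by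
  rw [tsum_congr (eq_pow_mul_of_succ_eq_mul h), tsum_mul_right, tsum_geometric_of_norm_lt_one hr]

theorem hasSum_succ_mul_geometric_of_norm_lt_one {𝕜 : Type*} [NormedField 𝕜] [CompleteSpace 𝕜]
    {r : 𝕜} (hr : ‖r‖ < 1) :
    HasSum (fun n : ℕ => ((n : 𝕜) + 1) * r ^ n) (1 / (1 - r) ^ 2) := by
  simpa using hasSum_choose_mul_geometric_of_norm_lt_one 1 hr

theorem one_sub_mul_tsum_succ_mul_of_succ_eq {a : ℝ} {R c : ℕ → ℝ} (hR : Summable R)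
    (hwR : Summable fun i : ℕ => ((i : ℝ) + 1) * R i)
    (hwc : Summable fun i : ℕ => ((i : ℝ) + 1) * c i)
    (hrec : ∀ i, R (i + 1) = a * R i + c i) :
    (1 - a) * ∑' i : ℕ, ((i : ℝ) + 1) * R i = ∑' i, R i + ∑' i : ℕ, ((i : ℝ) + 1) * c i := by
  have hiR : Summable fun i : ℕ => (i : ℝ) * R i := (hwR.sub hR).congr fun i => by ring
  have hshift : ∑' i : ℕ, (i : ℝ) * R i = ∑' i : ℕ, ((i : ℝ) + 1) * R (i + 1) := by
    rw [hiR.tsum_eq_zero_add]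
    simp
  have hsub : ∑' i : ℕ, (i : ℝ) * R i = ∑' i : ℕ, ((i : ℝ) + 1) * R i - ∑' i, R i := by
    rw [← hwR.tsum_sub hR]
    exact tsum_congr fun i => by ring
  have hstep : ∑' i : ℕ, ((i : ℝ) + 1) * R (i + 1)
      = a * ∑' i : ℕ, ((i : ℝ) + 1) * R i + ∑' i : ℕ, ((i : ℝ) + 1) * c i := by
    simp only [hrec, mul_add, mul_left_comm _ a]
    rw [(hwR.mul_left a).tsum_add hwc, tsum_mul_left]
  linarith

namespace GeoGeoController

variable {l1 l2 : ℝ} {V : ℕ → ℕ → ℝ}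

theorem mul_tsum_empty_queue_eq_corner (hcol : Summable fun i => V i 0)
    (hbal0 : ∀ i : ℕ, V (i + 1) 0 = (1 - l1) * V i 0) :
    l1 * ∑' i, V i 0 = V 0 0 := by
  have h := hcol.tsum_eq_zero_add
  rw [tsum_congr hbal0, tsum_mul_left] at h
  linear_combination h

theorem queue_succ_balance (hcol : ∀ j, Summable fun i => V i j)
    (hbal1 : ∀ j : ℕ,
      V 0 j = (l1 * l2) * (∑' i : ℕ, V i j) + ((1 - l1) * l2) * (∑' i : ℕ, V i (j + 1)))
    (hbal : ∀ i j : ℕ,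
      V (i + 1) (j + 1) = (l1 * (1 - l2)) * V i j + ((1 - l1) * (1 - l2)) * V i (j + 1))
    (j : ℕ) :
    (l1 * (1 - l2) + (1 - l1) * l2) * ∑' i, V i (j + 1)
      = l1 * (1 - l2) * ∑' i, V i j + (1 - l1) * l2 * ∑' i, V i (j + 1 + 1) := by
  have h := (hcol (j + 1)).tsum_eq_zero_add
  rw [tsum_congr fun i => hbal i j, ((hcol j).mul_left _).tsum_add ((hcol (j + 1)).mul_left _),
    tsum_mul_left, tsum_mul_left, hbal1] at h
  linear_combination h

theorem queue_cut_balance (hcol : ∀ j, Summable fun i => V i j)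
    (hbal1 : ∀ j : ℕ,
      V 0 j = (l1 * l2) * (∑' i : ℕ, V i j) + ((1 - l1) * l2) * (∑' i : ℕ, V i (j + 1)))
    (hbal0 : ∀ i : ℕ, V (i + 1) 0 = (1 - l1) * V i 0)
    (hbal : ∀ i j : ℕ,
      V (i + 1) (j + 1) = (l1 * (1 - l2)) * V i j + ((1 - l1) * (1 - l2)) * V i (j + 1))
    (j : ℕ) :
    (1 - l1) * l2 * ∑' i, V i (j + 1) = l1 * (1 - l2) * ∑' i, V i j := by
  induction j with
  | zero =>
    have h := hbal1 0
    rw [← mul_tsum_empty_queue_eq_corner (hcol 0) hbal0] at h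
    linear_combination -h
  | succ j ih => linear_combination ih - queue_succ_balance hcol hbal1 hbal j

theorem mul_tsum_empty_queue_eq (hl1 : 0 < l1) (hl12 : l1 < l2) (hl2 : l2 < 1)
    (hsum : Summable fun p : ℕ × ℕ => V p.1 p.2)
    (htot : ∑' p : ℕ × ℕ, V p.1 p.2 = 1)
    (hbal1 : ∀ j : ℕ,
      V 0 j = (l1 * l2) * (∑' i : ℕ, V i j) + ((1 - l1) * l2) * (∑' i : ℕ, V i (j + 1)))
    (hbal0 : ∀ i : ℕ, V (i + 1) 0 = (1 - l1) * V i 0)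
    (hbal : ∀ i j : ℕ,
      V (i + 1) (j + 1) = (l1 * (1 - l2)) * V i j + ((1 - l1) * (1 - l2)) * V i (j + 1)) :
    (1 - l1) * l2 * ∑' i, V i 0 = l2 - l1 := by
  have hy : 0 < (1 - l1) * l2 := mul_pos (by linarith) (by linarith)
  set r := l1 * (1 - l2) / ((1 - l1) * l2) with hr
  have hr_lt : r < 1 := by rw [hr, div_lt_one hy]; nlinarith
  have hr_norm : ‖r‖ < 1 := by
    rw [Real.norm_eq_abs, abs_lt]
    exact ⟨by rw [hr]; linarith [div_pos (mul_pos hl1 (sub_pos.2 hl2)) hy], hr_lt⟩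
  have hQ := tsum_eq_of_succ_eq_mul (q := fun j => ∑' i, V i j) hr_norm fun j => by
    rw [hr, div_mul_eq_mul_div, eq_div_iff hy.ne', mul_comm]
    exact queue_cut_balance (fun j => hsum.prod_symm.prod_factor j) hbal1 hbal0 hbal j
  rw [hsum.tsum_comm, ← hsum.tsum_prod, htot, eq_inv_mul_iff_mul_eq₀ (sub_ne_zero.2 hr_lt.ne'),
    mul_one] at hQ
  rw [← hQ, hr, mul_one_sub, mul_div_cancel₀ _ hy.ne']
  ring

theorem age_succ_balance (hrow : ∀ i, Summable (V i))
    (hbal0 : ∀ i : ℕ, V (i + 1) 0 = (1 - l1) * V i 0)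
    (hbal : ∀ i j : ℕ,
      V (i + 1) (j + 1) = (l1 * (1 - l2)) * V i j + ((1 - l1) * (1 - l2)) * V i (j + 1))
    (i : ℕ) :
    ∑' j, V (i + 1) j = (1 - l2) * ∑' j, V i j + (1 - l1) * l2 * V i 0 := by
  have hshift : Summable fun j => V i (j + 1) := (summable_nat_add_iff 1).2 (hrow i)
  have h := (hrow (i + 1)).tsum_eq_zero_add
  rw [hbal0, tsum_congr fun j => hbal i j, ((hrow i).mul_left _).tsum_add (hshift.mul_left _),
    tsum_mul_left, tsum_mul_left] at h
  linear_combination h - (1 - l1) * (1 - l2) * (hrow i).tsum_eq_zero_add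

theorem mul_tsum_age_eq (hl1 : 0 < l1) (hl1' : l1 < 1)
    (hsum : Summable fun p : ℕ × ℕ => V p.1 p.2)
    (htot : ∑' p : ℕ × ℕ, V p.1 p.2 = 1)
    (hwsum : Summable fun p : ℕ × ℕ => ((p.1 : ℝ) + 1) * V p.1 p.2)
    (hbal0 : ∀ i : ℕ, V (i + 1) 0 = (1 - l1) * V i 0)
    (hbal : ∀ i j : ℕ,
      V (i + 1) (j + 1) = (l1 * (1 - l2)) * V i j + ((1 - l1) * (1 - l2)) * V i (j + 1)) :
    l2 * ∑' p : ℕ × ℕ, ((p.1 : ℝ) + 1) * V p.1 p.2 = 1 + (1 - l1) * l2 * V 0 0 / l1 ^ 2 := by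
  have hgeo := hasSum_succ_mul_geometric_of_norm_lt_one (r := 1 - l1) (by
    rw [Real.norm_eq_abs, abs_lt]; constructor <;> linarith)
  have hc : HasSum (fun i : ℕ => ((i : ℝ) + 1) * ((1 - l1) * l2 * ((1 - l1) ^ i * V 0 0)))
      ((1 - l1) * l2 * V 0 0 / l1 ^ 2) := by
    have h := (hgeo.mul_right (V 0 0)).mul_left ((1 - l1) * l2)
    rw [sub_sub_cancel, ← mul_div_right_comm, one_mul, ← mul_div_assoc] at h
    exact h.congr_fun fun i => by ring
  have hmoment := one_sub_mul_tsum_succ_mul_of_succ_eq (a := 1 - l2)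
    (R := fun i => ∑' j, V i j) (c := fun i => (1 - l1) * l2 * ((1 - l1) ^ i * V 0 0))
    hsum.prod (hwsum.prod.congr fun i => by rw [← tsum_mul_left]) hc.summable fun i => by
      rw [age_succ_balance hsum.prod_factor hbal0 hbal i,
        eq_pow_mul_of_succ_eq_mul (q := fun i => V i 0) hbal0 i]
  have hS : ∑' p : ℕ × ℕ, ((p.1 : ℝ) + 1) * V p.1 p.2
      = ∑' i : ℕ, ((i : ℝ) + 1) * ∑' j, V i j := by
    rw [hwsum.tsum_prod]
    exact tsum_congr fun i => by rw [← tsum_mul_left]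
  rwa [← hsum.tsum_prod, htot, hc.tsum_eq, sub_sub_cancel, ← hS] at hmoment

end GeoGeoController

open GeoGeoController in
theorem avg_AoA_geo_geo_1_controller_general
    (l1 l2 : ℝ) (hl1 : 0 < l1) (hl12 : l1 < l2) (hl2 : l2 < 1)
    (V : ℕ → ℕ → ℝ)
    (hsum : Summable fun p : ℕ × ℕ => V p.1 p.2)
    (htot : ∑' p : ℕ × ℕ, V p.1 p.2 = 1)
    (hwsum : Summable fun p : ℕ × ℕ => ((p.1 : ℝ) + 1) * V p.1 p.2)
    (hbal1 : ∀ j : ℕ,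
      V 0 j = (l1 * l2) * (∑' i : ℕ, V i j) + ((1 - l1) * l2) * (∑' i : ℕ, V i (j + 1)))
    (hbal0 : ∀ i : ℕ, V (i + 1) 0 = (1 - l1) * V i 0)
    (hbal : ∀ i j : ℕ,
      V (i + 1) (j + 1) = (l1 * (1 - l2)) * V i j + ((1 - l1) * (1 - l2)) * V i (j + 1)) :
    ∑' p : ℕ × ℕ, ((p.1 : ℝ) + 1) * V p.1 p.2 = 1 / l1 := by
  have hQ0 := mul_tsum_empty_queue_eq hl1 hl12 hl2 hsum htot hbal1 hbal0 hbal
  have hV00 := mul_tsum_empty_queue_eq_corner (V := V) (hsum.prod_symm.prod_factor 0) hbal0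
  have hS := mul_tsum_age_eq hl1 (hl12.trans hl2) hsum htot hwsum hbal0 hbal
  rw [← hV00] at hS
  rw [eq_div_iff hl1.ne']
  apply mul_left_cancel₀ (hl1.trans hl12).ne'
  field_simp at hS
  linear_combination hS + hQ0

/-- Theorem 1(i): the average Age of Actuation of the Geo/Geo/1 queue with a
controller is `1/λ₁`.  Here `V i j` denotes the stationary probability of the
state `(A, Q) = (i+1, j)` (the first index is shifted so that age `i+1`
corresponds to index `i`). -/
theorem avg_AoA_geo_geo_1_controller
    (l1 l2 : ℝ) (hl1 : 0 < l1) (hl12 : l1 < l2) (hl2 : l2 < 1)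
    (V : ℕ → ℕ → ℝ)
    (hnn : ∀ i j, 0 ≤ V i j)
    (hsum : Summable fun p : ℕ × ℕ => V p.1 p.2)
    (htot : ∑' p : ℕ × ℕ, V p.1 p.2 = 1)
    (hwsum : Summable fun p : ℕ × ℕ => ((p.1 : ℝ) + 1) * V p.1 p.2)
    (hbal1 : ∀ j : ℕ,
      V 0 j = (l1 * l2) * (∑' i : ℕ, V i j) + ((1 - l1) * l2) * (∑' i : ℕ, V i (j + 1)))
    (hbal0 : ∀ i : ℕ, V (i + 1) 0 = (1 - l1) * V i 0)
    (hbal : ∀ i j : ℕ,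
      V (i + 1) (j + 1) = (l1 * (1 - l2)) * V i j + ((1 - l1) * (1 - l2)) * V i (j + 1)) :
    ∑' p : ℕ × ℕ, ((p.1 : ℝ) + 1) * V p.1 p.2 = 1 / l1 :=
  avg_AoA_geo_geo_1_controller_general l1 l2 hl1 hl12 hl2 V hsum htot hwsum hbal1 hbal0 hbal
end

section
/- Let 0 < λ₁ < 1 and 0 < λ₂ < 1. Suppose V : {1,2,...} × {0,1} → ℝ is nonnegative, the family (V_{i,q}) is summable with total sum 1, the family (i·V_{i,q}) is summable, V_{1,1} = 0, and, writing Q₀ = Σ_{i≥1} V_{i,0} and Q₁ = Σ_{i≥1} V_{i,1}, the stationary balance equations hold: V_{1,0} = λ₁λ₂·Q₀ + λ₂·Q₁; V_{i+1,0} = (1−λ₁)·V_{i,0} for all i ≥ 1; and V_{i+1,1} = λ₁(1−λ₂)·V_{i,0} + (1−λ₂)·V_{i,1} for all i ≥ 1. Then Σ_{i≥1} i·(V_{i,0} + V_{i,1}) = ((λ₂−1)(λ₁² + λ₁λ₂) − λ₂²)/(λ₁λ₂(λ₁(λ₂−1) − λ₂)). -/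
open scoped BigOperators

/-- Theorem 1(ii): the average Age of Actuation of the Geo/Geo/1/1 queue with a
controller.  Here `V0 i` (resp. `V1 i`) denotes the stationary probability of
the state `(A, Q) = (i+1, 0)` (resp. `(i+1, 1)`); the first index is shifted so
that age `i+1` corresponds to index `i`.  The state `(1,1)` is infeasible. -/
theorem avg_AoA_geo_geo_1_1_controller
    (l1 l2 : ℝ) (hl10 : 0 < l1) (hl11 : l1 < 1) (hl20 : 0 < l2) (hl21 : l2 < 1)
    (V0 V1 : ℕ → ℝ)
    (hnn0 : ∀ i, 0 ≤ V0 i) (hnn1 : ∀ i, 0 ≤ V1 i)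
    (hs0 : Summable V0) (hs1 : Summable V1)
    (htot : (∑' i : ℕ, V0 i) + (∑' i : ℕ, V1 i) = 1)
    (hw0 : Summable fun i : ℕ => ((i : ℝ) + 1) * V0 i)
    (hw1 : Summable fun i : ℕ => ((i : ℝ) + 1) * V1 i)
    (hfeas : V1 0 = 0)
    (hbal : V0 0 = l1 * l2 * (∑' i : ℕ, V0 i) + l2 * (∑' i : ℕ, V1 i))
    (hrec0 : ∀ i : ℕ, V0 (i + 1) = (1 - l1) * V0 i)
    (hrec1 : ∀ i : ℕ, V1 (i + 1) = l1 * (1 - l2) * V0 i + (1 - l2) * V1 i) :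
    ∑' i : ℕ, ((i : ℝ) + 1) * (V0 i + V1 i) =
      ((l2 - 1) * (l1 ^ 2 + l1 * l2) - l2 ^ 2) / (l1 * l2 * (l1 * (l2 - 1) - l2)) := by
  set S0 := ∑' i : ℕ, V0 i with hS0def
  set S1 := ∑' i : ℕ, V1 i with hS1def
  set T0 := ∑' i : ℕ, ((i : ℝ) + 1) * V0 i with hT0def
  set T1 := ∑' i : ℕ, ((i : ℝ) + 1) * V1 i with hT1def
  -- Equation for S0 : S0 = V0 0 + (1 - l1) * S0
  have eS0 : S0 = V0 0 + (1 - l1) * S0 := by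
    have h1 : S0 = V0 0 + ∑' i : ℕ, V0 (i + 1) := Summable.tsum_eq_zero_add hs0
    have h2 : ∑' i : ℕ, V0 (i + 1) = (1 - l1) * S0 := by
      calc ∑' i : ℕ, V0 (i + 1) = ∑' i : ℕ, (1 - l1) * V0 i :=
            tsum_congr fun i => hrec0 i
        _ = (1 - l1) * S0 := tsum_mul_left
    linarith [h1, h2]
  -- Equation for S1 : S1 = l1*(1-l2)*S0 + (1-l2)*S1
  have eS1 : S1 = l1 * (1 - l2) * S0 + (1 - l2) * S1 := by
    have h1 : S1 = V1 0 + ∑' i : ℕ, V1 (i + 1) := Summable.tsum_eq_zero_add hs1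
    have h2 : ∑' i : ℕ, V1 (i + 1) = l1 * (1 - l2) * S0 + (1 - l2) * S1 := by
      calc ∑' i : ℕ, V1 (i + 1)
          = ∑' i : ℕ, (l1 * (1 - l2) * V0 i + (1 - l2) * V1 i) :=
            tsum_congr fun i => hrec1 i
        _ = (∑' i : ℕ, l1 * (1 - l2) * V0 i) + ∑' i : ℕ, (1 - l2) * V1 i :=
            Summable.tsum_add (hs0.mul_left _) (hs1.mul_left _)
        _ = l1 * (1 - l2) * S0 + (1 - l2) * S1 := by rw [tsum_mul_left, tsum_mul_left]
    rw [hfeas] at h1; linarith [h1, h2]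
  -- Equation for T0 : T0 = V0 0 + (1-l1)*(T0 + S0)
  have eT0 : T0 = V0 0 + (1 - l1) * (T0 + S0) := by
    have h1 := Summable.tsum_eq_zero_add hw0
    norm_num at h1
    have h2 : ∑' i : ℕ, ((i : ℝ) + 1 + 1) * V0 (i + 1)
        = (1 - l1) * (T0 + S0) := by
      calc ∑' i : ℕ, ((i : ℝ) + 1 + 1) * V0 (i + 1)
          = ∑' i : ℕ, ((1 - l1) * (((i : ℝ) + 1) * V0 i) + (1 - l1) * V0 i) := by
            refine tsum_congr fun i => ?_
            rw [hrec0 i]; push_cast; ring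
        _ = (∑' i : ℕ, (1 - l1) * (((i : ℝ) + 1) * V0 i)) + ∑' i : ℕ, (1 - l1) * V0 i :=
            Summable.tsum_add (hw0.mul_left _) (hs0.mul_left _)
        _ = (1 - l1) * (T0 + S0) := by rw [tsum_mul_left, tsum_mul_left]; ring
    rw [h2] at h1; linarith [h1]
  -- Equation for T1 : T1 = l1*(1-l2)*(T0+S0) + (1-l2)*(T1+S1)
  have eT1 : T1 = l1 * (1 - l2) * (T0 + S0) + (1 - l2) * (T1 + S1) := by
    have h1 := Summable.tsum_eq_zero_add hw1
    norm_num at h1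
    have h2 : ∑' i : ℕ, ((i : ℝ) + 1 + 1) * V1 (i + 1)
        = l1 * (1 - l2) * (T0 + S0) + (1 - l2) * (T1 + S1) := by
      calc ∑' i : ℕ, ((i : ℝ) + 1 + 1) * V1 (i + 1)
          = ∑' i : ℕ, ((l1 * (1 - l2)) * (((i : ℝ) + 1) * V0 i + V0 i)
              + (1 - l2) * (((i : ℝ) + 1) * V1 i + V1 i)) := by
            refine tsum_congr fun i => ?_
            rw [hrec1 i]; push_cast; ring
        _ = (∑' i : ℕ, (l1 * (1 - l2)) * (((i : ℝ) + 1) * V0 i + V0 i))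
              + ∑' i : ℕ, (1 - l2) * (((i : ℝ) + 1) * V1 i + V1 i) :=
            Summable.tsum_add ((hw0.add hs0).mul_left _) ((hw1.add hs1).mul_left _)
        _ = (l1 * (1 - l2)) * ((∑' i : ℕ, (((i : ℝ) + 1) * V0 i + V0 i)))
              + (1 - l2) * ((∑' i : ℕ, (((i : ℝ) + 1) * V1 i + V1 i))) := by
            rw [tsum_mul_left, tsum_mul_left]
        _ = l1 * (1 - l2) * (T0 + S0) + (1 - l2) * (T1 + S1) := by
            rw [Summable.tsum_add hw0 hs0, Summable.tsum_add hw1 hs1]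
    rw [h2, hfeas] at h1; linarith [h1]
  -- the target sum splits as T0 + T1
  have hsplit : ∑' i : ℕ, ((i : ℝ) + 1) * (V0 i + V1 i) = T0 + T1 :=
    calc ∑' i : ℕ, ((i : ℝ) + 1) * (V0 i + V1 i)
        = ∑' i : ℕ, (((i : ℝ) + 1) * V0 i + ((i : ℝ) + 1) * V1 i) :=
          tsum_congr fun i => by ring
      _ = T0 + T1 := Summable.tsum_add hw0 hw1
  rw [hsplit]
  -- reduced linear system
  have hV00 : V0 0 = l1 * S0 := by linarith [eS0]
  have A1 : S0 * (l2 + l1 - l1 * l2) = l2 := by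
    have h : l2 * S1 = l1 * (1 - l2) * S0 := by linear_combination eS1
    linear_combination l2 * htot - h
  have A2 : l1 * T0 = S0 := by linear_combination eT0 + hV00
  have A3 : S1 = 1 - S0 := by linarith [htot]
  have A4 : l2 * T1 = l1 * (1 - l2) * (T0 + S0) + (1 - l2) * S1 := by
    linear_combination eT1
  have hden : l1 * l2 * (l1 * (l2 - 1) - l2) ≠ 0 := by
    have h1 : l1 * (l2 - 1) - l2 < 0 := by nlinarith
    intro h
    rcases mul_eq_zero.1 h with h' | h'
    · rcases mul_eq_zero.1 h' with h'' | h'' <;> nlinarith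
    · nlinarith
  rw [eq_div_iff hden]
  linear_combination
    (-((l2 + l1 - l1 * l2) - l1 * (1 - l1) * (1 - l2))) * A1
    + (-((l2 + l1 - l1 * l2) ^ 2)) * A2
    + (-(l1 * (1 - l2) * (l2 + l1 - l1 * l2))) * A3
    + (-(l1 * (l2 + l1 - l1 * l2))) * A4
end

section
/- Let 0 < λ₁ < 1 and 0 < λ₂ < 1 and set x = λ₁(1−λ₂), y = (1−λ₁)λ₂, z = (1−λ₁)(1−λ₂). Suppose V assigns nonnegative reals to states (i,q,b) with i ≥ 1 and (q,b) ∈ {(0,0),(0,1),(1,0)}, the family (V_{i,q,b}) is summable with total sum 1, the family (i·V_{i,q,b}) is summable, V_{1,1,0} = 0, and, writing Δ_{q,b} = Σ_{i≥1} V_{i,q,b}, the stationary balance equations hold: V_{1,0,0} = λ₁λ₂·Δ_{0,0} + λ₁(1−λ₂)·Δ_{0,1} + λ₂·Δ_{1,0}; V_{1,0,1} = λ₁λ₂·Δ_{0,1}; V_{i+1,0,0} = z·V_{i,0,0}; V_{i+1,0,1} = y·V_{i,0,0} + (1−λ₁)·V_{i,0,1}; and V_{i+1,1,0} = x·V_{i,0,0}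 + (1−λ₂)·V_{i,1,0}, all for i ≥ 1. Then Σ_{i≥1} i·(V_{i,0,0} + V_{i,0,1} + V_{i,1,0}) = [λ₁⁴(λ₂−1)³ − 2λ₁³λ₂(λ₂−1)² − λ₁²λ₂²(2λ₂²−3λ₂+1) + λ₁λ₂³(3λ₂−2) − λ₂⁴] / [λ₁λ₂(λ₁(λ₂−1)−λ₂)(λ₁²(λ₂−1)² + λ₁(λ₂−2λ₂²) + λ₂²)]. -/
open scoped BigOperators

set_option maxHeartbeats 2000000 in
/-- Theorem 1(iii): the average Age of Actuation of the Geo/Geo/1/1 queue with a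
size-one battery.  Here `V00 i`, `V01 i`, `V10 i` denote the stationary
probabilities of the states `(A, Q, B) = (i+1, 0, 0)`, `(i+1, 0, 1)`,
`(i+1, 1, 0)` respectively (the first index is shifted so that age `i+1`
corresponds to index `i`).  The state `(1,1,0)` is infeasible. -/
theorem avg_AoA_geo_geo_1_1_battery
    (l1 l2 : ℝ) (hl10 : 0 < l1) (hl11 : l1 < 1) (hl20 : 0 < l2) (hl21 : l2 < 1)
    (V00 V01 V10 : ℕ → ℝ)
    (hnn00 : ∀ i, 0 ≤ V00 i) (hnn01 : ∀ i, 0 ≤ V01 i) (hnn10 : ∀ i, 0 ≤ V10 i)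
    (hs00 : Summable V00) (hs01 : Summable V01) (hs10 : Summable V10)
    (htot : (∑' i : ℕ, V00 i) + (∑' i : ℕ, V01 i) + (∑' i : ℕ, V10 i) = 1)
    (hw00 : Summable fun i : ℕ => ((i : ℝ) + 1) * V00 i)
    (hw01 : Summable fun i : ℕ => ((i : ℝ) + 1) * V01 i)
    (hw10 : Summable fun i : ℕ => ((i : ℝ) + 1) * V10 i)
    (hfeas : V10 0 = 0)
    (hbal00 : V00 0 = l1 * l2 * (∑' i : ℕ, V00 i) + l1 * (1 - l2) * (∑' i : ℕ, V01 i)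
        + l2 * (∑' i : ℕ, V10 i))
    (hbal01 : V01 0 = l1 * l2 * (∑' i : ℕ, V01 i))
    (hrec00 : ∀ i : ℕ, V00 (i + 1) = ((1 - l1) * (1 - l2)) * V00 i)
    (hrec01 : ∀ i : ℕ, V01 (i + 1) = ((1 - l1) * l2) * V00 i + (1 - l1) * V01 i)
    (hrec10 : ∀ i : ℕ, V10 (i + 1) = (l1 * (1 - l2)) * V00 i + (1 - l2) * V10 i) :
    ∑' i : ℕ, ((i : ℝ) + 1) * (V00 i + V01 i + V10 i) =
      (l1 ^ 4 * (l2 - 1) ^ 3 - 2 * l1 ^ 3 * l2 * (l2 - 1) ^ 2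
        - l1 ^ 2 * l2 ^ 2 * (2 * l2 ^ 2 - 3 * l2 + 1)
        + l1 * l2 ^ 3 * (3 * l2 - 2) - l2 ^ 4) /
      (l1 * l2 * (l1 * (l2 - 1) - l2)
        * (l1 ^ 2 * (l2 - 1) ^ 2 + l1 * (l2 - 2 * l2 ^ 2) + l2 ^ 2)) := by
  have hl1 : l1 ≠ 0 := ne_of_gt hl10
  have hl2 : l2 ≠ 0 := ne_of_gt hl20
  have h1l1 : (1:ℝ) - l1 ≠ 0 := by linarith
  have h1l2 : (1:ℝ) - l2 ≠ 0 := by linarith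
  set S00 := ∑' i : ℕ, V00 i with hS00def
  set S01 := ∑' i : ℕ, V01 i with hS01def
  set S10 := ∑' i : ℕ, V10 i with hS10def
  set T00 := ∑' i : ℕ, ((i : ℝ) + 1) * V00 i with hT00def
  set T01 := ∑' i : ℕ, ((i : ℝ) + 1) * V01 i with hT01def
  set T10 := ∑' i : ℕ, ((i : ℝ) + 1) * V10 i with hT10def
  -- plain sum equations
  have e00 : S00 = V00 0 + ((1 - l1) * (1 - l2)) * S00 := by
    calc S00 = V00 0 + ∑' i : ℕ, V00 (i + 1) := Summable.tsum_eq_zero_add hs00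
    _ = V00 0 + ∑' i : ℕ, ((1 - l1) * (1 - l2)) * V00 i := by
        congr 1; exact tsum_congr fun i => hrec00 i
    _ = V00 0 + ((1 - l1) * (1 - l2)) * S00 := by rw [tsum_mul_left]
  have e01 : S01 = V01 0 + (((1 - l1) * l2) * S00 + (1 - l1) * S01) := by
    calc S01 = V01 0 + ∑' i : ℕ, V01 (i + 1) := Summable.tsum_eq_zero_add hs01
    _ = V01 0 + ∑' i : ℕ, (((1 - l1) * l2) * V00 i + (1 - l1) * V01 i) := by
        congr 1; exact tsum_congr fun i => hrec01 i
    _ = V01 0 + (((1 - l1) * l2) * S00 + (1 - l1) * S01) := by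
        rw [Summable.tsum_add (hs00.mul_left _) (hs01.mul_left _), tsum_mul_left, tsum_mul_left]
  have e10 : S10 = V10 0 + ((l1 * (1 - l2)) * S00 + (1 - l2) * S10) := by
    calc S10 = V10 0 + ∑' i : ℕ, V10 (i + 1) := Summable.tsum_eq_zero_add hs10
    _ = V10 0 + ∑' i : ℕ, ((l1 * (1 - l2)) * V00 i + (1 - l2) * V10 i) := by
        congr 1; exact tsum_congr fun i => hrec10 i
    _ = V10 0 + ((l1 * (1 - l2)) * S00 + (1 - l2) * S10) := by
        rw [Summable.tsum_add (hs00.mul_left _) (hs10.mul_left _), tsum_mul_left, tsum_mul_left]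
  -- weighted sum equations
  have eT00 : T00 = V00 0 + (((1 - l1) * (1 - l2)) * T00 + ((1 - l1) * (1 - l2)) * S00) := by
    calc T00 = (((0:ℕ) : ℝ) + 1) * V00 0
        + ∑' i : ℕ, (((i + 1 : ℕ) : ℝ) + 1) * V00 (i + 1) := Summable.tsum_eq_zero_add hw00
    _ = V00 0 + ∑' i : ℕ, (((1 - l1) * (1 - l2)) * (((i : ℝ) + 1) * V00 i)
        + ((1 - l1) * (1 - l2)) * V00 i) := by
        congr 1
        · norm_num
        · exact tsum_congr fun i => by rw [hrec00 i]; push_cast; ring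
    _ = V00 0 + (((1 - l1) * (1 - l2)) * T00 + ((1 - l1) * (1 - l2)) * S00) := by
        rw [Summable.tsum_add (hw00.mul_left _) (hs00.mul_left _), tsum_mul_left, tsum_mul_left]
  have eT01 : T01 = V01 0 + ((((1 - l1) * l2) * T00 + ((1 - l1) * l2) * S00)
      + ((1 - l1) * T01 + (1 - l1) * S01)) := by
    calc T01 = (((0:ℕ) : ℝ) + 1) * V01 0
        + ∑' i : ℕ, (((i + 1 : ℕ) : ℝ) + 1) * V01 (i + 1) := Summable.tsum_eq_zero_add hw01
    _ = V01 0 + ∑' i : ℕ, ((((1 - l1) * l2) * (((i : ℝ) + 1) * V00 i)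
        + ((1 - l1) * l2) * V00 i)
        + ((1 - l1) * (((i : ℝ) + 1) * V01 i) + (1 - l1) * V01 i)) := by
        congr 1
        · norm_num
        · exact tsum_congr fun i => by rw [hrec01 i]; push_cast; ring
    _ = V01 0 + ((((1 - l1) * l2) * T00 + ((1 - l1) * l2) * S00)
        + ((1 - l1) * T01 + (1 - l1) * S01)) := by
        rw [Summable.tsum_add ((hw00.mul_left _).add (hs00.mul_left _))
          ((hw01.mul_left _).add (hs01.mul_left _)),
          Summable.tsum_add (hw00.mul_left _) (hs00.mul_left _),
          Summable.tsum_add (hw01.mul_left _) (hs01.mul_left _),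
          tsum_mul_left, tsum_mul_left, tsum_mul_left, tsum_mul_left]
  have eT10 : T10 = V10 0 + (((l1 * (1 - l2)) * T00 + (l1 * (1 - l2)) * S00)
      + ((1 - l2) * T10 + (1 - l2) * S10)) := by
    calc T10 = (((0:ℕ) : ℝ) + 1) * V10 0
        + ∑' i : ℕ, (((i + 1 : ℕ) : ℝ) + 1) * V10 (i + 1) := Summable.tsum_eq_zero_add hw10
    _ = V10 0 + ∑' i : ℕ, (((l1 * (1 - l2)) * (((i : ℝ) + 1) * V00 i)
        + (l1 * (1 - l2)) * V00 i)
        + ((1 - l2) * (((i : ℝ) + 1) * V10 i) + (1 - l2) * V10 i)) := by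
        congr 1
        · norm_num
        · exact tsum_congr fun i => by rw [hrec10 i]; push_cast; ring
    _ = V10 0 + (((l1 * (1 - l2)) * T00 + (l1 * (1 - l2)) * S00)
        + ((1 - l2) * T10 + (1 - l2) * S10)) := by
        rw [Summable.tsum_add ((hw00.mul_left _).add (hs00.mul_left _))
          ((hw10.mul_left _).add (hs10.mul_left _)),
          Summable.tsum_add (hw00.mul_left _) (hs00.mul_left _),
          Summable.tsum_add (hw10.mul_left _) (hs10.mul_left _),
          tsum_mul_left, tsum_mul_left, tsum_mul_left, tsum_mul_left]
  -- LHS decomposition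
  have hL : ∑' i : ℕ, ((i : ℝ) + 1) * (V00 i + V01 i + V10 i) = T00 + T01 + T10 := by
    have : (fun i : ℕ => ((i : ℝ) + 1) * (V00 i + V01 i + V10 i))
        = fun i : ℕ => (((i : ℝ) + 1) * V00 i + ((i : ℝ) + 1) * V01 i)
          + ((i : ℝ) + 1) * V10 i := funext fun i => by ring
    rw [this, Summable.tsum_add (hw00.add hw01) hw10, Summable.tsum_add hw00 hw01]
  rw [hL]
  -- linear system solving
  have B1 : l1 * (1 - l2) * S01 = (1 - l1) * l2 * S00 := by
    have h := e01; rw [hbal01] at h; linear_combination h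
  have B2 : l2 * S10 = l1 * (1 - l2) * S00 := by
    have h := e10; rw [hfeas] at h; linear_combination h
  have hEpos : 0 < l1 ^ 2 * (1 - l2) ^ 2 + l1 * l2 * (1 - 2 * l2) + l2 ^ 2 := by
    have key : l1 ^ 2 * (1 - l2) ^ 2 + l1 * l2 * (1 - 2 * l2) + l2 ^ 2
        = l1 * (1 - l2) * (l1 * (1 - l2) + l2) + l2 ^ 2 * (1 - l1) := by ring
    rw [key]
    have h1 : 0 < l1 * (1 - l2) * (l1 * (1 - l2) + l2) := by
      apply mul_pos (mul_pos hl10 (by linarith))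
      nlinarith
    nlinarith
  have hE : l1 ^ 2 * (1 - l2) ^ 2 + l1 * l2 * (1 - 2 * l2) + l2 ^ 2 ≠ 0 := ne_of_gt hEpos
  have C : (l1 ^ 2 * (1 - l2) ^ 2 + l1 * l2 * (1 - 2 * l2) + l2 ^ 2) * S00
      = l1 * l2 * (1 - l2) := by
    linear_combination (l1 * (1 - l2) * l2) * htot - l2 * B1 - l1 * (1 - l2) * B2
  have h1z : l1 + l2 - l1 * l2 ≠ 0 := by nlinarith
  have A1 : (l1 + l2 - l1 * l2) * T00 = S00 := by linear_combination eT00 - e00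
  have A2 : l1 * T01 = l1 * l2 * S01 + (1 - l1) * l2 * T00 + (1 - l1) * l2 * S00
      + (1 - l1) * S01 := by
    have h := eT01; rw [hbal01] at h; linear_combination h
  have A3 : l2 * T10 = l1 * (1 - l2) * T00 + l1 * (1 - l2) * S00 + (1 - l2) * S10 := by
    have h := eT10; rw [hfeas] at h; linear_combination h
  -- final algebra
  have hd1 : l1 * (l2 - 1) - l2 ≠ 0 := by nlinarith
  have hd2 : l1 ^ 2 * (l2 - 1) ^ 2 + l1 * (l2 - 2 * l2 ^ 2) + l2 ^ 2 ≠ 0 := by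
    intro h; apply hE; linear_combination h
  have hden : l1 * l2 * (l1 * (l2 - 1) - l2)
      * (l1 ^ 2 * (l2 - 1) ^ 2 + l1 * (l2 - 2 * l2 ^ 2) + l2 ^ 2) ≠ 0 :=
    mul_ne_zero (mul_ne_zero (mul_ne_zero hl1 hl2) hd1) hd2
  rw [eq_div_iff hden]
  have hM : (l1 + l2 - l1 * l2) * l1 * (1 - l2) * l2 ≠ 0 :=
    mul_ne_zero (mul_ne_zero (mul_ne_zero h1z hl1) h1l2) hl2
  apply mul_left_cancel₀ hM
  linear_combination
        (-((1:ℝ)*l1*l2^6 + (-1:ℝ)*l1*l2^7 + (3:ℝ)*l1^2*l2^5 + (-7:ℝ)*l1^2*l2^6 + (4:ℝ)*l1^2*l2^7 + (4:ℝ)*l1^3*l2^4 + (-14:ℝ)*l1^3*l2^5 + (16:ℝ)*l1^3*l2^6 + (-6:ℝ)*l1^3*l2^7 + (3:ℝ)*l1^4*l2^3 + (-13:ℝ)*l1^4*l2^4 + (21:ℝ)*l1^4*l2^5 + (-15:ℝ)*l1^4*l2^6 + (4:ℝ)*l1^4*l2^7 + (1:ℝ)*l1^5*l2^2 + (-5:ℝ)*l1^5*l2^3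 + (10:ℝ)*l1^5*l2^4 + (-10:ℝ)*l1^5*l2^5 + (5:ℝ)*l1^5*l2^6 + (-1:ℝ)*l1^5*l2^7)) * A2
        + (-((1:ℝ)*l1^2*l2^5 + (-1:ℝ)*l1^2*l2^6 + (3:ℝ)*l1^3*l2^4 + (-7:ℝ)*l1^3*l2^5 + (4:ℝ)*l1^3*l2^6 + (4:ℝ)*l1^4*l2^3 + (-14:ℝ)*l1^4*l2^4 + (16:ℝ)*l1^4*l2^5 + (-6:ℝ)*l1^4*l2^6 + (3:ℝ)*l1^5*l2^2 + (-13:ℝ)*l1^5*l2^3 + (21:ℝ)*l1^5*l2^4 + (-15:ℝ)*l1^5*l2^5 + (4:ℝ)*l1^5*l2^6 + (1:ℝ)*l1^6*l2 + (-5:ℝ)*l1^6*l2^2 + (10:ℝ)*l1^6*l2^3 + (-10:ℝ)*l1^6*l2^4 + (5:ℝ)*l1^6*l2^5 + (-1:ℝ)*l1^6*l2^6)) * A3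
        + (-((1:ℝ)*l1*l2^6 + (-1:ℝ)*l1*l2^7 + (3:ℝ)*l1^2*l2^5 + (-7:ℝ)*l1^2*l2^6 + (4:ℝ)*l1^2*l2^7 + (5:ℝ)*l1^3*l2^4 + (-16:ℝ)*l1^3*l2^5 + (17:ℝ)*l1^3*l2^6 + (-6:ℝ)*l1^3*l2^7 + (5:ℝ)*l1^4*l2^3 + (-20:ℝ)*l1^4*l2^4 + (29:ℝ)*l1^4*l2^5 + (-18:ℝ)*l1^4*l2^6 + (4:ℝ)*l1^4*l2^7 + (3:ℝ)*l1^5*l2^2 + (-14:ℝ)*l1^5*l2^3 + (25:ℝ)*l1^5*l2^4 + (-21:ℝ)*l1^5*l2^5 + (8:ℝ)*l1^5*l2^6 + (-1:ℝ)*l1^5*l2^7 + (1:ℝ)*l1^6*l2 + (-5:ℝ)*l1^6*l2^2 + (10:ℝ)*l1^6*l2^3 + (-10:ℝ)*l1^6*l2^4 + (5:ℝ)*l1^6*l2^5 + (-1:ℝ)*l1^6*l2^6)) * A1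
        + (-((1:ℝ)*l2^6 + (3:ℝ)*l1*l2^5 + (-5:ℝ)*l1*l2^6 + (1:ℝ)*l1*l2^7 + (4:ℝ)*l1^2*l2^4 + (-13:ℝ)*l1^2*l2^5 + (13:ℝ)*l1^2*l2^6 + (-4:ℝ)*l1^2*l2^7 + (3:ℝ)*l1^3*l2^3 + (-14:ℝ)*l1^3*l2^4 + (25:ℝ)*l1^3*l2^5 + (-20:ℝ)*l1^3*l2^6 + (6:ℝ)*l1^3*l2^7 + (1:ℝ)*l1^4*l2^2 + (-7:ℝ)*l1^4*l2^3 + (19:ℝ)*l1^4*l2^4 + (-25:ℝ)*l1^4*l2^5 + (16:ℝ)*l1^4*l2^6 + (-4:ℝ)*l1^4*l2^7 + (-1:ℝ)*l1^5*l2^2 + (5:ℝ)*l1^5*l2^3 + (-10:ℝ)*l1^5*l2^4 + (10:ℝ)*l1^5*l2^5 + (-5:ℝ)*l1^5*l2^6 + (1:ℝ)*l1^5*l2^7)) * B1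
        + (-((1:ℝ)*l1^2*l2^4 + (-2:ℝ)*l1^2*l2^5 + (1:ℝ)*l1^2*l2^6 + (3:ℝ)*l1^3*l2^3 + (-10:ℝ)*l1^3*l2^4 + (11:ℝ)*l1^3*l2^5 + (-4:ℝ)*l1^3*l2^6 + (4:ℝ)*l1^4*l2^2 + (-18:ℝ)*l1^4*l2^3 + (30:ℝ)*l1^4*l2^4 + (-22:ℝ)*l1^4*l2^5 + (6:ℝ)*l1^4*l2^6 + (3:ℝ)*l1^5*l2 + (-16:ℝ)*l1^5*l2^2 + (34:ℝ)*l1^5*l2^3 + (-36:ℝ)*l1^5*l2^4 + (19:ℝ)*l1^5*l2^5 + (-4:ℝ)*l1^5*l2^6 + (1:ℝ)*l1^6 + (-6:ℝ)*l1^6*l2 + (15:ℝ)*l1^6*l2^2 + (-20:ℝ)*l1^6*l2^3 + (15:ℝ)*l1^6*l2^4 + (-6:ℝ)*l1^6*l2^5 + (1:ℝ)*l1^6*l2^6)) * B2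
        + (-((1:ℝ)*l2^5 + (3:ℝ)*l1*l2^4 + (-4:ℝ)*l1*l2^5 + (3:ℝ)*l1^2*l2^3 + (-8:ℝ)*l1^2*l2^4 + (5:ℝ)*l1^2*l2^5 + (3:ℝ)*l1^3*l2^2 + (-8:ℝ)*l1^3*l2^3 + (7:ℝ)*l1^3*l2^4 + (-2:ℝ)*l1^3*l2^5 + (3:ℝ)*l1^4*l2 + (-9:ℝ)*l1^4*l2^2 + (9:ℝ)*l1^4*l2^3 + (-3:ℝ)*l1^4*l2^4 + (1:ℝ)*l1^5 + (-4:ℝ)*l1^5*l2 + (6:ℝ)*l1^5*l2^2 + (-4:ℝ)*l1^5*l2^3 + (1:ℝ)*l1^5*l2^4)) * C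
end

section
/- Let 0 < λ₁ < λ₂ < 1 and set w = λ₁λ₂, x = λ₁(1−λ₂), y = (1−λ₁)λ₂, z = (1−λ₁)(1−λ₂). Define D_i = (x/y)^i·(1 − x/y) for i ≥ 0; f_i = x·D_i + w·D_{i+1} for i ≥ 1; Γ₁ = (x·D₀ + w·z·D₁ + w·y·D₂)/(1−w); G(h) = z^{h−1}·Γ₁ + Σ_{k=1}^{h−1} C(h−1,k)·y^k·z^{h−1−k}·f_k for h ≥ 1; S(h) = (1−λ₂)^{h−1}·Γ₁ + Σ_{j=1}^{h−1} C(h−1,j)·λ₂^j·(1−λ₂)^{h−1−j}·f_j for h ≥ 1; E₁ = w·(1 − x/y) and E_{i+1} = (1−λ₁)·E_i + y·G(i) for i ≥ 1; and AI₁ = E₁ and AI_{i+1} = y·E_i + (1−λ₂)·AI_i + λ₂·S(i) for i ≥ 1. Then the series Σ_{i≥1} i·AI_i converges and equals (λ₁²(λ₂−1)(λ₁−λ₂) + λ₂³(λ₁−1))/(λ₁(λ₁−λ₂)λ₂²). -/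
open scoped BigOperators

namespace AoAIGeoGeo1FCFS

variable (l1 l2 : ℝ)

/-- `w = λ₁λ₂` -/
noncomputable def w : ℝ := l1 * l2
/-- `x = λ₁(1−λ₂)` -/
noncomputable def x : ℝ := l1 * (1 - l2)
/-- `y = (1−λ₁)λ₂` -/
noncomputable def y : ℝ := (1 - l1) * l2
/-- `z = (1−λ₁)(1−λ₂)` -/
noncomputable def z : ℝ := (1 - l1) * (1 - l2)

/-- `D_i = (x/y)^i (1 − x/y)` -/
noncomputable def D (i : ℕ) : ℝ := (x l1 l2 / y l1 l2) ^ i * (1 - x l1 l2 / y l1 l2)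

/-- `f_i = x D_i + w D_{i+1}` -/
noncomputable def f (i : ℕ) : ℝ := x l1 l2 * D l1 l2 i + w l1 l2 * D l1 l2 (i + 1)

/-- `Γ₁ = (x D₀ + w z D₁ + w y D₂)/(1−w)` -/
noncomputable def Gamma1 : ℝ :=
  (x l1 l2 * D l1 l2 0 + w l1 l2 * z l1 l2 * D l1 l2 1 + w l1 l2 * y l1 l2 * D l1 l2 2)
    / (1 - w l1 l2)

/-- `G(h)`: stationary probability of a queue state with head-of-line age `h`
and queue length `1`. -/
noncomputable def G (h : ℕ) : ℝ :=
  z l1 l2 ^ (h - 1) * Gamma1 l1 l2 +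
    ∑ k ∈ Finset.Icc 1 (h - 1),
      ((h - 1).choose k : ℝ) * y l1 l2 ^ k * z l1 l2 ^ (h - 1 - k) * f l1 l2 k

/-- `S(h)`: total stationary probability of queue states with head-of-line age `h`. -/
noncomputable def S (h : ℕ) : ℝ :=
  (1 - l2) ^ (h - 1) * Gamma1 l1 l2 +
    ∑ j ∈ Finset.Icc 1 (h - 1),
      ((h - 1).choose j : ℝ) * l2 ^ j * (1 - l2) ^ (h - 1 - j) * f l1 l2 j

/-- `E_i`: stationary probability of the state with AoAI `i` and empty queue,
defined by `E₁ = w(1 − x/y)` and `E_{i+1} = (1−λ₁) E_i + y G(i)`. -/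
noncomputable def E : ℕ → ℝ
  | 0 => 0
  | 1 => w l1 l2 * (1 - x l1 l2 / y l1 l2)
  | (i + 2) => (1 - l1) * E (i + 1) + y l1 l2 * G l1 l2 (i + 1)

/-- `AI_i`: stationary probability that the AoAI equals `i`, defined by
`AI₁ = E₁` and `AI_{i+1} = y E_i + (1−λ₂) AI_i + λ₂ S(i)`. -/
noncomputable def AI : ℕ → ℝ
  | 0 => 0
  | 1 => E l1 l2 1
  | (i + 2) => y l1 l2 * E l1 l2 (i + 1) + (1 - l2) * AI (i + 1) + l2 * S l1 l2 (i + 1)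

-- my auxiliary constants
noncomputable def Kc : ℝ := (1 - x l1 l2 / y l1 l2) * (x l1 l2 + w l1 l2 * (x l1 l2 / y l1 l2))
noncomputable def cc : ℝ := (1 - l2) / (1 - l1)

lemma f_eq (k : ℕ) : f l1 l2 k = Kc l1 l2 * (x l1 l2 / y l1 l2) ^ k := by
  unfold f D Kc; ring

lemma binom_aux (u v t : ℝ) (n : ℕ) :
    ∑ k ∈ Finset.Icc 1 n, ((n.choose k : ℝ) * u ^ k * v ^ (n - k) * t ^ k)
      = (u * t + v) ^ n - v ^ n := by
  have hIcc : Finset.Icc 1 n = Finset.Ico 1 (n + 1) := by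
    rw [Finset.Ico_add_one_right_eq_Icc]
  rw [hIcc, Finset.sum_Ico_eq_sum_range]
  simp only [Nat.add_sub_cancel]
  rw [add_pow, Finset.sum_range_succ']
  simp only [pow_zero, Nat.sub_zero, Nat.choose_zero_right, Nat.cast_one, one_mul, mul_one]
  rw [add_sub_cancel_right]
  refine Finset.sum_congr rfl fun i _ => ?_
  rw [Nat.add_comm 1 i, mul_pow]; ring






lemma G_closed (hl1 : 0 < l1) (hl12 : l1 < l2) (hl2 : l2 < 1) (n : ℕ) :
    G l1 l2 (n + 1) = (Gamma1 l1 l2 - Kc l1 l2) * z l1 l2 ^ n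
      + Kc l1 l2 * (1 - l2) ^ n := by
  have ha : (1:ℝ) - l1 ≠ 0 := by nlinarith
  have hl2' : l2 ≠ 0 := by nlinarith
  unfold G
  simp only [Nat.add_sub_cancel]
  have h1 : ∀ k ∈ Finset.Icc 1 n,
      ((n.choose k : ℝ)) * y l1 l2 ^ k * z l1 l2 ^ (n - k) * f l1 l2 k
      = Kc l1 l2 * (((n.choose k : ℝ)) * y l1 l2 ^ k * z l1 l2 ^ (n - k)
          * (x l1 l2 / y l1 l2) ^ k) := by
    intro k _; rw [f_eq]; ring
  rw [Finset.sum_congr rfl h1, ← Finset.mul_sum, binom_aux]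
  have h2 : y l1 l2 * (x l1 l2 / y l1 l2) + z l1 l2 = 1 - l2 := by
    unfold x y z; field_simp; ring
  rw [h2]; ring

lemma S_closed (hl1 : 0 < l1) (hl12 : l1 < l2) (hl2 : l2 < 1) (n : ℕ) :
    S l1 l2 (n + 1) = (Gamma1 l1 l2 - Kc l1 l2) * (1 - l2) ^ n
      + Kc l1 l2 * cc l1 l2 ^ n := by
  have ha : (1:ℝ) - l1 ≠ 0 := by nlinarith
  have hl2' : l2 ≠ 0 := by nlinarith
  unfold S
  simp only [Nat.add_sub_cancel]
  have h1 : ∀ k ∈ Finset.Icc 1 n,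
      ((n.choose k : ℝ)) * l2 ^ k * (1 - l2) ^ (n - k) * f l1 l2 k
      = Kc l1 l2 * (((n.choose k : ℝ)) * l2 ^ k * (1 - l2) ^ (n - k)
          * (x l1 l2 / y l1 l2) ^ k) := by
    intro k _; rw [f_eq]; ring
  rw [Finset.sum_congr rfl h1, ← Finset.mul_sum, binom_aux]
  have h2 : l2 * (x l1 l2 / y l1 l2) + (1 - l2) = cc l1 l2 := by
    unfold x y cc; field_simp; ring
  rw [h2]; ring





noncomputable def bet : ℝ := Kc l1 l2 - Gamma1 l1 l2
noncomputable def gam : ℝ := y l1 l2 * Kc l1 l2 / (l1 - l2)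
noncomputable def alp : ℝ := w l1 l2 * (1 - x l1 l2 / y l1 l2) - bet l1 l2 - gam l1 l2
noncomputable def Pc : ℝ := y l1 l2 * alp l1 l2 / (l2 - l1)
noncomputable def Qc : ℝ := -(y l1 l2 * bet l1 l2) / ((1 - l2) * l1)
noncomputable def Uc : ℝ := (1 - l1) * l2 * Kc l1 l2 / ((1 - l2) * l1)
noncomputable def Tc : ℝ := (y l1 l2 * gam l1 l2 + l2 * (Gamma1 l1 l2 - Kc l1 l2)) / (1 - l2)
noncomputable def Rc : ℝ := w l1 l2 * (1 - x l1 l2 / y l1 l2) - Pc l1 l2 - Qc l1 l2 - Uc l1 l2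

lemma E_closed (hl1 : 0 < l1) (hl12 : l1 < l2) (hl2 : l2 < 1) (n : ℕ) :
    E l1 l2 (n + 1) = alp l1 l2 * (1 - l1) ^ n + bet l1 l2 * z l1 l2 ^ n
      + gam l1 l2 * (1 - l2) ^ n := by
  have hll : l1 - l2 ≠ 0 := by nlinarith
  have hbz : bet l1 l2 * z l1 l2
      = (1 - l1) * bet l1 l2 + y l1 l2 * (Gamma1 l1 l2 - Kc l1 l2) := by
    unfold bet z y; ring
  have hgb : gam l1 l2 * (1 - l2) = (1 - l1) * gam l1 l2 + y l1 l2 * Kc l1 l2 := by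
    unfold gam y; field_simp; ring
  induction n with
  | zero => simp only [pow_zero, mul_one]; rw [E]; unfold alp; ring
  | succ m ih =>
      rw [show m + 1 + 1 = m + 2 from rfl, E, ih, G_closed l1 l2 hl1 hl12 hl2]
      rw [pow_succ, pow_succ, pow_succ]
      linear_combination (-(z l1 l2 ^ m)) * hbz + (-((1 - l2) ^ m)) * hgb

lemma AI_closed (hl1 : 0 < l1) (hl12 : l1 < l2) (hl2 : l2 < 1) (n : ℕ) :
    AI l1 l2 (n + 1) = Pc l1 l2 * (1 - l1) ^ n + Qc l1 l2 * z l1 l2 ^ n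
      + (Rc l1 l2 + Tc l1 l2 * n) * (1 - l2) ^ n + Uc l1 l2 * cc l1 l2 ^ n := by
  have hll : l2 - l1 ≠ 0 := by nlinarith
  have hb : (1:ℝ) - l2 ≠ 0 := by nlinarith
  have hl1' : l1 ≠ 0 := by nlinarith
  have ha : (1:ℝ) - l1 ≠ 0 := by nlinarith
  have hP : Pc l1 l2 * (1 - l1) = (1 - l2) * Pc l1 l2 + y l1 l2 * alp l1 l2 := by
    unfold Pc; field_simp; ring
  have hQ : Qc l1 l2 * z l1 l2 = (1 - l2) * Qc l1 l2 + y l1 l2 * bet l1 l2 := by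
    unfold Qc z y; field_simp; ring
  have hU : Uc l1 l2 * cc l1 l2 = (1 - l2) * Uc l1 l2 + l2 * Kc l1 l2 := by
    unfold Uc cc; field_simp; ring
  have hT : Tc l1 l2 * (1 - l2)
      = y l1 l2 * gam l1 l2 + l2 * (Gamma1 l1 l2 - Kc l1 l2) := by
    unfold Tc; field_simp
  induction n with
  | zero =>
      simp only [pow_zero, mul_one, Nat.cast_zero, mul_zero, add_zero]
      rw [AI, E]; unfold Rc; ring
  | succ m ih =>
      rw [show m + 1 + 1 = m + 2 from rfl, AI, ih, E_closed l1 l2 hl1 hl12 hl2,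
        S_closed l1 l2 hl1 hl12 hl2]
      push_cast
      rw [pow_succ, pow_succ, pow_succ, pow_succ]
      linear_combination (-((1 - l1) ^ m)) * hP + (-(z l1 l2 ^ m)) * hQ
        + (-(cc l1 l2 ^ m)) * hU + (-((1 - l2) ^ m)) * hT


section ConstEqs
variable (hl1 : 0 < l1) (hl12 : l1 < l2) (hl2 : l2 < 1)
include hl1 hl12 hl2

lemma Kc_eq : Kc l1 l2 = (l2 - l1) * l1 * (1 - l2) / ((1 - l1) ^ 2 * l2) := by
  have h2 : l2 ≠ 0 := by nlinarith
  have h3 : (1:ℝ) - l1 ≠ 0 := by nlinarith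
  unfold Kc w x y; field_simp; ring

lemma Gamma1_eq : Gamma1 l1 l2 = Kc l1 l2 := by
  have h2 : l2 ≠ 0 := by nlinarith
  have h3 : (1:ℝ) - l1 ≠ 0 := by nlinarith
  have h7 : (1:ℝ) - l1 * l2 ≠ 0 := by nlinarith
  unfold Gamma1 Kc D w x y z; field_simp; ring

lemma bet_eq : bet l1 l2 = 0 := by
  unfold bet; rw [Gamma1_eq l1 l2 hl1 hl12 hl2]; ring

lemma gam_eq : gam l1 l2 = -(l1 * (1 - l2)) / (1 - l1) := by
  have h2 : l2 ≠ 0 := by nlinarith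
  have h3 : (1:ℝ) - l1 ≠ 0 := by nlinarith
  have h5 : l1 - l2 ≠ 0 := by nlinarith
  unfold gam y; rw [Kc_eq l1 l2 hl1 hl12 hl2]; field_simp; ring

lemma alp_eq : alp l1 l2 = l1 := by
  have h2 : l2 ≠ 0 := by nlinarith
  have h3 : (1:ℝ) - l1 ≠ 0 := by nlinarith
  unfold alp w x y
  rw [bet_eq l1 l2 hl1 hl12 hl2, gam_eq l1 l2 hl1 hl12 hl2]; field_simp; ring

lemma Pc_eq : Pc l1 l2 = (1 - l1) * l2 * l1 / (l2 - l1) := by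
  unfold Pc y; rw [alp_eq l1 l2 hl1 hl12 hl2]

lemma Qc_eq : Qc l1 l2 = 0 := by
  unfold Qc; rw [bet_eq l1 l2 hl1 hl12 hl2]; simp

lemma Uc_eq : Uc l1 l2 = (l2 - l1) / (1 - l1) := by
  have h1 : l1 ≠ 0 := by nlinarith
  have h2 : l2 ≠ 0 := by nlinarith
  have h3 : (1:ℝ) - l1 ≠ 0 := by nlinarith
  have h4 : (1:ℝ) - l2 ≠ 0 := by nlinarith
  unfold Uc; rw [Kc_eq l1 l2 hl1 hl12 hl2]; field_simp

lemma Tc_eq : Tc l1 l2 = -(l1 * l2) := by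
  have h3 : (1:ℝ) - l1 ≠ 0 := by nlinarith
  have h4 : (1:ℝ) - l2 ≠ 0 := by nlinarith
  unfold Tc y
  rw [gam_eq l1 l2 hl1 hl12 hl2, Gamma1_eq l1 l2 hl1 hl12 hl2]; field_simp; ring

lemma Rc_eq : Rc l1 l2 = l1 * (l2 - l1) / (1 - l1) - (1 - l1) * l1 * l2 / (l2 - l1)
    - (l2 - l1) / (1 - l1) := by
  have h2 : l2 ≠ 0 := by nlinarith
  have h3 : (1:ℝ) - l1 ≠ 0 := by nlinarith
  have h6 : l2 - l1 ≠ 0 := by nlinarith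
  unfold Rc w x y
  rw [Pc_eq l1 l2 hl1 hl12 hl2, Qc_eq l1 l2 hl1 hl12 hl2, Uc_eq l1 l2 hl1 hl12 hl2]
  field_simp; ring

end ConstEqs

lemma choose_two_cast (n : ℕ) :
    (((n + 2).choose 2 : ℕ) : ℝ) = ((n : ℝ) + 1) * ((n : ℝ) + 2) / 2 := by
  have h2 : (n + 2).choose 2 * 2 = (n + 2) * (n + 1) := by
    have h := (Nat.add_one_mul_choose_eq (n + 1) 1).symm
    simpa [Nat.choose_one_right] using h
  have h3 := congrArg (Nat.cast : ℕ → ℝ) h2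
  push_cast at h3
  linarith


/-- Theorem 2(i): the average Age of Actuated Information of the Geo/Geo/1
queue under FCFS with a controller. -/
theorem avg_AoAI_geo_geo_1_FCFS_controller
    (hl1 : 0 < l1) (hl12 : l1 < l2) (hl2 : l2 < 1) :
    HasSum (fun i : ℕ => (i : ℝ) * AI l1 l2 i)
      ((l1 ^ 2 * (l2 - 1) * (l1 - l2) + l2 ^ 3 * (l1 - 1)) / (l1 * (l1 - l2) * l2 ^ 2)) := by
  have hA : ‖1 - l1‖ < 1 := by
    rw [Real.norm_eq_abs, abs_lt]; constructor <;> nlinarith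
  have hB : ‖1 - l2‖ < 1 := by
    rw [Real.norm_eq_abs, abs_lt]; constructor <;> nlinarith
  have hZ : ‖z l1 l2‖ < 1 := by
    unfold z; rw [Real.norm_eq_abs, abs_lt]; constructor <;> nlinarith
  have hC : ‖cc l1 l2‖ < 1 := by
    unfold cc; rw [Real.norm_eq_abs, abs_lt]
    constructor
    · have h0 : (0:ℝ) < (1 - l2) / (1 - l1) := div_pos (by linarith) (by linarith)
      linarith
    · rw [div_lt_one (by linarith)]; linarith
  have s1 := hasSum_choose_mul_geometric_of_norm_lt_one (𝕜 := ℝ) 1 hA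
  have s2 := hasSum_choose_mul_geometric_of_norm_lt_one (𝕜 := ℝ) 1 hZ
  have s3 := hasSum_choose_mul_geometric_of_norm_lt_one (𝕜 := ℝ) 1 hB
  have s4 := hasSum_choose_mul_geometric_of_norm_lt_one (𝕜 := ℝ) 2 hB
  have s5 := hasSum_choose_mul_geometric_of_norm_lt_one (𝕜 := ℝ) 1 hC
  have comb := ((((s1.mul_left (Pc l1 l2)).add (s2.mul_left (Qc l1 l2))).add
      (s3.mul_left (Rc l1 l2 - 2 * Tc l1 l2))).add
      (s4.mul_left (2 * Tc l1 l2))).add (s5.mul_left (Uc l1 l2))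
  have comb2 : HasSum (fun n : ℕ => (((n + 1 : ℕ)) : ℝ) * AI l1 l2 (n + 1))
      (Pc l1 l2 * (1 / (1 - (1 - l1)) ^ (1 + 1)) + Qc l1 l2 * (1 / (1 - z l1 l2) ^ (1 + 1))
        + (Rc l1 l2 - 2 * Tc l1 l2) * (1 / (1 - (1 - l2)) ^ (1 + 1))
        + 2 * Tc l1 l2 * (1 / (1 - (1 - l2)) ^ (2 + 1))
        + Uc l1 l2 * (1 / (1 - cc l1 l2) ^ (1 + 1))) := by
    refine HasSum.congr_fun comb fun n => ?_
    rw [AI_closed l1 l2 hl1 hl12 hl2 n]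
    simp only [Nat.choose_one_right, choose_two_cast]
    push_cast
    ring
  have final := HasSum.zero_add (f := fun i : ℕ => (i : ℝ) * AI l1 l2 i) comb2
  have hAI0 : (fun i : ℕ => (i : ℝ) * AI l1 l2 i) 0 = 0 := by norm_num
  simp only [Nat.cast_zero, zero_mul, zero_add] at final
  have hval : Pc l1 l2 * (1 / (1 - (1 - l1)) ^ (1 + 1)) + Qc l1 l2 * (1 / (1 - z l1 l2) ^ (1 + 1))
        + (Rc l1 l2 - 2 * Tc l1 l2) * (1 / (1 - (1 - l2)) ^ (1 + 1))
        + 2 * Tc l1 l2 * (1 / (1 - (1 - l2)) ^ (2 + 1))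
        + Uc l1 l2 * (1 / (1 - cc l1 l2) ^ (1 + 1))
      = (l1 ^ 2 * (l2 - 1) * (l1 - l2) + l2 ^ 3 * (l1 - 1)) / (l1 * (l1 - l2) * l2 ^ 2) := by
    have h1 : l1 ≠ 0 := by nlinarith
    have h2 : l2 ≠ 0 := by nlinarith
    have h3 : (1:ℝ) - l1 ≠ 0 := by nlinarith
    have h4 : (1:ℝ) - l2 ≠ 0 := by nlinarith
    have h5 : l1 - l2 ≠ 0 := by nlinarith
    have h6 : l2 - l1 ≠ 0 := by nlinarith
    have h7 : (1:ℝ) - l1 * l2 ≠ 0 := by nlinarith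
    have h8 : (1:ℝ) - (1 - l1) * (1 - l2) ≠ 0 := by nlinarith
    have hc1 : (1:ℝ) - cc l1 l2 = (l2 - l1) / (1 - l1) := by
      unfold cc; field_simp; ring
    rw [hc1, Pc_eq l1 l2 hl1 hl12 hl2, Qc_eq l1 l2 hl1 hl12 hl2,
      Rc_eq l1 l2 hl1 hl12 hl2, Tc_eq l1 l2 hl1 hl12 hl2, Uc_eq l1 l2 hl1 hl12 hl2]
    unfold z
    simp only [zero_mul, zero_add, sub_sub_cancel, one_div, inv_pow, div_pow]
    field_simp
    ring
  rw [hval] at final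
  exact final

end AoAIGeoGeo1FCFS
end

section
/- Let 0 < λ₁ < 1 and 0 < λ₂ < 1. Suppose V assigns nonnegative reals to states (ai,i) with ai ≥ i ≥ 1, the family (V_{ai,i}) is summable with total sum 1, the family (ai·V_{ai,i}) is summable, and the stationary balance equations hold: V_{1,1} = λ₁λ₂; V_{ai+1,1} = λ₁(1−λ₂)·Σ_{j=1}^{ai} V_{ai,j} for all ai ≥ 1; V_{ai+1,ai+1} = (1−λ₁)·V_{ai,ai} + (1−λ₁)λ₂·Σ_{k=ai+1}^{∞} V_{k,ai} for all ai ≥ 1; and V_{ai+1,i+1} = (1−λ₁)(1−λ₂)·V_{ai,i} for all ai > i ≥ 1. Then Σ_{ai≥1} Σ_{i=1}^{ai} ai·V_{ai,i} = 1/λ₁ + 1/λ₂ − 1. -/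
open scoped BigOperators

/-- Theorem 2(ii): the average Age of Actuated Information of the Geo/Geo/1/1
queue with a controller (equivalently Geo/Geo/1 under LCFS with preemption)
is `1/λ₁ + 1/λ₂ − 1`.  Here `V ai i` denotes the stationary probability of the
state `(AI, I) = (ai, i)`, which is zero unless `1 ≤ i ≤ ai`. -/
theorem avg_AoAI_geo_geo_1_1_controller
    (l1 l2 : ℝ) (hl10 : 0 < l1) (hl11 : l1 < 1) (hl20 : 0 < l2) (hl21 : l2 < 1)
    (V : ℕ → ℕ → ℝ)
    (hnn : ∀ ai i, 0 ≤ V ai i)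
    (hdom : ∀ ai i, ¬(1 ≤ i ∧ i ≤ ai) → V ai i = 0)
    (hsum : Summable fun p : ℕ × ℕ => V p.1 p.2)
    (htot : ∑' p : ℕ × ℕ, V p.1 p.2 = 1)
    (hwsum : Summable fun p : ℕ × ℕ => (p.1 : ℝ) * V p.1 p.2)
    (hinit : V 1 1 = l1 * l2)
    (hcol1 : ∀ ai : ℕ, 1 ≤ ai →
      V (ai + 1) 1 = l1 * (1 - l2) * ∑ j ∈ Finset.Icc 1 ai, V ai j)
    (hdiag : ∀ ai : ℕ, 1 ≤ ai →
      V (ai + 1) (ai + 1) = (1 - l1) * V ai ai + (1 - l1) * l2 * ∑' k : ℕ, V (ai + 1 + k) ai)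
    (hmid : ∀ ai i : ℕ, 1 ≤ i → i < ai →
      V (ai + 1) (i + 1) = (1 - l1) * (1 - l2) * V ai i) :
    ∑' p : ℕ × ℕ, (p.1 : ℝ) * V p.1 p.2 = 1 / l1 + 1 / l2 - 1 := by
  have hl1ne : l1 ≠ 0 := ne_of_gt hl10
  have hl2ne : l2 ≠ 0 := ne_of_gt hl20
  -- column sums summable
  have hcolsum : ∀ i : ℕ, Summable fun a => V a i := by
    intro i
    have : Summable ((fun p : ℕ × ℕ => V p.1 p.2) ∘ (fun a : ℕ => (a, i))) :=
      hsum.comp_injective (fun a b h => (Prod.ext_iff.1 h).1)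
    exact this
  -- tails of columns
  set T : ℕ → ℝ := fun i => ∑' k, V (i + 1 + k) i with hTdef
  set C : ℕ → ℝ := fun i => V i i + T i with hCdef
  set S : ℕ → ℝ := fun n => ∑ j ∈ Finset.Icc 1 n, V n j with hSdef
  have hTsummand : ∀ i : ℕ, Summable fun k => V (i + 1 + k) i := by
    intro i
    exact (hcolsum i).comp_injective (add_right_injective (i + 1))
  -- C i is the i-th column sum
  have hCcol : ∀ i : ℕ, ∑' a, V a i = C i := by
    intro i
    have h1 := Summable.sum_add_tsum_nat_add (f := fun a => V a i) (i + 1) (hcolsum i)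
    have h2 : ∑ a ∈ Finset.range (i + 1), V a i = V i i := by
      rw [Finset.sum_range_succ]
      have : ∀ a ∈ Finset.range i, V a i = 0 := by
        intro a ha
        exact hdom a i (by simp at ha; omega)
      rw [Finset.sum_eq_zero this, zero_add]
    have h3 : ∑' k, V (k + (i + 1)) i = T i := by
      apply tsum_congr; intro k; rw [Nat.add_comm]
    rw [← h1, h2, h3, hCdef]
  -- tail recursion
  have hTrec : ∀ i : ℕ, 1 ≤ i → T (i + 1) = (1 - l1) * (1 - l2) * T i := by
    intro i hi
    have : ∀ k : ℕ, V (i + 1 + 1 + k) (i + 1) = (1 - l1) * (1 - l2) * V (i + 1 + k) i := by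
      intro k
      have := hmid (i + 1 + k) i hi (by omega)
      have e : i + 1 + 1 + k = i + 1 + k + 1 := by omega
      rw [e]; exact this
    calc T (i + 1) = ∑' k, V (i + 1 + 1 + k) (i + 1) := rfl
      _ = ∑' k, (1 - l1) * (1 - l2) * V (i + 1 + k) i := tsum_congr this
      _ = (1 - l1) * (1 - l2) * T i := tsum_mul_left
  -- column recursion
  have hCrec : ∀ i : ℕ, 1 ≤ i → C (i + 1) = (1 - l1) * C i := by
    intro i hi
    have hd := hdiag i hi
    have ht := hTrec i hi
    simp only [hCdef]
    rw [hd, ht]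
    show (1 - l1) * V i i + (1 - l1) * l2 * T i + (1 - l1) * (1 - l2) * T i
      = (1 - l1) * (V i i + T i)
    ring
  have hCgeo : ∀ i : ℕ, C (i + 1) = (1 - l1) ^ i * C 1 := by
    intro i
    induction i with
    | zero => simp
    | succ n ih => rw [hCrec (n + 1) (by omega), ih]; ring
  -- summability of C
  have hsum' : Summable fun p : ℕ × ℕ => V p.2 p.1 := hsum.prod_symm
  have hCsummable : Summable C := by
    have := hsum'.prod
    simp only at this
    have heq : (fun b : ℕ => ∑' c, V c b) = C := funext hCcol
    rwa [heq] at this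
  -- total column sum is 1
  have htotC : ∑' i, C i = 1 := by
    have h1 : ∑' p : ℕ × ℕ, V p.2 p.1 = 1 := by
      rw [← htot, ← (Equiv.prodComm ℕ ℕ).tsum_eq (fun p : ℕ × ℕ => V p.1 p.2)]
      rfl
    have h2 := Summable.tsum_prod' hsum' (fun b => hcolsum b)
    simp only at h2
    rw [h2] at h1
    rw [← h1]
    exact tsum_congr fun i => (hCcol i).symm
  -- C 1 = l1
  have hC0 : C 0 = 0 := by
    have hT0 : T 0 = 0 := by
      have : ∀ k : ℕ, V (0 + 1 + k) 0 = 0 := fun k => hdom _ 0 (by omega)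
      simp only [hTdef]
      rw [tsum_congr this]; exact tsum_zero
    simp [hCdef, hT0, hdom 0 0 (by omega)]
  have hr0 : (0:ℝ) ≤ 1 - l1 := by linarith
  have hr1 : 1 - l1 < 1 := by linarith
  have hrnorm : ‖(1 - l1 : ℝ)‖ < 1 := by rw [Real.norm_eq_abs, abs_of_nonneg hr0]; exact hr1
  have hgeo : ∑' n : ℕ, (1 - l1) ^ n = l1⁻¹ := by
    rw [tsum_geometric_of_lt_one hr0 hr1]; ring_nf
  have hC1 : C 1 = l1 := by
    have h1 := Summable.tsum_eq_zero_add hCsummable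
    rw [htotC, hC0, zero_add] at h1
    have h2 : ∑' n : ℕ, C (n + 1) = ∑' n : ℕ, (1 - l1) ^ n * C 1 := tsum_congr hCgeo
    rw [h2, tsum_mul_right, hgeo] at h1
    field_simp at h1
    linarith
  have hCval : ∀ i : ℕ, C (i + 1) = (1 - l1) ^ i * l1 := by
    intro i; rw [hCgeo, hC1]
  -- the weighted column sum  ∑' n, (n+2) * C (n+1) = 1/l1 + 1
  have hgeo_sum : Summable fun n : ℕ => ((1:ℝ) - l1) ^ n :=
    summable_geometric_of_lt_one hr0 hr1
  have hngeo_sum : Summable fun n : ℕ => (n : ℝ) * (1 - l1) ^ n := by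
    have := summable_pow_mul_geometric_of_norm_lt_one (R := ℝ) 1 hrnorm
    simpa using this
  have hngeo : ∑' n : ℕ, (n : ℝ) * (1 - l1) ^ n = (1 - l1) / l1 ^ 2 := by
    rw [tsum_coe_mul_geometric_of_norm_lt_one hrnorm]
    congr 1; ring
  have hBsummand : Summable fun n : ℕ => ((n : ℝ) + 2) * C (n + 1) := by
    have : (fun n : ℕ => ((n : ℝ) + 2) * C (n + 1))
        = fun n : ℕ => (n : ℝ) * (1 - l1) ^ n * l1 + 2 * ((1 - l1) ^ n * l1) := by
      funext n; rw [hCval]; ring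
    rw [this]
    exact ((hngeo_sum.mul_right l1).add ((hgeo_sum.mul_right l1).mul_left 2))
  have hB : ∑' n : ℕ, ((n : ℝ) + 2) * C (n + 1) = 1 / l1 + 1 := by
    have e : (fun n : ℕ => ((n : ℝ) + 2) * C (n + 1))
        = fun n : ℕ => (n : ℝ) * (1 - l1) ^ n * l1 + 2 * ((1 - l1) ^ n * l1) := by
      funext n; rw [hCval]; ring
    rw [e, Summable.tsum_add (hngeo_sum.mul_right l1) ((hgeo_sum.mul_right l1).mul_left 2),
      tsum_mul_right, tsum_mul_left, tsum_mul_right, hngeo, hgeo]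
    field_simp
    ring
  -- row sums
  have hrowtsum : ∀ n : ℕ, ∑' i, V n i = S n := by
    intro n
    refine tsum_eq_sum ?_
    intro j hj
    exact hdom n j (by simp at hj; omega)
  have hrowsummable : Summable S := by
    have := hsum.prod
    simp only at this
    have heq : (fun b : ℕ => ∑' c, V b c) = S := funext hrowtsum
    rwa [heq] at this
  have htotS : ∑' n, S n = 1 := by
    have h2 := Summable.tsum_prod' hsum (fun b => hsum.prod_factor b)
    simp only at h2
    rw [h2] at htot
    rw [← htot]
    exact (tsum_congr hrowtsum).symm
  have hS0 : S 0 = 0 := by simp [hSdef]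
  -- weighted row sums
  have hwrowtsum : ∀ n : ℕ, ∑' i, (n : ℝ) * V n i = (n : ℝ) * S n := by
    intro n
    rw [tsum_mul_left, hrowtsum]
  have hwrowsummable : Summable fun n : ℕ => (n : ℝ) * S n := by
    have := hwsum.prod
    simp only at this
    have heq : (fun b : ℕ => ∑' c, (b : ℝ) * V b c) = fun n : ℕ => (n : ℝ) * S n :=
      funext hwrowtsum
    rwa [heq] at this
  set M : ℝ := ∑' n : ℕ, (n : ℝ) * S n with hMdef
  have hgoalM : ∑' p : ℕ × ℕ, (p.1 : ℝ) * V p.1 p.2 = M := by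
    have h2 := Summable.tsum_prod' hwsum (fun b => hwsum.prod_factor b)
    simp only at h2
    rw [h2, hMdef]
    exact tsum_congr hwrowtsum
  -- row recursion
  have hSrec : ∀ m : ℕ, S (m + 2) = (1 - l2) * S (m + 1) + (1 - l1) * l2 * C (m + 1) := by
    intro m
    have hSr : ∀ n : ℕ, S n = ∑ i ∈ Finset.range n, V n (1 + i) := by
      intro n
      simp only [hSdef]
      rw [← Finset.Ico_add_one_right_eq_Icc, Finset.sum_Ico_eq_sum_range]
      simp
    have htop : ∀ n : ℕ, S (n + 1)
        = (∑ i ∈ Finset.range n, V (n + 1) (1 + i)) + V (n + 1) (n + 1) := by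
      intro n
      rw [hSr, Finset.sum_range_succ]
      congr 2
      omega
    have hmid' : ∀ i ∈ Finset.range m,
        V (m + 2) (1 + (i + 1)) = (1 - l1) * (1 - l2) * V (m + 1) (1 + i) := by
      intro i hi
      simp only [Finset.mem_range] at hi
      exact hmid (m + 1) (1 + i) (by omega) (by omega)
    have hdiag' : V (m + 2) (1 + (m + 1))
        = (1 - l1) * V (m + 1) (m + 1) + (1 - l1) * l2 * T (m + 1) := by
      have e : 1 + (m + 1) = m + 2 := by omega
      rw [e]
      exact hdiag (m + 1) (by omega)
    have hcol' : V (m + 2) 1 = l1 * (1 - l2) * S (m + 1) := by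
      exact hcol1 (m + 1) (by omega)
    have h1 : S (m + 2) = V (m + 2) 1
        + ∑ i ∈ Finset.range (m + 1), V (m + 2) (1 + (i + 1)) := by
      rw [hSr (m + 2), Finset.sum_range_succ']
      rw [add_comm]
    rw [h1, Finset.sum_range_succ, hdiag', Finset.sum_congr rfl hmid', ← Finset.mul_sum,
      hcol', htop m]
    simp only [hCdef]
    ring
  -- shifted sums
  have hsumS1 : Summable fun n : ℕ => S (n + 1) := (summable_nat_add_iff 1).mpr hrowsummable
  have hsumwS1 : Summable fun n : ℕ => ((n : ℝ) + 1) * S (n + 1) := by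
    have := (summable_nat_add_iff (f := fun n => (n : ℝ) * S n) 1).mpr hwrowsummable
    simpa using this
  have hsumwS2 : Summable fun n : ℕ => ((n : ℝ) + 2) * S (n + 2) := by
    have := (summable_nat_add_iff (f := fun n => (n : ℝ) * S n) 2).mpr hwrowsummable
    simpa using this
  have htail1 : ∑' n : ℕ, S (n + 1) = 1 := by
    have := Summable.tsum_eq_zero_add hrowsummable
    rw [htotS, hS0, zero_add] at this
    exact this.symm
  have hM1 : ∑' n : ℕ, ((n : ℝ) + 1) * S (n + 1) = M := by
    have h := Summable.tsum_eq_zero_add hwrowsummable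
    rw [← hMdef] at h
    simp only [Nat.cast_zero, zero_mul, zero_add, Nat.cast_add, Nat.cast_one] at h
    exact h.symm
  have hM2 : ∑' n : ℕ, ((n : ℝ) + 2) * S (n + 2) = M - l1 * l2 := by
    have h := Summable.tsum_eq_zero_add hsumwS1
    rw [hM1] at h
    simp only [Nat.cast_zero, zero_add, Nat.cast_add, Nat.cast_one, one_mul] at h
    have hS1 : S 1 = l1 * l2 := by simp [hSdef, hinit]
    have : ∀ n : ℕ, ((n : ℝ) + 1 + 1) * S (n + 1 + 1) = ((n : ℝ) + 2) * S (n + 2) := by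
      intro n
      show ((n:ℝ) + 1 + 1) * S (n + 2) = ((n:ℝ) + 2) * S (n + 2)
      ring
    rw [tsum_congr this, hS1] at h
    linarith
  -- sum the recursion
  have hkey : M - l1 * l2 = (1 - l2) * (M + 1) + (1 - l1) * l2 * (1 / l1 + 1) := by
    have e : ∀ n : ℕ, ((n : ℝ) + 2) * S (n + 2)
        = (1 - l2) * (((n : ℝ) + 1) * S (n + 1) + S (n + 1))
          + (1 - l1) * l2 * (((n : ℝ) + 2) * C (n + 1)) := by
      intro n; rw [hSrec n]; ring
    have hs1 : Summable fun n : ℕ => (1 - l2) * (((n : ℝ) + 1) * S (n + 1) + S (n + 1)) :=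
      ((hsumwS1.add hsumS1).mul_left _)
    have hs2 : Summable fun n : ℕ => (1 - l1) * l2 * (((n : ℝ) + 2) * C (n + 1)) :=
      (hBsummand.mul_left _)
    calc M - l1 * l2 = ∑' n : ℕ, ((n : ℝ) + 2) * S (n + 2) := hM2.symm
      _ = ∑' n : ℕ, ((1 - l2) * (((n : ℝ) + 1) * S (n + 1) + S (n + 1))
          + (1 - l1) * l2 * (((n : ℝ) + 2) * C (n + 1))) := tsum_congr e
      _ = (1 - l2) * (M + 1) + (1 - l1) * l2 * (1 / l1 + 1) := by
          rw [Summable.tsum_add hs1 hs2, tsum_mul_left, tsum_mul_left,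
            Summable.tsum_add hsumwS1 hsumS1, hM1, htail1, hB]
  rw [hgoalM]
  have key2 : M * (l1 * l2) = l1 + l2 - l1 * l2 := by
    field_simp at hkey
    ring_nf at hkey ⊢
    linarith
  field_simp
  linear_combination key2
end

section
/- Let 0 < λ₁ < 1 and 0 < λ₂ < 1 and set z = (1−λ₁)(1−λ₂). Suppose V assigns nonnegative reals to states (ai,i,0) with ai ≥ i ≥ 1 and states (ai,ai,1) with ai ≥ 1, the family of all these values is summable with total sum 1, the weighted family (ai·V) is summable, and, writing B₁ = Σ_{i≥1} V_{i,i,1} and B₀ = 1 − B₁, the stationary balance equations hold: V_{1,1,0} = λ₁λ₂·B₀ + λ₁(1−λ₂)·B₁; V_{1,1,1} = λ₁λ₂·B₁; V_{ai,1,0} = λ₁(1−λ₂)·Σ_{I=1}^{ai−1} V_{ai−1,I,0} for all ai ≥ 2; V_{ai,i,0} = z·V_{ai−1,i−1,0} for all ai > i ≥ 2; V_{ai,ai,0} = z·V_{ai−1,ai−1,0} + (1−λ₁)λ₂·Σ_{k=ai}^{∞} V_{k,ai−1,0} for all ai ≥ 2; and V_{ai,ai,1} = (1−λ₁)λ₂·V_{ai−1,ai−1,0}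 + (1−λ₁)·V_{ai−1,ai−1,1} for all ai ≥ 2. Then the sum of ai·V over all states equals [λ₁⁴(λ₂−4)(λ₂−1)³λ₂ − 4λ₁³(λ₂−1)³λ₂² + λ₁(3−4λ₂)λ₂⁴ + λ₂⁵ + λ₁⁵(λ₂−1)³(2λ₂−1) + 2λ₁²λ₂³(2−5λ₂+3λ₂²)] / [λ₁λ₂(λ₁+λ₂−λ₁λ₂)²(λ₁²(λ₂−1)² + λ₂² + λ₁(λ₂−2λ₂²))]. -/
set_option maxHeartbeats 1000000


open scoped BigOperators

/-- Theorem 2(iii): the average Age of Actuated Information of the Geo/Geo/1/1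
queue with a size-one battery.  Here `V0 ai i` denotes the stationary
probability of the state `(AI, I, B) = (ai, i, 0)` (zero unless `1 ≤ i ≤ ai`)
and `V1 ai` that of the state `(ai, ai, 1)` (zero unless `1 ≤ ai`). -/
theorem avg_AoAI_geo_geo_1_1_battery
    (l1 l2 : ℝ) (hl10 : 0 < l1) (hl11 : l1 < 1) (hl20 : 0 < l2) (hl21 : l2 < 1)
    (V0 : ℕ → ℕ → ℝ) (V1 : ℕ → ℝ)
    (hnn0 : ∀ ai i, 0 ≤ V0 ai i) (hnn1 : ∀ ai, 0 ≤ V1 ai)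
    (hdom0 : ∀ ai i, ¬(1 ≤ i ∧ i ≤ ai) → V0 ai i = 0)
    (hdom1 : V1 0 = 0)
    (hs0 : Summable fun p : ℕ × ℕ => V0 p.1 p.2) (hs1 : Summable V1)
    (htot : (∑' p : ℕ × ℕ, V0 p.1 p.2) + (∑' ai : ℕ, V1 ai) = 1)
    (hw0 : Summable fun p : ℕ × ℕ => (p.1 : ℝ) * V0 p.1 p.2)
    (hw1 : Summable fun ai : ℕ => (ai : ℝ) * V1 ai)
    (hinit0 : V0 1 1 = l1 * l2 * (1 - ∑' ai : ℕ, V1 ai)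
        + l1 * (1 - l2) * (∑' ai : ℕ, V1 ai))
    (hinit1 : V1 1 = l1 * l2 * (∑' ai : ℕ, V1 ai))
    (hcol1 : ∀ ai : ℕ, 1 ≤ ai →
      V0 (ai + 1) 1 = l1 * (1 - l2) * ∑ I ∈ Finset.Icc 1 ai, V0 ai I)
    (hmid : ∀ ai i : ℕ, 1 ≤ i → i < ai →
      V0 (ai + 1) (i + 1) = ((1 - l1) * (1 - l2)) * V0 ai i)
    (hdiag0 : ∀ ai : ℕ, 1 ≤ ai →
      V0 (ai + 1) (ai + 1) = ((1 - l1) * (1 - l2)) * V0 ai ai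
        + (1 - l1) * l2 * ∑' k : ℕ, V0 (ai + 1 + k) ai)
    (hdiag1 : ∀ ai : ℕ, 1 ≤ ai →
      V1 (ai + 1) = (1 - l1) * l2 * V0 ai ai + (1 - l1) * V1 ai) :
    (∑' p : ℕ × ℕ, (p.1 : ℝ) * V0 p.1 p.2) + (∑' ai : ℕ, (ai : ℝ) * V1 ai) =
      (l1 ^ 4 * (l2 - 4) * (l2 - 1) ^ 3 * l2 - 4 * l1 ^ 3 * (l2 - 1) ^ 3 * l2 ^ 2
        + l1 * (3 - 4 * l2) * l2 ^ 4 + l2 ^ 5 + l1 ^ 5 * (l2 - 1) ^ 3 * (2 * l2 - 1)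
        + 2 * l1 ^ 2 * l2 ^ 3 * (2 - 5 * l2 + 3 * l2 ^ 2)) /
      (l1 * l2 * (l1 + l2 - l1 * l2) ^ 2
        * (l1 ^ 2 * (l2 - 1) ^ 2 + l2 ^ 2 + l1 * (l2 - 2 * l2 ^ 2))) := by
  classical
  -- abbreviations
  set B1 := ∑' ai : ℕ, V1 ai with hB1def
  set A1 := ∑' ai : ℕ, (ai : ℝ) * V1 ai with hA1def
  set S := ∑' p : ℕ × ℕ, V0 p.1 p.2 with hSdef
  set A0 := ∑' p : ℕ × ℕ, (p.1 : ℝ) * V0 p.1 p.2 with hA0def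
  set D := ∑' n : ℕ, V0 n n with hDdef
  set AD := ∑' n : ℕ, (n : ℝ) * V0 n n with hADdef
  set Wr := ∑' p : ℕ × ℕ, (if p.2 < p.1 then V0 p.1 p.2 else 0) with hWrdef
  set Wn := ∑' p : ℕ × ℕ, (if p.2 < p.1 then (p.2 : ℝ) * V0 p.1 p.2 else 0) with hWndef
  set Wm := ∑' p : ℕ × ℕ, (if p.2 < p.1 then (p.1 : ℝ) * V0 p.1 p.2 else 0) with hWmdef
  -- basic facts
  have hz : ∀ m n : ℕ, n = 0 ∨ m < n → V0 m n = 0 := fun m n h => hdom0 m n (by omega)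
  have shift : ∀ (f : ℕ → ℝ), Summable f → ∑' n, f (n + 1) = (∑' n, f n) - f 0 := by
    intro f hf
    have h := Summable.tsum_eq_zero_add hf
    linarith
  -- injections
  have injd : Function.Injective fun n : ℕ => ((n, n) : ℕ × ℕ) := by
    intro a b h
    simp only [Prod.mk.injEq] at h
    exact h.1
  have injc : Function.Injective fun n : ℕ => ((n + 2, 1) : ℕ × ℕ) := by
    intro a b h
    simp only [Prod.mk.injEq] at h
    omega
  have injσ : Function.Injective fun p : ℕ × ℕ => ((p.1 + 1, p.2 + 1) : ℕ × ℕ) := by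
    rintro ⟨x, y⟩ ⟨u, v⟩ h
    simp only [Prod.mk.injEq] at h ⊢
    omega
  have injφ : Function.Injective fun q : ℕ × ℕ => ((q.1 + 2 + q.2, q.1 + 1) : ℕ × ℕ) := by
    rintro ⟨x, y⟩ ⟨u, v⟩ h
    simp only [Prod.mk.injEq] at h ⊢
    omega
  -- summability
  have h0f : (0 : ℕ × ℕ → ℝ) ≤ fun p : ℕ × ℕ => V0 p.1 p.2 := fun p => hnn0 p.1 p.2
  have h0fw : (0 : ℕ × ℕ → ℝ) ≤ fun p : ℕ × ℕ => (p.1 : ℝ) * V0 p.1 p.2 :=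
    fun p => mul_nonneg (Nat.cast_nonneg _) (hnn0 _ _)
  have hrow : ∀ m, Summable fun i => V0 m i := fun m => ((summable_prod_of_nonneg h0f).mp hs0).1 m
  have sg : Summable fun m => ∑' i, V0 m i := ((summable_prod_of_nonneg h0f).mp hs0).2
  have sgw : Summable fun m : ℕ => (m : ℝ) * ∑' i, V0 m i := by
    have h := ((summable_prod_of_nonneg h0fw).mp hw0).2
    have hmm : ∀ m : ℕ, (∑' i, ((m : ℝ) * V0 m i)) = (m : ℝ) * ∑' i, V0 m i :=
      fun m => tsum_mul_left
    exact h.congr hmm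
  have sD : Summable fun n : ℕ => V0 n n := by
    have h : Summable ((fun p : ℕ × ℕ => V0 p.1 p.2) ∘ fun n : ℕ => ((n, n) : ℕ × ℕ)) :=
      hs0.comp_injective injd
    exact h.congr fun n => rfl
  have sAD : Summable fun n : ℕ => (n : ℝ) * V0 n n := by
    have h : Summable ((fun p : ℕ × ℕ => (p.1 : ℝ) * V0 p.1 p.2) ∘ fun n : ℕ => ((n, n) : ℕ × ℕ)) :=
      hw0.comp_injective injd
    exact h.congr fun n => rfl
  have sub0 : ∀ F : ℕ × ℕ → ℝ, (∀ p, 0 ≤ F p) → (∀ p, F p ≤ V0 p.1 p.2) → Summable F :=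
    fun F h1 h2 => Summable.of_nonneg_of_le h1 h2 hs0
  have sub1 : ∀ F : ℕ × ℕ → ℝ, (∀ p, 0 ≤ F p) → (∀ p, F p ≤ (p.1 : ℝ) * V0 p.1 p.2) → Summable F :=
    fun F h1 h2 => Summable.of_nonneg_of_le h1 h2 hw0
  have sWr : Summable fun p : ℕ × ℕ => if p.2 < p.1 then V0 p.1 p.2 else 0 := by
    refine sub0 _ (fun p => ?_) (fun p => ?_) <;> split
    exacts [hnn0 _ _, le_rfl, le_rfl, hnn0 _ _]
  have sWn : Summable fun p : ℕ × ℕ => if p.2 < p.1 then (p.2 : ℝ) * V0 p.1 p.2 else 0 := by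
    refine sub1 _ (fun p => ?_) (fun p => ?_) <;> split
    · exact mul_nonneg (Nat.cast_nonneg _) (hnn0 _ _)
    · exact le_rfl
    · exact mul_le_mul_of_nonneg_right (Nat.cast_le.mpr (le_of_lt (by assumption))) (hnn0 _ _)
    · exact mul_nonneg (Nat.cast_nonneg _) (hnn0 _ _)
  have sWm : Summable fun p : ℕ × ℕ => if p.2 < p.1 then (p.1 : ℝ) * V0 p.1 p.2 else 0 := by
    refine sub1 _ (fun p => ?_) (fun p => ?_) <;> split
    · exact mul_nonneg (Nat.cast_nonneg _) (hnn0 _ _)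
    · exact le_rfl
    · exact le_rfl
    · exact mul_nonneg (Nat.cast_nonneg _) (hnn0 _ _)
  -- φ-based summabilities
  have sφ : Summable fun q : ℕ × ℕ => V0 (q.1 + 2 + q.2) (q.1 + 1) := by
    have h : Summable ((fun p : ℕ × ℕ => V0 p.1 p.2) ∘
        fun q : ℕ × ℕ => ((q.1 + 2 + q.2, q.1 + 1) : ℕ × ℕ)) := hs0.comp_injective injφ
    exact h.congr fun q => rfl
  have sφw0 : Summable fun q : ℕ × ℕ => ((q.1 + 2 + q.2 : ℕ) : ℝ) * V0 (q.1 + 2 + q.2) (q.1 + 1) := by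
    have h : Summable ((fun p : ℕ × ℕ => (p.1 : ℝ) * V0 p.1 p.2) ∘
        fun q : ℕ × ℕ => ((q.1 + 2 + q.2, q.1 + 1) : ℕ × ℕ)) := hw0.comp_injective injφ
    exact h.congr fun q => rfl
  have sφw : Summable fun q : ℕ × ℕ => ((q.1 : ℝ) + 2) * V0 (q.1 + 2 + q.2) (q.1 + 1) := by
    refine Summable.of_nonneg_of_le (fun q => ?_) (fun q => ?_) sφw0
    · have h := hnn0 (q.1 + 2 + q.2) (q.1 + 1)
      positivity
    · refine mul_le_mul_of_nonneg_right ?_ (hnn0 _ _)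
      push_cast
      linarith [Nat.cast_nonneg (α := ℝ) q.2]
  have h0φw : (0 : ℕ × ℕ → ℝ) ≤ fun q : ℕ × ℕ => ((q.1 : ℝ) + 2) * V0 (q.1 + 2 + q.2) (q.1 + 1) := by
    intro q
    have h := hnn0 (q.1 + 2 + q.2) (q.1 + 1)
    have : (0:ℝ) ≤ ((q.1 : ℝ) + 2) := by positivity
    exact mul_nonneg this h
  have sφrow : ∀ n : ℕ, Summable fun k => V0 (n + 2 + k) (n + 1) := by
    have h0 : (0 : ℕ × ℕ → ℝ) ≤ fun q : ℕ × ℕ => V0 (q.1 + 2 + q.2) (q.1 + 1) :=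
      fun q => hnn0 _ _
    exact fun n => ((summable_prod_of_nonneg h0).mp sφ).1 n
  have sTw : Summable fun n : ℕ => ((n : ℝ) + 2) * ∑' k, V0 (n + 2 + k) (n + 1) := by
    have h := ((summable_prod_of_nonneg h0φw).mp sφw).2
    have hmm : ∀ n : ℕ, (∑' k, (((n : ℝ) + 2) * V0 (n + 2 + k) (n + 1)))
        = ((n : ℝ) + 2) * ∑' k, V0 (n + 2 + k) (n + 1) := fun n => tsum_mul_left
    exact h.congr hmm
  -- summable shifted families
  have sds1' : Summable fun n : ℕ => V0 (n + 1) (n + 1) := (summable_nat_add_iff 1).mpr sD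
  have sds2' : Summable fun n : ℕ => V0 (n + 2) (n + 2) := (summable_nat_add_iff 2).mpr sD
  have sd1A : Summable fun n : ℕ => ((n : ℝ) + 1) * V0 n n :=
    (sAD.add sD).congr fun n => by ring
  have sds1 : Summable fun n : ℕ => ((n : ℝ) + 1) * V0 (n + 1) (n + 1) :=
    ((summable_nat_add_iff 1).mpr sAD).congr fun n => by push_cast; ring
  have swd1A : Summable fun n : ℕ => ((n : ℝ) + 2) * V0 (n + 1) (n + 1) :=
    ((summable_nat_add_iff 1).mpr sd1A).congr fun n => by push_cast; ring
  have sv1s : Summable fun n : ℕ => V1 (n + 1) := (summable_nat_add_iff 1).mpr hs1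
  have sv1w : Summable fun n : ℕ => ((n : ℝ) + 1) * V1 (n + 1) :=
    ((summable_nat_add_iff 1).mpr hw1).congr fun n => by push_cast; ring
  have sw1A : Summable fun n : ℕ => ((n : ℝ) + 2) * V1 (n + 1) :=
    (sv1w.add sv1s).congr fun n => by ring
  -- shifted sums
  have hshift1 : ∑' n : ℕ, V1 (n + 1) = B1 := by
    have h := shift V1 hs1
    rw [hdom1, ← hB1def] at h
    simpa using h
  have hshift2 : ∑' n : ℕ, V1 (n + 2) = B1 - V1 1 := by
    have h := shift (fun n => V1 (n + 1)) sv1s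
    rw [hshift1] at h
    exact h
  have hdshift1 : ∑' n : ℕ, V0 (n + 1) (n + 1) = D := by
    have h := shift (fun n => V0 n n) sD
    rw [← hDdef] at h
    calc ∑' n : ℕ, V0 (n + 1) (n + 1) = D - V0 0 0 := h
      _ = D := by rw [hz 0 0 (by omega)]; ring
  have hdshift2 : ∑' n : ℕ, V0 (n + 2) (n + 2) = D - V0 1 1 := by
    have h := shift (fun n => V0 (n + 1) (n + 1)) sds1'
    rw [hdshift1] at h
    exact h
  have hwshift1 : ∑' n : ℕ, ((n : ℝ) + 1) * V1 (n + 1) = A1 := by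
    have h := shift (fun n => (n : ℝ) * V1 n) hw1
    rw [← hA1def] at h
    calc ∑' n : ℕ, ((n : ℝ) + 1) * V1 (n + 1)
        = ∑' n : ℕ, ((n + 1 : ℕ) : ℝ) * V1 (n + 1) := tsum_congr fun n => by push_cast; ring
      _ = A1 - ((0 : ℕ) : ℝ) * V1 0 := h
      _ = A1 := by simp
  have hwshift2 : ∑' n : ℕ, ((n : ℝ) + 2) * V1 (n + 2) = A1 - V1 1 := by
    have h := shift (fun n => ((n : ℝ) + 1) * V1 (n + 1)) sv1w
    rw [hwshift1] at h
    calc ∑' n : ℕ, ((n : ℝ) + 2) * V1 (n + 2)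
        = ∑' n : ℕ, (((n + 1 : ℕ) : ℝ) + 1) * V1 (n + 1 + 1) := tsum_congr fun n => by push_cast; ring
      _ = A1 - (((0 : ℕ) : ℝ) + 1) * V1 (0 + 1) := h
      _ = A1 - V1 1 := by norm_num
  have hwdshift1 : ∑' n : ℕ, ((n : ℝ) + 1) * V0 (n + 1) (n + 1) = AD := by
    have h := shift (fun n => (n : ℝ) * V0 n n) sAD
    rw [← hADdef] at h
    calc ∑' n : ℕ, ((n : ℝ) + 1) * V0 (n + 1) (n + 1)
        = ∑' n : ℕ, ((n + 1 : ℕ) : ℝ) * V0 (n + 1) (n + 1) := tsum_congr fun n => by push_cast; ring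
      _ = AD - ((0 : ℕ) : ℝ) * V0 0 0 := h
      _ = AD := by simp
  have hwdshift2 : ∑' n : ℕ, ((n : ℝ) + 2) * V0 (n + 2) (n + 2) = AD - V0 1 1 := by
    have h := shift (fun n => ((n : ℝ) + 1) * V0 (n + 1) (n + 1)) sds1
    rw [hwdshift1] at h
    calc ∑' n : ℕ, ((n : ℝ) + 2) * V0 (n + 2) (n + 2)
        = ∑' n : ℕ, (((n + 1 : ℕ) : ℝ) + 1) * V0 (n + 1 + 1) (n + 1 + 1) := tsum_congr fun n => by push_cast; ring
      _ = AD - (((0 : ℕ) : ℝ) + 1) * V0 (0 + 1) (0 + 1) := h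
      _ = AD - V0 1 1 := by norm_num
  have hwdshiftA : ∑' n : ℕ, ((n : ℝ) + 2) * V0 (n + 1) (n + 1) = AD + D := by
    calc ∑' n : ℕ, ((n : ℝ) + 2) * V0 (n + 1) (n + 1)
        = ∑' n : ℕ, (((n : ℝ) + 1) * V0 (n + 1) (n + 1) + V0 (n + 1) (n + 1)) :=
          tsum_congr fun n => by ring
      _ = (∑' n : ℕ, ((n : ℝ) + 1) * V0 (n + 1) (n + 1)) + ∑' n : ℕ, V0 (n + 1) (n + 1) :=
          Summable.tsum_add sds1 sds1'
      _ = AD + D := by rw [hwdshift1, hdshift1]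
  have hw1shiftA : ∑' n : ℕ, ((n : ℝ) + 2) * V1 (n + 1) = A1 + B1 := by
    calc ∑' n : ℕ, ((n : ℝ) + 2) * V1 (n + 1)
        = ∑' n : ℕ, (((n : ℝ) + 1) * V1 (n + 1) + V1 (n + 1)) := tsum_congr fun n => by ring
      _ = (∑' n : ℕ, ((n : ℝ) + 1) * V1 (n + 1)) + ∑' n : ℕ, V1 (n + 1) := Summable.tsum_add sv1w sv1s
      _ = A1 + B1 := by rw [hwshift1, hshift1]
  -- equation e4 and e10 from hdiag1
  have e4 : B1 - V1 1 = (1 - l1) * l2 * D + (1 - l1) * B1 := by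
    have hpt : ∀ n : ℕ, V1 (n + 2)
        = (1 - l1) * l2 * V0 (n + 1) (n + 1) + (1 - l1) * V1 (n + 1) :=
      fun n => hdiag1 (n + 1) (by omega)
    rw [← hshift2, ← hdshift1, ← hshift1, ← tsum_mul_left, ← tsum_mul_left,
      ← Summable.tsum_add (Summable.mul_left _ sds1') (Summable.mul_left _ sv1s)]
    exact tsum_congr hpt
  have e10 : A1 - V1 1 = (1 - l1) * l2 * (AD + D) + (1 - l1) * (A1 + B1) := by
    have hpt : ∀ n : ℕ, ((n : ℝ) + 2) * V1 (n + 2)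
        = (1 - l1) * l2 * (((n : ℝ) + 2) * V0 (n + 1) (n + 1))
          + (1 - l1) * (((n : ℝ) + 2) * V1 (n + 1)) := by
      intro n
      rw [hdiag1 (n + 1) (by omega)]
      ring
    rw [← hwshift2, ← hwdshiftA, ← hw1shiftA, ← tsum_mul_left, ← tsum_mul_left,
      ← Summable.tsum_add (Summable.mul_left _ swd1A) (Summable.mul_left _ sw1A)]
    exact tsum_congr hpt
  -- identification of the below-diagonal column sums (hTn)
  have hsplitW : ∑' p : ℕ × ℕ, (if p.2 < p.1 then ((p.2 : ℝ) + 1) * V0 p.1 p.2 else 0)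
      = Wn + Wr := by
    have hpt : ∀ p : ℕ × ℕ, (if p.2 < p.1 then ((p.2 : ℝ) + 1) * V0 p.1 p.2 else 0)
        = (if p.2 < p.1 then (p.2 : ℝ) * V0 p.1 p.2 else 0)
          + (if p.2 < p.1 then V0 p.1 p.2 else 0) := by
      intro p
      split
      · ring
      · ring
    rw [tsum_congr hpt, Summable.tsum_add sWn sWr, ← hWndef, ← hWrdef]
  have hTn : ∑' n : ℕ, (((n : ℝ) + 2) * ∑' k, V0 (n + 2 + k) (n + 1)) = Wn + Wr := by
    have h1 : ∀ n : ℕ, ((n : ℝ) + 2) * ∑' k, V0 (n + 2 + k) (n + 1)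
        = ∑' k, ((n : ℝ) + 2) * V0 (n + 2 + k) (n + 1) := fun n => tsum_mul_left.symm
    have h2 : ∑' q : ℕ × ℕ, ((q.1 : ℝ) + 2) * V0 (q.1 + 2 + q.2) (q.1 + 1)
        = ∑' n : ℕ, ∑' k : ℕ, ((n : ℝ) + 2) * V0 (n + 2 + k) (n + 1) :=
      Summable.tsum_prod' sφw fun n =>
        (Summable.mul_left ((n : ℝ) + 2) (sφrow n) :
          Summable fun k => ((n : ℝ) + 2) * V0 (n + 2 + k) (n + 1))
    have hsupp : Function.support
        (fun p : ℕ × ℕ => if p.2 < p.1 then ((p.2 : ℝ) + 1) * V0 p.1 p.2 else 0)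
        ⊆ Set.range fun q : ℕ × ℕ => ((q.1 + 2 + q.2, q.1 + 1) : ℕ × ℕ) := by
      rintro ⟨a, b⟩ hp
      simp only [Function.mem_support] at hp
      have h1' : b < a := by
        by_contra hc
        rw [if_neg hc] at hp
        exact hp rfl
      have h2' : 1 ≤ b := by
        by_contra hc
        rw [if_pos h1', hz a b (Or.inl (by omega)), mul_zero] at hp
        exact hp rfl
      exact ⟨(b - 1, a - b - 1), by simp only [Prod.mk.injEq]; omega⟩
    have h4 : ∑' q : ℕ × ℕ, (if (q.1 + 1 : ℕ) < q.1 + 2 + q.2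
          then (((q.1 + 1 : ℕ) : ℝ) + 1) * V0 (q.1 + 2 + q.2) (q.1 + 1) else 0)
        = ∑' p : ℕ × ℕ, (if p.2 < p.1 then ((p.2 : ℝ) + 1) * V0 p.1 p.2 else 0) :=
      injφ.tsum_eq hsupp
    calc ∑' n : ℕ, (((n : ℝ) + 2) * ∑' k, V0 (n + 2 + k) (n + 1))
        = ∑' n : ℕ, ∑' k, ((n : ℝ) + 2) * V0 (n + 2 + k) (n + 1) := tsum_congr h1
      _ = ∑' q : ℕ × ℕ, ((q.1 : ℝ) + 2) * V0 (q.1 + 2 + q.2) (q.1 + 1) := h2.symm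
      _ = ∑' q : ℕ × ℕ, (if (q.1 + 1 : ℕ) < q.1 + 2 + q.2
            then (((q.1 + 1 : ℕ) : ℝ) + 1) * V0 (q.1 + 2 + q.2) (q.1 + 1) else 0) :=
          tsum_congr fun q => by rw [if_pos (by omega : (q.1 + 1 : ℕ) < q.1 + 2 + q.2)]; push_cast; ring
      _ = ∑' p : ℕ × ℕ, (if p.2 < p.1 then ((p.2 : ℝ) + 1) * V0 p.1 p.2 else 0) := h4
      _ = Wn + Wr := hsplitW
  -- equation e8 from hdiag0
  have sTn1 : Summable fun n : ℕ => ∑' k, V0 (n + 2 + k) (n + 1) := by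
    have h0 : (0 : ℕ × ℕ → ℝ) ≤ fun q : ℕ × ℕ => V0 (q.1 + 2 + q.2) (q.1 + 1) :=
      fun q => hnn0 _ _
    exact ((summable_prod_of_nonneg h0).mp sφ).2
  have e8 : AD - V0 1 1 = ((1 - l1) * (1 - l2)) * (AD + D) + (1 - l1) * l2 * (Wn + Wr) := by
    have hpt : ∀ n : ℕ, ((n : ℝ) + 2) * V0 (n + 2) (n + 2)
        = ((1 - l1) * (1 - l2)) * (((n : ℝ) + 2) * V0 (n + 1) (n + 1))
          + (1 - l1) * l2 * (((n : ℝ) + 2) * ∑' k, V0 (n + 2 + k) (n + 1)) := by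
      intro n
      have h := hdiag0 (n + 1) (by omega)
      rw [show n + 1 + 1 = n + 2 from rfl] at h
      rw [h]
      ring
    rw [← hwdshift2, ← hwdshiftA, ← hTn, ← tsum_mul_left, ← tsum_mul_left,
      ← Summable.tsum_add (Summable.mul_left _ swd1A) (Summable.mul_left _ sTw)]
    exact tsum_congr hpt
  -- diagonal region identification
  have sDe : Summable fun p : ℕ × ℕ => if p.1 = p.2 then V0 p.1 p.2 else 0 := by
    refine sub0 _ (fun p => ?_) (fun p => ?_) <;> split
    exacts [hnn0 _ _, le_rfl, le_rfl, hnn0 _ _]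
  have sDew : Summable fun p : ℕ × ℕ => if p.1 = p.2 then (p.1 : ℝ) * V0 p.1 p.2 else 0 := by
    refine sub1 _ (fun p => ?_) (fun p => ?_) <;> split
    · exact mul_nonneg (Nat.cast_nonneg _) (hnn0 _ _)
    · exact le_rfl
    · exact le_rfl
    · exact mul_nonneg (Nat.cast_nonneg _) (hnn0 _ _)
  have hDiagIte : ∑' p : ℕ × ℕ, (if p.1 = p.2 then V0 p.1 p.2 else 0) = D := by
    have hsupp : Function.support (fun p : ℕ × ℕ => if p.1 = p.2 then V0 p.1 p.2 else 0)
        ⊆ Set.range fun n : ℕ => ((n, n) : ℕ × ℕ) := by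
      rintro ⟨a, b⟩ hp
      simp only [Function.mem_support] at hp
      by_cases hc : a = b
      · exact ⟨a, by subst hc; rfl⟩
      · rw [if_neg hc] at hp
        exact absurd rfl hp
    have h : ∑' n : ℕ, (if n = n then V0 n n else 0)
        = ∑' p : ℕ × ℕ, (if p.1 = p.2 then V0 p.1 p.2 else 0) := injd.tsum_eq hsupp
    rw [← h, hDdef]
    exact tsum_congr fun n => if_pos rfl
  have hDiagItew : ∑' p : ℕ × ℕ, (if p.1 = p.2 then (p.1 : ℝ) * V0 p.1 p.2 else 0) = AD := by
    have hsupp : Function.support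
        (fun p : ℕ × ℕ => if p.1 = p.2 then (p.1 : ℝ) * V0 p.1 p.2 else 0)
        ⊆ Set.range fun n : ℕ => ((n, n) : ℕ × ℕ) := by
      rintro ⟨a, b⟩ hp
      simp only [Function.mem_support] at hp
      by_cases hc : a = b
      · exact ⟨a, by subst hc; rfl⟩
      · rw [if_neg hc] at hp
        exact absurd rfl hp
    have h : ∑' n : ℕ, (if n = n then (n : ℝ) * V0 n n else 0)
        = ∑' p : ℕ × ℕ, (if p.1 = p.2 then (p.1 : ℝ) * V0 p.1 p.2 else 0) := injd.tsum_eq hsupp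
    rw [← h, hADdef]
    exact tsum_congr fun n => if_pos rfl
  have e6 : S = D + Wr := by
    have hpt : ∀ p : ℕ × ℕ, V0 p.1 p.2
        = (if p.1 = p.2 then V0 p.1 p.2 else 0) + (if p.2 < p.1 then V0 p.1 p.2 else 0) := by
      intro p
      rcases lt_trichotomy p.2 p.1 with h | h | h
      · rw [if_neg (by omega), if_pos h]
        ring
      · rw [if_pos (by omega), if_neg (by omega)]
        ring
      · rw [if_neg (by omega), if_neg (by omega), hz p.1 p.2 (Or.inr h)]
        ring
    rw [hSdef, tsum_congr hpt, Summable.tsum_add sDe sWr, hDiagIte, ← hWrdef]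
  have e6m : A0 = AD + Wm := by
    have hpt : ∀ p : ℕ × ℕ, (p.1 : ℝ) * V0 p.1 p.2
        = (if p.1 = p.2 then (p.1 : ℝ) * V0 p.1 p.2 else 0)
          + (if p.2 < p.1 then (p.1 : ℝ) * V0 p.1 p.2 else 0) := by
      intro p
      rcases lt_trichotomy p.2 p.1 with h | h | h
      · rw [if_neg (by omega), if_pos h]
        ring
      · rw [if_pos (by omega), if_neg (by omega)]
        ring
      · rw [if_neg (by omega), if_neg (by omega), hz p.1 p.2 (Or.inr h)]
        ring
    rw [hA0def, tsum_congr hpt, Summable.tsum_add sDew sWm, hDiagItew, ← hWmdef]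
  -- column 1 sums
  have hRrow : ∀ n : ℕ, V0 (n + 2) 1 = l1 * (1 - l2) * ∑' i, V0 (n + 1) i := by
    intro n
    have h := hcol1 (n + 1) (by omega)
    rw [show n + 1 + 1 = n + 2 from rfl] at h
    rw [h]
    congr 1
    exact (tsum_eq_sum fun i hi => hdom0 (n + 1) i fun hc => hi (Finset.mem_Icc.mpr hc)).symm
  have hSm : S = ∑' m : ℕ, ∑' i, V0 m i := by
    rw [hSdef]
    exact Summable.tsum_prod' hs0 hrow
  have hrow0 : (∑' i, V0 0 i) = 0 := by
    have hh : ∀ i, V0 0 i = 0 := fun i => hz 0 i (by omega)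
    calc (∑' i, V0 0 i) = ∑' _ : ℕ, (0 : ℝ) := tsum_congr hh
      _ = 0 := tsum_zero
  have hgshift : ∑' n : ℕ, (∑' i, V0 (n + 1) i) = S := by
    have h := shift (fun m => ∑' i, V0 m i) sg
    rw [← hSm] at h
    calc ∑' n : ℕ, (∑' i, V0 (n + 1) i) = S - ∑' i, V0 0 i := h
      _ = S := by rw [hrow0]; ring
  have hA : ∑' n : ℕ, V0 (n + 2) 1 = l1 * (1 - l2) * S := by
    calc ∑' n : ℕ, V0 (n + 2) 1
        = ∑' n : ℕ, l1 * (1 - l2) * ∑' i, V0 (n + 1) i := tsum_congr hRrow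
      _ = l1 * (1 - l2) * ∑' n : ℕ, (∑' i, V0 (n + 1) i) := tsum_mul_left
      _ = l1 * (1 - l2) * S := by rw [hgshift]
  have hA0m : A0 = ∑' m : ℕ, (m : ℝ) * ∑' i, V0 m i := by
    rw [hA0def]
    have h := Summable.tsum_prod' hw0 fun m =>
      (Summable.mul_left ((m : ℝ)) (hrow m) : Summable fun i => (m : ℝ) * V0 m i)
    exact h.trans (tsum_congr fun m =>
      (tsum_mul_left : ∑' i, ((m : ℝ) * V0 m i) = (m : ℝ) * ∑' i, V0 m i))
  have hgwshift : ∑' n : ℕ, ((n : ℝ) + 1) * ∑' i, V0 (n + 1) i = A0 := by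
    have h := shift (fun m => (m : ℝ) * ∑' i, V0 m i) sgw
    rw [← hA0m] at h
    calc ∑' n : ℕ, ((n : ℝ) + 1) * ∑' i, V0 (n + 1) i
        = ∑' n : ℕ, ((n + 1 : ℕ) : ℝ) * ∑' i, V0 (n + 1) i :=
          tsum_congr fun n => by push_cast; ring
      _ = A0 - ((0 : ℕ) : ℝ) * ∑' i, V0 0 i := h
      _ = A0 := by simp
  have sgs : Summable fun n : ℕ => ∑' i, V0 (n + 1) i := (summable_nat_add_iff 1).mpr sg
  have sgws : Summable fun n : ℕ => ((n : ℝ) + 1) * ∑' i, V0 (n + 1) i :=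
    ((summable_nat_add_iff 1).mpr sgw).congr fun n => by push_cast; ring
  have hB : ∑' n : ℕ, ((n : ℝ) + 2) * V0 (n + 2) 1 = l1 * (1 - l2) * (A0 + S) := by
    calc ∑' n : ℕ, ((n : ℝ) + 2) * V0 (n + 2) 1
        = ∑' n : ℕ, l1 * (1 - l2) * (((n : ℝ) + 1) * (∑' i, V0 (n + 1) i) + ∑' i, V0 (n + 1) i) :=
          tsum_congr fun n => by rw [hRrow n]; ring
      _ = l1 * (1 - l2) * ∑' n : ℕ, (((n : ℝ) + 1) * (∑' i, V0 (n + 1) i) + ∑' i, V0 (n + 1) i) :=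
          tsum_mul_left
      _ = l1 * (1 - l2) * ((∑' n : ℕ, ((n : ℝ) + 1) * ∑' i, V0 (n + 1) i)
            + ∑' n : ℕ, (∑' i, V0 (n + 1) i)) := by rw [Summable.tsum_add sgws sgs]
      _ = l1 * (1 - l2) * (A0 + S) := by rw [hgwshift, hgshift]
  -- summabilities of split pieces
  have sCol : Summable fun p : ℕ × ℕ => if p.2 = 1 ∧ 2 ≤ p.1 then V0 p.1 p.2 else 0 := by
    refine sub0 _ (fun p => ?_) (fun p => ?_) <;> split_ifs
    exacts [hnn0 _ _, le_rfl, le_rfl, hnn0 _ _]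
  have sColw : Summable fun p : ℕ × ℕ => if p.2 = 1 ∧ 2 ≤ p.1 then (p.1 : ℝ) * V0 p.1 p.2 else 0 := by
    refine sub1 _ (fun p => ?_) (fun p => ?_) <;> split_ifs
    · exact mul_nonneg (Nat.cast_nonneg _) (hnn0 _ _)
    · exact le_rfl
    · exact le_rfl
    · exact mul_nonneg (Nat.cast_nonneg _) (hnn0 _ _)
  have sColn : Summable fun p : ℕ × ℕ => if p.2 = 1 ∧ 2 ≤ p.1 then (p.2 : ℝ) * V0 p.1 p.2 else 0 := by
    refine sub1 _ (fun p => ?_) (fun p => ?_) <;> split_ifs with h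
    · exact mul_nonneg (Nat.cast_nonneg _) (hnn0 _ _)
    · exact le_rfl
    · exact mul_le_mul_of_nonneg_right (Nat.cast_le.mpr (by omega)) (hnn0 _ _)
    · exact mul_nonneg (Nat.cast_nonneg _) (hnn0 _ _)
  have sF2 : Summable fun p : ℕ × ℕ => if 2 ≤ p.2 ∧ p.2 < p.1 then V0 p.1 p.2 else 0 := by
    refine sub0 _ (fun p => ?_) (fun p => ?_) <;> split_ifs
    exacts [hnn0 _ _, le_rfl, le_rfl, hnn0 _ _]
  have sF2n : Summable fun p : ℕ × ℕ => if 2 ≤ p.2 ∧ p.2 < p.1 then (p.2 : ℝ) * V0 p.1 p.2 else 0 := by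
    refine sub1 _ (fun p => ?_) (fun p => ?_) <;> split_ifs with h
    · exact mul_nonneg (Nat.cast_nonneg _) (hnn0 _ _)
    · exact le_rfl
    · exact mul_le_mul_of_nonneg_right (Nat.cast_le.mpr (by omega)) (hnn0 _ _)
    · exact mul_nonneg (Nat.cast_nonneg _) (hnn0 _ _)
  have sF2m : Summable fun p : ℕ × ℕ => if 2 ≤ p.2 ∧ p.2 < p.1 then (p.1 : ℝ) * V0 p.1 p.2 else 0 := by
    refine sub1 _ (fun p => ?_) (fun p => ?_) <;> split_ifs
    · exact mul_nonneg (Nat.cast_nonneg _) (hnn0 _ _)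
    · exact le_rfl
    · exact le_rfl
    · exact mul_nonneg (Nat.cast_nonneg _) (hnn0 _ _)
  -- column identification
  have hColIte : ∑' p : ℕ × ℕ, (if p.2 = 1 ∧ 2 ≤ p.1 then V0 p.1 p.2 else 0)
      = ∑' n : ℕ, V0 (n + 2) 1 := by
    have hsupp : Function.support (fun p : ℕ × ℕ => if p.2 = 1 ∧ 2 ≤ p.1 then V0 p.1 p.2 else 0)
        ⊆ Set.range fun n : ℕ => ((n + 2, 1) : ℕ × ℕ) := by
      rintro ⟨a, b⟩ hp
      simp only [Function.mem_support] at hp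
      by_cases hc : b = 1 ∧ 2 ≤ a
      · obtain ⟨hb, ha⟩ := hc
        subst hb
        refine ⟨a - 2, ?_⟩
        show ((a - 2 + 2 : ℕ), (1 : ℕ)) = (a, 1)
        rw [show a - 2 + 2 = a by omega]
      · rw [if_neg hc] at hp
        exact absurd rfl hp
    have h : ∑' n : ℕ, (if (1 : ℕ) = 1 ∧ 2 ≤ n + 2 then V0 (n + 2) 1 else 0)
        = ∑' p : ℕ × ℕ, (if p.2 = 1 ∧ 2 ≤ p.1 then V0 p.1 p.2 else 0) := injc.tsum_eq hsupp
    rw [← h]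
    exact tsum_congr fun n => if_pos ⟨rfl, by omega⟩
  have hColItew : ∑' p : ℕ × ℕ, (if p.2 = 1 ∧ 2 ≤ p.1 then (p.1 : ℝ) * V0 p.1 p.2 else 0)
      = ∑' n : ℕ, ((n : ℝ) + 2) * V0 (n + 2) 1 := by
    have hsupp : Function.support
        (fun p : ℕ × ℕ => if p.2 = 1 ∧ 2 ≤ p.1 then (p.1 : ℝ) * V0 p.1 p.2 else 0)
        ⊆ Set.range fun n : ℕ => ((n + 2, 1) : ℕ × ℕ) := by
      rintro ⟨a, b⟩ hp
      simp only [Function.mem_support] at hp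
      by_cases hc : b = 1 ∧ 2 ≤ a
      · obtain ⟨hb, ha⟩ := hc
        subst hb
        refine ⟨a - 2, ?_⟩
        show ((a - 2 + 2 : ℕ), (1 : ℕ)) = (a, 1)
        rw [show a - 2 + 2 = a by omega]
      · rw [if_neg hc] at hp
        exact absurd rfl hp
    have h : ∑' n : ℕ, (if (1 : ℕ) = 1 ∧ 2 ≤ n + 2 then ((n + 2 : ℕ) : ℝ) * V0 (n + 2) 1 else 0)
        = ∑' p : ℕ × ℕ, (if p.2 = 1 ∧ 2 ≤ p.1 then (p.1 : ℝ) * V0 p.1 p.2 else 0) :=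
      injc.tsum_eq hsupp
    rw [← h]
    refine tsum_congr fun n => ?_
    rw [if_pos (⟨rfl, by omega⟩ : (1 : ℕ) = 1 ∧ 2 ≤ n + 2)]
    push_cast
    ring
  have hColIten : ∑' p : ℕ × ℕ, (if p.2 = 1 ∧ 2 ≤ p.1 then (p.2 : ℝ) * V0 p.1 p.2 else 0)
      = ∑' n : ℕ, V0 (n + 2) 1 := by
    have hsupp : Function.support
        (fun p : ℕ × ℕ => if p.2 = 1 ∧ 2 ≤ p.1 then (p.2 : ℝ) * V0 p.1 p.2 else 0)
        ⊆ Set.range fun n : ℕ => ((n + 2, 1) : ℕ × ℕ) := by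
      rintro ⟨a, b⟩ hp
      simp only [Function.mem_support] at hp
      by_cases hc : b = 1 ∧ 2 ≤ a
      · obtain ⟨hb, ha⟩ := hc
        subst hb
        refine ⟨a - 2, ?_⟩
        show ((a - 2 + 2 : ℕ), (1 : ℕ)) = (a, 1)
        rw [show a - 2 + 2 = a by omega]
      · rw [if_neg hc] at hp
        exact absurd rfl hp
    have h : ∑' n : ℕ, (if (1 : ℕ) = 1 ∧ 2 ≤ n + 2 then ((1 : ℕ) : ℝ) * V0 (n + 2) 1 else 0)
        = ∑' p : ℕ × ℕ, (if p.2 = 1 ∧ 2 ≤ p.1 then (p.2 : ℝ) * V0 p.1 p.2 else 0) :=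
      injc.tsum_eq hsupp
    rw [← h]
    refine tsum_congr fun n => ?_
    rw [if_pos (⟨rfl, by omega⟩ : (1 : ℕ) = 1 ∧ 2 ≤ n + 2)]
    norm_num
  -- sigma shift identification
  have hsuppσgen : ∀ F : ℕ × ℕ → ℝ,
      Function.support (fun p : ℕ × ℕ => if 2 ≤ p.2 ∧ p.2 < p.1 then F p else 0)
        ⊆ Set.range fun p : ℕ × ℕ => ((p.1 + 1, p.2 + 1) : ℕ × ℕ) := by
    intro F
    rintro ⟨a, b⟩ hp
    simp only [Function.mem_support] at hp
    by_cases hc : 2 ≤ b ∧ b < a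
    · refine ⟨(a - 1, b - 1), ?_⟩
      show ((a - 1 + 1 : ℕ), (b - 1 + 1 : ℕ)) = (a, b)
      rw [show a - 1 + 1 = a by omega, show b - 1 + 1 = b by omega]
    · rw [if_neg hc] at hp
      exact absurd rfl hp
  have hσ : ∑' p : ℕ × ℕ, (if 2 ≤ p.2 ∧ p.2 < p.1 then V0 p.1 p.2 else 0)
      = ((1 - l1) * (1 - l2)) * Wr := by
    have h1 : ∑' p : ℕ × ℕ, (if 2 ≤ p.2 + 1 ∧ p.2 + 1 < p.1 + 1 then V0 (p.1 + 1) (p.2 + 1) else 0)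
        = ∑' p : ℕ × ℕ, (if 2 ≤ p.2 ∧ p.2 < p.1 then V0 p.1 p.2 else 0) :=
      injσ.tsum_eq (hsuppσgen (fun p : ℕ × ℕ => V0 p.1 p.2))
    have hpt : ∀ p : ℕ × ℕ,
        (if 2 ≤ p.2 + 1 ∧ p.2 + 1 < p.1 + 1 then V0 (p.1 + 1) (p.2 + 1) else 0)
          = ((1 - l1) * (1 - l2)) * (if p.2 < p.1 then V0 p.1 p.2 else 0) := by
      rintro ⟨a, b⟩
      by_cases h1' : 1 ≤ b ∧ b < a
      · rw [if_pos (show 2 ≤ b + 1 ∧ b + 1 < a + 1 by omega), hmid a b h1'.1 h1'.2,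
          if_pos h1'.2]
      · rw [if_neg (show ¬(2 ≤ b + 1 ∧ b + 1 < a + 1) by omega)]
        by_cases h2' : b < a
        · rw [if_pos h2', hz a b (Or.inl (by omega)), mul_zero]
        · rw [if_neg h2', mul_zero]
    rw [← h1, tsum_congr hpt, tsum_mul_left, ← hWrdef]
  have hσn : ∑' p : ℕ × ℕ, (if 2 ≤ p.2 ∧ p.2 < p.1 then (p.2 : ℝ) * V0 p.1 p.2 else 0)
      = ((1 - l1) * (1 - l2)) * (Wn + Wr) := by
    have h1 : ∑' p : ℕ × ℕ, (if 2 ≤ p.2 + 1 ∧ p.2 + 1 < p.1 + 1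
          then ((p.2 + 1 : ℕ) : ℝ) * V0 (p.1 + 1) (p.2 + 1) else 0)
        = ∑' p : ℕ × ℕ, (if 2 ≤ p.2 ∧ p.2 < p.1 then (p.2 : ℝ) * V0 p.1 p.2 else 0) :=
      injσ.tsum_eq (hsuppσgen (fun p : ℕ × ℕ => (p.2 : ℝ) * V0 p.1 p.2))
    have hpt : ∀ p : ℕ × ℕ,
        (if 2 ≤ p.2 + 1 ∧ p.2 + 1 < p.1 + 1
          then ((p.2 + 1 : ℕ) : ℝ) * V0 (p.1 + 1) (p.2 + 1) else 0)
          = ((1 - l1) * (1 - l2)) * ((if p.2 < p.1 then (p.2 : ℝ) * V0 p.1 p.2 else 0)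
              + (if p.2 < p.1 then V0 p.1 p.2 else 0)) := by
      rintro ⟨a, b⟩
      by_cases h1' : 1 ≤ b ∧ b < a
      · rw [if_pos (show 2 ≤ b + 1 ∧ b + 1 < a + 1 by omega), hmid a b h1'.1 h1'.2,
          if_pos h1'.2, if_pos h1'.2]
        push_cast
        ring
      · rw [if_neg (show ¬(2 ≤ b + 1 ∧ b + 1 < a + 1) by omega)]
        by_cases h2' : b < a
        · rw [if_pos h2', if_pos h2', hz a b (Or.inl (by omega))]
          ring
        · rw [if_neg h2', if_neg h2']
          ring
    rw [← h1, tsum_congr hpt, tsum_mul_left, Summable.tsum_add sWn sWr, ← hWndef, ← hWrdef]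
  have hσm : ∑' p : ℕ × ℕ, (if 2 ≤ p.2 ∧ p.2 < p.1 then (p.1 : ℝ) * V0 p.1 p.2 else 0)
      = ((1 - l1) * (1 - l2)) * (Wm + Wr) := by
    have h1 : ∑' p : ℕ × ℕ, (if 2 ≤ p.2 + 1 ∧ p.2 + 1 < p.1 + 1
          then ((p.1 + 1 : ℕ) : ℝ) * V0 (p.1 + 1) (p.2 + 1) else 0)
        = ∑' p : ℕ × ℕ, (if 2 ≤ p.2 ∧ p.2 < p.1 then (p.1 : ℝ) * V0 p.1 p.2 else 0) :=
      injσ.tsum_eq (hsuppσgen (fun p : ℕ × ℕ => (p.1 : ℝ) * V0 p.1 p.2))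
    have hpt : ∀ p : ℕ × ℕ,
        (if 2 ≤ p.2 + 1 ∧ p.2 + 1 < p.1 + 1
          then ((p.1 + 1 : ℕ) : ℝ) * V0 (p.1 + 1) (p.2 + 1) else 0)
          = ((1 - l1) * (1 - l2)) * ((if p.2 < p.1 then (p.1 : ℝ) * V0 p.1 p.2 else 0)
              + (if p.2 < p.1 then V0 p.1 p.2 else 0)) := by
      rintro ⟨a, b⟩
      by_cases h1' : 1 ≤ b ∧ b < a
      · rw [if_pos (show 2 ≤ b + 1 ∧ b + 1 < a + 1 by omega), hmid a b h1'.1 h1'.2,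
          if_pos h1'.2, if_pos h1'.2]
        push_cast
        ring
      · rw [if_neg (show ¬(2 ≤ b + 1 ∧ b + 1 < a + 1) by omega)]
        by_cases h2' : b < a
        · rw [if_pos h2', if_pos h2', hz a b (Or.inl (by omega))]
          ring
        · rw [if_neg h2', if_neg h2']
          ring
    rw [← h1, tsum_congr hpt, tsum_mul_left, Summable.tsum_add sWm sWr, ← hWmdef, ← hWrdef]
  -- decomposition equations
  have e6b : Wr = l1 * (1 - l2) * S + ((1 - l1) * (1 - l2)) * Wr := by
    have hpt : ∀ p : ℕ × ℕ, (if p.2 < p.1 then V0 p.1 p.2 else 0)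
        = (if p.2 = 1 ∧ 2 ≤ p.1 then V0 p.1 p.2 else 0)
          + (if 2 ≤ p.2 ∧ p.2 < p.1 then V0 p.1 p.2 else 0) := by
      rintro ⟨a, b⟩
      by_cases h1' : b = 0
      · subst h1'
        simp [hz a 0 (Or.inl rfl)]
      · by_cases h2' : b = 1
        · subst h2'
          by_cases h3 : 2 ≤ a
          · rw [if_pos (by omega), if_pos ⟨rfl, h3⟩, if_neg (by omega)]
            ring
          · rw [if_neg (by omega), if_neg (by omega), if_neg (by omega)]
            ring
        · by_cases h3 : b < a
          · rw [if_pos h3, if_neg (by omega), if_pos ⟨by omega, h3⟩]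
            ring
          · rw [if_neg h3, if_neg (by omega), if_neg (by omega)]
            ring
    have h := tsum_congr (L := SummationFilter.unconditional _) hpt
    rw [Summable.tsum_add sCol sF2, hColIte, hA, hσ, ← hWrdef] at h
    exact h
  have e7 : Wn = l1 * (1 - l2) * S + ((1 - l1) * (1 - l2)) * (Wn + Wr) := by
    have hpt : ∀ p : ℕ × ℕ, (if p.2 < p.1 then (p.2 : ℝ) * V0 p.1 p.2 else 0)
        = (if p.2 = 1 ∧ 2 ≤ p.1 then (p.2 : ℝ) * V0 p.1 p.2 else 0)
          + (if 2 ≤ p.2 ∧ p.2 < p.1 then (p.2 : ℝ) * V0 p.1 p.2 else 0) := by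
      rintro ⟨a, b⟩
      by_cases h1' : b = 0
      · subst h1'
        simp [hz a 0 (Or.inl rfl)]
      · by_cases h2' : b = 1
        · subst h2'
          by_cases h3 : 2 ≤ a
          · rw [if_pos (by omega), if_pos ⟨rfl, h3⟩, if_neg (by omega)]
            ring
          · rw [if_neg (by omega), if_neg (by omega), if_neg (by omega)]
            ring
        · by_cases h3 : b < a
          · rw [if_pos h3, if_neg (by omega), if_pos ⟨by omega, h3⟩]
            ring
          · rw [if_neg h3, if_neg (by omega), if_neg (by omega)]
            ring
    have h := tsum_congr (L := SummationFilter.unconditional _) hpt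
    rw [Summable.tsum_add sColn sF2n, hColIten, hA, hσn, ← hWndef] at h
    exact h
  have e9 : Wm = l1 * (1 - l2) * (A0 + S) + ((1 - l1) * (1 - l2)) * (Wm + Wr) := by
    have hpt : ∀ p : ℕ × ℕ, (if p.2 < p.1 then (p.1 : ℝ) * V0 p.1 p.2 else 0)
        = (if p.2 = 1 ∧ 2 ≤ p.1 then (p.1 : ℝ) * V0 p.1 p.2 else 0)
          + (if 2 ≤ p.2 ∧ p.2 < p.1 then (p.1 : ℝ) * V0 p.1 p.2 else 0) := by
      rintro ⟨a, b⟩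
      by_cases h1' : b = 0
      · subst h1'
        simp [hz a 0 (Or.inl rfl)]
      · by_cases h2' : b = 1
        · subst h2'
          by_cases h3 : 2 ≤ a
          · rw [if_pos (by omega), if_pos ⟨rfl, h3⟩, if_neg (by omega)]
            ring
          · rw [if_neg (by omega), if_neg (by omega), if_neg (by omega)]
            ring
        · by_cases h3 : b < a
          · rw [if_pos h3, if_neg (by omega), if_pos ⟨by omega, h3⟩]
            ring
          · rw [if_neg h3, if_neg (by omega), if_neg (by omega)]
            ring
    have h := tsum_congr (L := SummationFilter.unconditional _) hpt
    rw [Summable.tsum_add sColw sF2m, hColItew, hB, hσm, ← hWmdef] at h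
    exact h
  -- final algebra
  have hl1' : (0 : ℝ) < 1 - l1 := by linarith
  have hl2' : (0 : ℝ) < 1 - l2 := by linarith
  have hwpos : (0 : ℝ) < (l1 + l2 - l1 * l2) := by
    have h := mul_pos hl10 hl2'
    linarith
  have hQpos : (0 : ℝ) < (l1 ^ 2 * (l2 - 1) ^ 2 + l2 ^ 2 + l1 * (l2 - 2 * l2 ^ 2)) := by
    have h1 := mul_pos (mul_pos hl10 hl2') hwpos
    have h2 := mul_pos hl1' (mul_pos hl20 hl20)
    linarith
  have a1 : l1 * (1 - l2) * B1 = (1 - l1) * l2 * D := by linear_combination e4 + hinit1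
  have a2 : l2 * S = (l1 + l2 - l1 * l2) * D := by linear_combination (l1 + l2 - l1 * l2) * e6 + e6b
  have a3 : (l1 ^ 2 * (l2 - 1) ^ 2 + l2 ^ 2 + l1 * (l2 - 2 * l2 ^ 2)) * B1 = (1 - l1) * l2 ^ 2 := by
    linear_combination ((1 - l1) * l2 ^ 2) * htot + (l1 + l2 - l1 * l2) * a1 - (1 - l1) * l2 * a2
  have a4 : (l1 ^ 2 * (l2 - 1) ^ 2 + l2 ^ 2 + l1 * (l2 - 2 * l2 ^ 2)) * S = l1 * (1 - l2) * (l1 + l2 - l1 * l2) := by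
    linear_combination (l1 ^ 2 * (l2 - 1) ^ 2 + l2 ^ 2 + l1 * (l2 - 2 * l2 ^ 2)) * htot - a3
  have a5 : (l1 ^ 2 * (l2 - 1) ^ 2 + l2 ^ 2 + l1 * (l2 - 2 * l2 ^ 2)) * D = l1 * (1 - l2) * l2 := by
    refine mul_left_cancel₀ (ne_of_gt (mul_pos hl1' hl20)) ?_
    linear_combination (-(l1 ^ 2 * (l2 - 1) ^ 2 + l2 ^ 2 + l1 * (l2 - 2 * l2 ^ 2))) * a1 + (l1 * (1 - l2)) * a3
  have a6 : (l1 ^ 2 * (l2 - 1) ^ 2 + l2 ^ 2 + l1 * (l2 - 2 * l2 ^ 2)) * Wr = (l1 * (1 - l2)) ^ 2 := by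
    refine mul_left_cancel₀ (ne_of_gt hwpos) ?_
    linear_combination (l1 ^ 2 * (l2 - 1) ^ 2 + l2 ^ 2 + l1 * (l2 - 2 * l2 ^ 2)) * e6b + (l1 * (1 - l2)) * a4
  have a7 : (l1 + l2 - l1 * l2) * ((l1 ^ 2 * (l2 - 1) ^ 2 + l2 ^ 2 + l1 * (l2 - 2 * l2 ^ 2)) * Wn) = (l1 * (1 - l2)) ^ 2 := by
    linear_combination (l1 ^ 2 * (l2 - 1) ^ 2 + l2 ^ 2 + l1 * (l2 - 2 * l2 ^ 2)) * e7 + (l1 * (1 - l2)) * a4 + ((1 - l1) * (1 - l2)) * a6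
  have a8 : (l1 ^ 2 * (l2 - 1) ^ 2 + l2 ^ 2 + l1 * (l2 - 2 * l2 ^ 2)) * V0 1 1 = l1 * l2 * (l1 * (1 - l2) * (l1 + l2 - l1 * l2)) + l1 * (1 - l2) * ((1 - l1) * l2 ^ 2) := by
    linear_combination (l1 ^ 2 * (l2 - 1) ^ 2 + l2 ^ 2 + l1 * (l2 - 2 * l2 ^ 2)) * hinit0 + (l1 * (1 - l2) - l1 * l2) * a3
  have a9 : (l1 ^ 2 * (l2 - 1) ^ 2 + l2 ^ 2 + l1 * (l2 - 2 * l2 ^ 2)) * V1 1 = l1 * l2 * ((1 - l1) * l2 ^ 2) := by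
    linear_combination (l1 ^ 2 * (l2 - 1) ^ 2 + l2 ^ 2 + l1 * (l2 - 2 * l2 ^ 2)) * hinit1 + l1 * l2 * a3
  have a10 : (l1 + l2 - l1 * l2) * AD = V0 1 1 + ((1 - l1) * (1 - l2)) * D + (1 - l1) * l2 * Wn + (1 - l1) * l2 * Wr := by
    linear_combination e8
  have a11 : l2 * A0 = (l1 + l2 - l1 * l2) * AD + l1 * (1 - l2) * S + ((1 - l1) * (1 - l2)) * Wr := by
    linear_combination e9 + (l1 + l2 - l1 * l2) * e6m
  have a12 : l1 * A1 = V1 1 + (1 - l1) * l2 * AD + (1 - l1) * l2 * D + (1 - l1) * B1 := by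
    linear_combination e10
  have hden : l1 * l2 * (l1 + l2 - l1 * l2) ^ 2 * (l1 ^ 2 * (l2 - 1) ^ 2 + l2 ^ 2 + l1 * (l2 - 2 * l2 ^ 2)) ≠ 0 :=
    ne_of_gt (mul_pos (mul_pos (mul_pos hl10 hl20) (pow_pos hwpos 2)) hQpos)
  rw [eq_div_iff hden]
  linear_combination (l1 * (l1 + l2 - l1 * l2) ^ 2 * (l1 ^ 2 * (l2 - 1) ^ 2 + l2 ^ 2 + l1 * (l2 - 2 * l2 ^ 2))) * a11 + (l2 * (l1 + l2 - l1 * l2) ^ 2 * (l1 ^ 2 * (l2 - 1) ^ 2 + l2 ^ 2 + l1 * (l2 - 2 * l2 ^ 2))) * a12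
    + ((l1 * (l1 + l2 - l1 * l2) ^ 2 + (1 - l1) * l2 ^ 2 * (l1 + l2 - l1 * l2)) * (l1 ^ 2 * (l2 - 1) ^ 2 + l2 ^ 2 + l1 * (l2 - 2 * l2 ^ 2))) * a10
    + (l1 * (l1 + l2 - l1 * l2) ^ 2 * (l1 * (1 - l2))) * a4
    + ((1 - l1) * l2 ^ 2 * (l1 + l2 - l1 * l2) ^ 2 + (l1 * (l1 + l2 - l1 * l2) ^ 2 + (1 - l1) * l2 ^ 2 * (l1 + l2 - l1 * l2)) * ((1 - l1) * (1 - l2))) * a5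
    + (l1 * (l1 + l2 - l1 * l2) ^ 2 * ((1 - l1) * (1 - l2)) + (l1 * (l1 + l2 - l1 * l2) ^ 2 + (1 - l1) * l2 ^ 2 * (l1 + l2 - l1 * l2)) * ((1 - l1) * l2)) * a6
    + ((l1 * (l1 + l2 - l1 * l2) + (1 - l1) * l2 ^ 2) * ((1 - l1) * l2)) * a7
    + (l1 * (l1 + l2 - l1 * l2) ^ 2 + (1 - l1) * l2 ^ 2 * (l1 + l2 - l1 * l2)) * a8
    + (l2 * (l1 + l2 - l1 * l2) ^ 2) * a9
    + (l2 * (l1 + l2 - l1 * l2) ^ 2 * (1 - l1)) * a3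
end

section
/- Let 0 < λ₁ < λ₂ < 1 and set w = λ₁λ₂, x = λ₁(1−λ₂), y = (1−λ₁)λ₂, z = (1−λ₁)(1−λ₂). Define D_i = (x/y)^i·(1 − x/y) for i ≥ 0, f_i = x·D_i + w·D_{i+1} for i ≥ 1, Γ₁ = (x·D₀ + w·z·D₁ + w·y·D₂)/(1−w), and for h ≥ l ≥ 1 define Γ(h,l) = x^{l−1}·z^{h−l}·Γ₁ + Σ_{i=1}^{l−1} Σ_{j=0}^{h−l} C(l−1,i)·C(h−l,j)·w^i·x^{l−i−1}·y^j·z^{h−l−j}·f_{i+j} + Σ_{j=1}^{h−l} C(h−l,j)·x^{l−1}·y^j·z^{h−l−j}·f_j. Then for every l ≥ 1 the series Σ_{h=l}^{∞} C(h−1,l−1)·Γ(h,l) converges and equals (x/y)^l·(1 − x/y). -/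
open scoped BigOperators

namespace GeoGeo1ClosedForm

variable (l1 l2 : ℝ)

/-- `w = λ₁λ₂` -/
noncomputable def w : ℝ := l1 * l2
/-- `x = λ₁(1−λ₂)` -/
noncomputable def x : ℝ := l1 * (1 - l2)
/-- `y = (1−λ₁)λ₂` -/
noncomputable def y : ℝ := (1 - l1) * l2
/-- `z = (1−λ₁)(1−λ₂)` -/
noncomputable def z : ℝ := (1 - l1) * (1 - l2)

/-- `D_i = (x/y)^i (1 − x/y)` -/
noncomputable def D (i : ℕ) : ℝ := (x l1 l2 / y l1 l2) ^ i * (1 - x l1 l2 / y l1 l2)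

/-- `f_i = x D_i + w D_{i+1}` -/
noncomputable def f (i : ℕ) : ℝ := x l1 l2 * D l1 l2 i + w l1 l2 * D l1 l2 (i + 1)

/-- `Γ₁ = (x D₀ + w z D₁ + w y D₂)/(1−w)` -/
noncomputable def Gamma1 : ℝ :=
  (x l1 l2 * D l1 l2 0 + w l1 l2 * z l1 l2 * D l1 l2 1 + w l1 l2 * y l1 l2 * D l1 l2 2)
    / (1 - w l1 l2)

/-- `Γ(h,l)`: the closed-form stationary probability of a queue state of the
Geo/Geo/1 queue under FCFS with queue length `l` and head-of-line packet
age `h` (for `h ≥ l ≥ 1`). -/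
noncomputable def Gam (h l : ℕ) : ℝ :=
  x l1 l2 ^ (l - 1) * z l1 l2 ^ (h - l) * Gamma1 l1 l2 +
    (∑ i ∈ Finset.Icc 1 (l - 1), ∑ j ∈ Finset.range (h - l + 1),
      ((l - 1).choose i : ℝ) * ((h - l).choose j : ℝ) * w l1 l2 ^ i
        * x l1 l2 ^ (l - i - 1) * y l1 l2 ^ j * z l1 l2 ^ (h - l - j) * f l1 l2 (i + j)) +
    ∑ j ∈ Finset.Icc 1 (h - l),
      ((h - l).choose j : ℝ) * x l1 l2 ^ (l - 1) * y l1 l2 ^ j * z l1 l2 ^ (h - l - j)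
        * f l1 l2 j

section Aux

variable {l1 l2 : ℝ}

lemma f_eq (h1 : 0 < l1) (h12 : l1 < l2) (h2 : l2 < 1) (i : ℕ) :
    f l1 l2 i = (x l1 l2 / (1 - l1)) * (1 - x l1 l2 / y l1 l2) * (x l1 l2 / y l1 l2) ^ i := by
  have hy : y l1 l2 ≠ 0 := by unfold y; nlinarith
  have h1' : (1 : ℝ) - l1 ≠ 0 := by nlinarith
  have hl2 : l2 ≠ 0 := by nlinarith
  unfold f D; rw [pow_succ]; generalize (x l1 l2 / y l1 l2) ^ i = t
  unfold w x y at *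
  field_simp
  ring

lemma Gamma1_eq (h1 : 0 < l1) (h12 : l1 < l2) (h2 : l2 < 1) :
    Gamma1 l1 l2 = (x l1 l2 / (1 - l1)) * (1 - x l1 l2 / y l1 l2) := by
  have hy : y l1 l2 ≠ 0 := by unfold y; nlinarith
  have h1' : (1 : ℝ) - l1 ≠ 0 := by nlinarith
  have hw : (1 : ℝ) - w l1 l2 ≠ 0 := by unfold w; nlinarith
  have hl2 : l2 ≠ 0 := by nlinarith
  unfold Gamma1 D w x y z at *
  field_simp
  ring

/-- Generic binomial double-sum identity. -/
lemma sum_identity (X Y Z W r c : ℝ) (n m : ℕ) :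
    X ^ n * Z ^ m * c
      + (∑ i ∈ Finset.Icc 1 n, ∑ j ∈ Finset.range (m + 1),
          (n.choose i : ℝ) * (m.choose j : ℝ) * W ^ i * X ^ (n - i) * Y ^ j * Z ^ (m - j)
            * (c * r ^ (i + j)))
      + (∑ j ∈ Finset.Icc 1 m,
          (m.choose j : ℝ) * X ^ n * Y ^ j * Z ^ (m - j) * (c * r ^ j))
    = c * (W * r + X) ^ n * (Y * r + Z) ^ m := by
  have hins : ∀ N : ℕ, Finset.range (N + 1) = insert 0 (Finset.Icc 1 N) := by
    intro N; ext j
    simp only [Finset.mem_range, Finset.mem_insert, Finset.mem_Icc]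
    omega
  have h2 : (∑ i ∈ Finset.Icc 1 n, ∑ j ∈ Finset.range (m + 1),
      (n.choose i : ℝ) * (m.choose j : ℝ) * W ^ i * X ^ (n - i) * Y ^ j * Z ^ (m - j)
        * (c * r ^ (i + j)))
      = c * (∑ i ∈ Finset.Icc 1 n, (W * r) ^ i * X ^ (n - i) * (n.choose i : ℝ))
          * (∑ j ∈ Finset.range (m + 1), (Y * r) ^ j * Z ^ (m - j) * (m.choose j : ℝ)) := by
    rw [mul_assoc, Finset.sum_mul_sum, Finset.mul_sum]
    refine Finset.sum_congr rfl fun i _ => ?_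
    rw [Finset.mul_sum]
    refine Finset.sum_congr rfl fun j _ => ?_
    simp only [pow_add, mul_pow]
    ring
  have h3 : (∑ j ∈ Finset.Icc 1 m,
      (m.choose j : ℝ) * X ^ n * Y ^ j * Z ^ (m - j) * (c * r ^ j))
      = c * X ^ n * (∑ j ∈ Finset.Icc 1 m, (Y * r) ^ j * Z ^ (m - j) * (m.choose j : ℝ)) := by
    rw [Finset.mul_sum]
    refine Finset.sum_congr rfl fun j _ => ?_
    simp only [mul_pow]; ring
  rw [h2, h3, add_pow, add_pow, hins n, hins m,
    Finset.sum_insert (by simp), Finset.sum_insert (by simp)]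
  simp only [pow_zero, Nat.sub_zero, Nat.choose_zero_right, Nat.cast_one, one_mul, mul_one]
  ring

lemma Gam_eq (h1 : 0 < l1) (h12 : l1 < l2) (h2 : l2 < 1) (n k : ℕ) :
    Gam l1 l2 (n + 1 + k) (n + 1)
      = (x l1 l2 / (1 - l1)) * (1 - x l1 l2 / y l1 l2) * (x l1 l2 / (1 - l1)) ^ n
          * (1 - l2) ^ k := by
  have hy : y l1 l2 ≠ 0 := by unfold y; nlinarith
  have h1' : (1 : ℝ) - l1 ≠ 0 := by nlinarith
  have hsub1 : n + 1 + k - (n + 1) = k := by omega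
  have hsub2 : n + 1 - 1 = n := by omega
  have hsub3 : ∀ i : ℕ, n + 1 - i - 1 = n - i := by omega
  have hwr : w l1 l2 * (x l1 l2 / y l1 l2) + x l1 l2 = x l1 l2 / (1 - l1) := by
    have hl2 : l2 ≠ 0 := by nlinarith
    unfold w x y at *; field_simp; ring
  have hyr : y l1 l2 * (x l1 l2 / y l1 l2) + z l1 l2 = 1 - l2 := by
    rw [mul_div_cancel₀ _ hy]; unfold x z; ring
  unfold Gam
  rw [Gamma1_eq h1 h12 h2]
  simp only [hsub1, hsub2, hsub3, f_eq h1 h12 h2]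
  rw [← hwr, ← hyr, ← sum_identity]

end Aux

/-- Summing `Γ(h,l)`, weighted by the number `C(h−1,l−1)` of queue states with
parameters `(h,l)`, over all head-of-line ages `h ≥ l` recovers the geometric
stationary queue-length distribution of the Geo/Geo/1 queue:
`P(queue length = l) = (x/y)^l (1 − x/y)`. -/
theorem sum_Gam_over_ages
    (hl1 : 0 < l1) (hl12 : l1 < l2) (hl2 : l2 < 1) :
    ∀ l : ℕ, 1 ≤ l →
      HasSum (fun k : ℕ => ((l + k - 1).choose (l - 1) : ℝ) * Gam l1 l2 (l + k) l)
        ((x l1 l2 / y l1 l2) ^ l * (1 - x l1 l2 / y l1 l2)) := by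
  intro l hl
  obtain ⟨n, rfl⟩ : ∃ n, l = n + 1 := ⟨l - 1, by omega⟩
  have hy : y l1 l2 ≠ 0 := by unfold y; nlinarith
  have h1' : (1 : ℝ) - l1 ≠ 0 := by nlinarith
  have hl2' : l2 ≠ 0 := by nlinarith
  have ht : ‖(1 - l2 : ℝ)‖ < 1 := by
    rw [Real.norm_eq_abs, abs_lt]; constructor <;> nlinarith
  have H := (hasSum_choose_mul_geometric_of_norm_lt_one (𝕜 := ℝ) n ht).mul_left
    ((x l1 l2 / (1 - l1)) * (1 - x l1 l2 / y l1 l2) * (x l1 l2 / (1 - l1)) ^ n)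
  convert H using 1
  · rfl
  · funext k
    rw [Gam_eq hl1 hl12 hl2]
    have : n + 1 + k - 1 = k + n := by omega
    rw [this]
    have : n + 1 - 1 = n := by omega
    rw [this]
    ring
  · have hxy : x l1 l2 / y l1 l2 = x l1 l2 / (1 - l1) / l2 := by
      unfold y; rw [div_div]
    rw [hxy]
    have h2 : (1 : ℝ) - (1 - l2) = l2 := by ring
    rw [h2]
    rw [div_pow, pow_succ, div_pow]
    field_simp

end GeoGeo1ClosedForm
end

section
/- Let 0 < λ₁ < λ₂ < 1 and set w = λ₁λ₂, x = λ₁(1−λ₂), y = (1−λ₁)λ₂, z = (1−λ₁)(1−λ₂). Define D_i = (x/y)^i·(1 − x/y) for i ≥ 0, f_i = x·D_i + w·D_{i+1} for i ≥ 1, Γ₁ = (x·D₀ + w·z·D₁ + w·y·D₂)/(1−w), and for h ≥ l ≥ 1 define Γ(h,l) = x^{l−1}·z^{h−l}·Γ₁ + Σ_{i=1}^{l−1} Σ_{j=0}^{h−l} C(l−1,i)·C(h−l,j)·w^i·x^{l−i−1}·y^j·z^{h−l−j}·f_{i+j} + Σ_{j=1}^{h−l} C(h−l,j)·x^{l−1}·y^j·z^{h−l−j}·f_j.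 Then for every h ≥ 1: Σ_{l=1}^{h} C(h−1,l−1)·Γ(h,l) = (1−λ₂)^{h−1}·Γ₁ + Σ_{j=1}^{h−1} C(h−1,j)·λ₂^j·(1−λ₂)^{h−1−j}·f_j. -/
open scoped BigOperators

namespace GeoGeo1ClosedForm

section Helpers
open Polynomial Finset

lemma expandCXpow (a b : ℝ) (m : ℕ) :
    (C a * X + C b) ^ m =
    ∑ i ∈ range (m+1), C ((m.choose i : ℝ) * a ^ i * b ^ (m - i)) * X ^ i := by
  rw [add_pow]
  refine Finset.sum_congr rfl fun i hi => ?_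
  simp only [mul_pow, ← C_pow, ← C_eq_natCast, C_mul]
  ring

lemma T_expand {n : ℕ} (g : ℕ → ℝ) {α : Type*} (s : Finset α) (c : α → ℝ) (e : α → ℕ)
    (he : ∀ i ∈ s, e i ≤ n) :
    ∑ k ∈ range (n+1), (∑ i ∈ s, C (c i) * X ^ (e i)).coeff k * g k
      = ∑ i ∈ s, c i * g (e i) := by
  simp only [Polynomial.finset_sum_coeff, Polynomial.coeff_C_mul, Polynomial.coeff_X_pow,
    Finset.sum_mul]
  rw [Finset.sum_comm]
  refine Finset.sum_congr rfl fun i hi => ?_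
  have : ∀ k, c i * (if k = e i then (1:ℝ) else 0) * g k
      = if k = e i then c i * g (e i) else 0 := by
    intro k; split <;> simp_all
  simp only [this]
  rw [Finset.sum_ite_eq' (range (n+1))]
  simp [Nat.lt_succ_of_le (he i hi)]

lemma key (a b c d : ℝ) (g : ℕ → ℝ) (n : ℕ) :
    ∑ m ∈ range (n+1), (n.choose m : ℝ) *
      (∑ i ∈ range (m+1), ∑ j ∈ range (n-m+1),
        (m.choose i : ℝ) * ((n-m).choose j : ℝ) * a^i * b^(m-i) * c^j * d^(n-m-j) * g (i+j))
    = ∑ k ∈ range (n+1), (n.choose k : ℝ) * (a+c)^k * (b+d)^(n-k) * g k := by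
  set P : ℕ → ℝ[X] := fun m =>
    (C a * X + C b)^m * (C c * X + C d)^(n-m) * ((n.choose m : ℕ) : ℝ[X]) with hP
  have hpoly : ∑ m ∈ range (n+1), P m = (C (a+c) * X + C (b+d))^n := by
    have hadd := add_pow (C a * X + C b) (C c * X + C d) n
    rw [show (C a * X + C b) + (C c * X + C d) = C (a+c) * X + C (b+d) by
      simp only [C_add]; ring] at hadd
    rw [hadd]
  have h2 : ∑ k ∈ range (n+1), ((C (a+c) * X + C (b+d))^n).coeff k * g k
      = ∑ k ∈ range (n+1), (n.choose k : ℝ) * (a+c)^k * (b+d)^(n-k) * g k := by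
    rw [expandCXpow]
    rw [T_expand g (range (n+1)) _ _
      (fun k hk => Nat.lt_succ_iff.mp (Finset.mem_range.mp hk))]
  have h1 : ∀ m ∈ range (n+1),
      ∑ k ∈ range (n+1), (P m).coeff k * g k
      = (n.choose m : ℝ) * ∑ i ∈ range (m+1), ∑ j ∈ range (n-m+1),
          (m.choose i : ℝ) * ((n-m).choose j : ℝ) * a^i * b^(m-i) * c^j * d^(n-m-j) * g (i+j) := by
    intro m hm
    have hmn : m ≤ n := Nat.lt_succ_iff.mp (Finset.mem_range.mp hm)
    have hprod : P m
        = ∑ p ∈ range (m+1) ×ˢ range (n-m+1),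
            C ((n.choose m : ℝ) * ((m.choose p.1 : ℝ) * a^p.1 * b^(m-p.1)) *
               (((n-m).choose p.2 : ℝ) * c^p.2 * d^(n-m-p.2))) * X^(p.1+p.2) := by
      rw [hP]
      simp only
      rw [expandCXpow a b m, expandCXpow c d (n-m), Finset.sum_mul_sum, ← C_eq_natCast,
        Finset.sum_product]
      rw [Finset.sum_mul]
      refine Finset.sum_congr rfl fun i _ => ?_
      rw [Finset.sum_mul]
      refine Finset.sum_congr rfl fun j _ => ?_
      simp only [C_mul, pow_add]
      ring
    rw [hprod, T_expand g _ _ _ (fun p hp => by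
      have := Finset.mem_product.mp hp
      have h1' := Nat.lt_succ_iff.mp (Finset.mem_range.mp this.1)
      have h2' := Nat.lt_succ_iff.mp (Finset.mem_range.mp this.2)
      omega)]
    rw [Finset.sum_product, Finset.mul_sum]
    refine Finset.sum_congr rfl fun i _ => ?_
    rw [Finset.mul_sum]
    exact Finset.sum_congr rfl fun j _ => by ring
  calc ∑ m ∈ range (n+1), (n.choose m : ℝ) *
      (∑ i ∈ range (m+1), ∑ j ∈ range (n-m+1),
        (m.choose i : ℝ) * ((n-m).choose j : ℝ) * a^i * b^(m-i) * c^j * d^(n-m-j) * g (i+j))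
      = ∑ m ∈ range (n+1), ∑ k ∈ range (n+1), (P m).coeff k * g k :=
        (Finset.sum_congr rfl fun m hm => (h1 m hm).symm)
    _ = ∑ k ∈ range (n+1), (∑ m ∈ range (n+1), P m).coeff k * g k := by
        rw [Finset.sum_comm]
        exact Finset.sum_congr rfl fun k _ => by
          rw [Polynomial.finset_sum_coeff, Finset.sum_mul]
    _ = _ := by rw [hpoly]; exact h2

lemma split0 (m : ℕ) (F : ℕ → ℝ) :
    ∑ i ∈ range (m+1), F i = F 0 + ∑ i ∈ Finset.Icc 1 m, F i := by
  rw [Finset.sum_range_succ', ← Finset.Ico_add_one_right_eq_Icc, Finset.sum_Ico_eq_sum_range, add_comm]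
  congr 1
  exact Finset.sum_congr rfl fun i _ => by rw [Nat.add_comm]

end Helpers

variable (l1 l2 : ℝ)

/-- Summing `Γ(h,l)`, weighted by the number `C(h−1,l−1)` of queue states with
parameters `(h,l)`, over all queue lengths `1 ≤ l ≤ h` gives the paper's
closed form for the total stationary probability of all queue states whose
head-of-line packet has age `h`. -/
theorem sum_Gam_over_lengths
    (hl1 : 0 < l1) (hl12 : l1 < l2) (hl2 : l2 < 1) :
    ∀ h : ℕ, 1 ≤ h →
      ∑ l ∈ Finset.Icc 1 h, ((h - 1).choose (l - 1) : ℝ) * Gam l1 l2 h l =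
        (1 - l2) ^ (h - 1) * Gamma1 l1 l2 +
          ∑ j ∈ Finset.Icc 1 (h - 1),
            ((h - 1).choose j : ℝ) * l2 ^ j * (1 - l2) ^ (h - 1 - j) * f l1 l2 j := by
  intro h hh
  obtain ⟨n, rfl⟩ : ∃ n, h = n + 1 := ⟨h - 1, by omega⟩
  simp only [Nat.add_sub_cancel]
  have step1 : ∑ l ∈ Finset.Icc 1 (n+1), (n.choose (l-1) : ℝ) * Gam l1 l2 (n+1) l
      = ∑ m ∈ Finset.range (n+1), (n.choose m : ℝ) * Gam l1 l2 (n+1) (m+1) := by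
    rw [← Finset.Ico_add_one_right_eq_Icc, Finset.sum_Ico_eq_sum_range]
    exact Finset.sum_congr rfl fun m _ => by
      rw [show 1 + m - 1 = m from by omega, show 1 + m = m + 1 from by omega]
  have hGam : ∀ m, m ≤ n → Gam l1 l2 (n+1) (m+1) =
      x l1 l2 ^ m * z l1 l2 ^ (n-m) * (Gamma1 l1 l2 - f l1 l2 0) +
      ∑ i ∈ Finset.range (m+1), ∑ j ∈ Finset.range (n-m+1),
        (m.choose i : ℝ) * ((n-m).choose j : ℝ) * w l1 l2 ^ i * x l1 l2 ^ (m-i) *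
          y l1 l2 ^ j * z l1 l2 ^ (n-m-j) * f l1 l2 (i+j) := by
    intro m hm
    have e1 : (n+1) - (m+1) = n - m := by omega
    rw [split0 m (fun i => ∑ j ∈ Finset.range (n-m+1),
      (m.choose i : ℝ) * ((n-m).choose j : ℝ) * w l1 l2 ^ i * x l1 l2 ^ (m-i) *
        y l1 l2 ^ j * z l1 l2 ^ (n-m-j) * f l1 l2 (i+j))]
    rw [split0 (n-m) (fun j => (m.choose 0 : ℝ) * ((n-m).choose j : ℝ) * w l1 l2 ^ 0
      * x l1 l2 ^ (m-0) * y l1 l2 ^ j * z l1 l2 ^ (n-m-j) * f l1 l2 (0+j))]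
    unfold Gam
    rw [e1]
    simp only [Nat.add_sub_cancel]
    have hS2 : ∑ i ∈ Finset.Icc 1 m, ∑ j ∈ Finset.range (n-m+1),
        (m.choose i : ℝ) * ((n-m).choose j : ℝ) * w l1 l2 ^ i
          * x l1 l2 ^ (m + 1 - i - 1) * y l1 l2 ^ j * z l1 l2 ^ (n-m-j) * f l1 l2 (i+j)
        = ∑ i ∈ Finset.Icc 1 m, ∑ j ∈ Finset.range (n-m+1),
        (m.choose i : ℝ) * ((n-m).choose j : ℝ) * w l1 l2 ^ i
          * x l1 l2 ^ (m-i) * y l1 l2 ^ j * z l1 l2 ^ (n-m-j) * f l1 l2 (i+j) := by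
      refine Finset.sum_congr rfl fun i _ => Finset.sum_congr rfl fun j _ => ?_
      rw [show m + 1 - i - 1 = m - i from by omega]
    have hS3 : ∑ j ∈ Finset.Icc 1 (n-m),
        ((n-m).choose j : ℝ) * x l1 l2 ^ m * y l1 l2 ^ j * z l1 l2 ^ (n-m-j) * f l1 l2 j
        = ∑ j ∈ Finset.Icc 1 (n-m), (m.choose 0 : ℝ) * ((n-m).choose j : ℝ) * w l1 l2 ^ 0
          * x l1 l2 ^ (m-0) * y l1 l2 ^ j * z l1 l2 ^ (n-m-j) * f l1 l2 (0+j) := by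
      refine Finset.sum_congr rfl fun j _ => ?_
      simp only [Nat.choose_zero_right, Nat.cast_one, pow_zero, Nat.sub_zero, Nat.zero_add]
      ring
    rw [hS2, hS3]
    simp only [Nat.choose_zero_right, Nat.cast_one, pow_zero, Nat.sub_zero, Nat.zero_add,
      Nat.add_zero, Nat.choose_zero_right]
    ring
  rw [step1]
  have hxz : x l1 l2 + z l1 l2 = 1 - l2 := by unfold x z; ring
  have hwy : w l1 l2 + y l1 l2 = l2 := by unfold w y; ring
  have hkey := key (w l1 l2) (x l1 l2) (y l1 l2) (z l1 l2) (f l1 l2) n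
  rw [hwy, hxz] at hkey
  have hbinom : ∑ m ∈ Finset.range (n+1), (n.choose m : ℝ)
        * (x l1 l2 ^ m * z l1 l2 ^ (n-m)) = (1 - l2)^n := by
    rw [← hxz, add_pow]
    exact Finset.sum_congr rfl fun m _ => by ring
  calc ∑ m ∈ Finset.range (n+1), (n.choose m : ℝ) * Gam l1 l2 (n+1) (m+1)
      = ∑ m ∈ Finset.range (n+1), ((n.choose m : ℝ) * (x l1 l2 ^ m * z l1 l2 ^ (n-m))
            * (Gamma1 l1 l2 - f l1 l2 0)
          + (n.choose m : ℝ) * ∑ i ∈ Finset.range (m+1), ∑ j ∈ Finset.range (n-m+1),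
            (m.choose i : ℝ) * ((n-m).choose j : ℝ) * w l1 l2 ^ i * x l1 l2 ^ (m-i) *
              y l1 l2 ^ j * z l1 l2 ^ (n-m-j) * f l1 l2 (i+j)) := by
        refine Finset.sum_congr rfl fun m hm => ?_
        rw [hGam m (Nat.lt_succ_iff.mp (Finset.mem_range.mp hm))]
        ring
    _ = (∑ m ∈ Finset.range (n+1), (n.choose m : ℝ) * (x l1 l2 ^ m * z l1 l2 ^ (n-m)))
            * (Gamma1 l1 l2 - f l1 l2 0)
        + ∑ m ∈ Finset.range (n+1), (n.choose m : ℝ)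
            * ∑ i ∈ Finset.range (m+1), ∑ j ∈ Finset.range (n-m+1),
            (m.choose i : ℝ) * ((n-m).choose j : ℝ) * w l1 l2 ^ i * x l1 l2 ^ (m-i) *
              y l1 l2 ^ j * z l1 l2 ^ (n-m-j) * f l1 l2 (i+j) := by
        rw [Finset.sum_add_distrib, Finset.sum_mul]
    _ = (1 - l2)^n * (Gamma1 l1 l2 - f l1 l2 0)
        + ∑ k ∈ Finset.range (n+1), (n.choose k : ℝ) * l2 ^ k * (1-l2)^(n-k) * f l1 l2 k := by
        rw [hbinom, hkey]
    _ = (1 - l2)^n * Gamma1 l1 l2 + ∑ j ∈ Finset.Icc 1 n,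
          (n.choose j : ℝ) * l2 ^ j * (1-l2)^(n-j) * f l1 l2 j := by
        rw [split0 n (fun k => (n.choose k : ℝ) * l2 ^ k * (1-l2)^(n-k) * f l1 l2 k)]
        simp only [Nat.choose_zero_right, Nat.cast_one, pow_zero, Nat.sub_zero]
        ring


end GeoGeo1ClosedForm
end

section
/- Let 0 < λ₁ < λ₂ < 1 and set w = λ₁λ₂, x = λ₁(1−λ₂), y = (1−λ₁)λ₂, z = (1−λ₁)(1−λ₂). Suppose V : {1,2,...} × {0,1,2,...} → ℝ is nonnegative, the family (V_{i,j}) is summable with total sum 1, and, writing Q_j = Σ_{i≥1} V_{i,j}, the stationary balance equations hold: V_{1,j} = w·Q_j + y·Q_{j+1} for all j ≥ 0; V_{i+1,0} = (1−λ₁)·V_{i,0} for all i ≥ 1; and V_{i+1,j} = x·V_{i,j−1} + z·V_{i,j} for all i ≥ 1 and j ≥ 1. Then Σ_{j≥0} V_{1,j} = λ₁. -/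
open scoped BigOperators

/-- The intermediate claim `A₁ = λ₁` in the proof of Theorem 1(i): in the
stationary distribution of the (Age of Actuation, queue length) Markov chain
for the Geo/Geo/1 queue with a controller, the stationary probability that the
Age of Actuation equals `1` is `λ₁`.  Here `V i j` denotes the stationary
probability of the state `(A, Q) = (i+1, j)` (the first index is shifted so
that age `i+1` corresponds to index `i`). -/
theorem AoA_eq_one_prob_geo_geo_1_controller
    (l1 l2 : ℝ) (hl1 : 0 < l1) (hl12 : l1 < l2) (hl2 : l2 < 1)
    (V : ℕ → ℕ → ℝ)
    (hnn : ∀ i j, 0 ≤ V i j)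
    (hsum : Summable fun p : ℕ × ℕ => V p.1 p.2)
    (htot : ∑' p : ℕ × ℕ, V p.1 p.2 = 1)
    (hbal1 : ∀ j : ℕ,
      V 0 j = (l1 * l2) * (∑' i : ℕ, V i j) + ((1 - l1) * l2) * (∑' i : ℕ, V i (j + 1)))
    (hbal0 : ∀ i : ℕ, V (i + 1) 0 = (1 - l1) * V i 0)
    (hbal : ∀ i j : ℕ,
      V (i + 1) (j + 1) = (l1 * (1 - l2)) * V i j + ((1 - l1) * (1 - l2)) * V i (j + 1)) :
    ∑' j : ℕ, V 0 j = l1 := by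
  have hl1' : l1 < 1 := hl12.trans hl2
  have hl2' : 0 < l2 := hl1.trans hl12
  have hy : 0 < (1 - l1) * l2 := mul_pos (by linarith) hl2'
  set Q : ℕ → ℝ := fun j => ∑' i : ℕ, V i j with hQdef
  have hcol : ∀ j, Summable fun i => V i j := fun j => hsum.prod_symm.prod_factor j
  have hcolsh : ∀ j, Summable fun i => V (i + 1) j := fun j =>
    (summable_nat_add_iff 1).2 (hcol j)
  have hQs : Summable Q := hsum.prod_symm.prod
  have hQtot : ∑' j, Q j = 1 := by
    have h1 : ∑' (j : ℕ) (i : ℕ), V i j = ∑' (i : ℕ) (j : ℕ), V i j := hsum.tsum_comm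
    have h2 : ∑' p : ℕ × ℕ, V p.1 p.2 = ∑' (i : ℕ) (j : ℕ), V i j := hsum.tsum_prod
    simpa [hQdef, h1, ← h2] using htot
  -- shift identity
  have hshift : ∀ j, Q j = V 0 j + ∑' i, V (i + 1) j := fun j => (hcol j).tsum_eq_zero_add
  -- V 0 0 = l1 * Q 0
  have h00 : V 0 0 = l1 * Q 0 := by
    have h := hshift 0
    have h2 : ∑' i, V (i + 1) 0 = (1 - l1) * Q 0 := by
      simp only [hbal0]; exact tsum_mul_left
    rw [h2] at h
    linarith
  -- recurrence for Q
  have hrec : ∀ j, Q (j + 1) = V 0 (j + 1) + (l1 * (1 - l2)) * Q j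
      + ((1 - l1) * (1 - l2)) * Q (j + 1) := by
    intro j
    have h := hshift (j + 1)
    have h2 : ∑' i, V (i + 1) (j + 1)
        = (l1 * (1 - l2)) * Q j + ((1 - l1) * (1 - l2)) * Q (j + 1) := by
      simp only [hbal]
      rw [Summable.tsum_add ((hcol j).mul_left _) ((hcol (j + 1)).mul_left _),
        tsum_mul_left, tsum_mul_left]
    rw [h2] at h
    linarith
  -- geometric relation: y * Q (j+1) = x * Q j
  have hgeo : ∀ j, ((1 - l1) * l2) * Q (j + 1) = (l1 * (1 - l2)) * Q j := by
    intro j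
    induction j with
    | zero =>
      have h := hbal1 0
      rw [h00] at h
      linear_combination -h
    | succ n ih =>
      have h := hrec n
      have hb := hbal1 (n + 1)
      rw [hb] at h
      linear_combination -h + ih
  set r : ℝ := (l1 * (1 - l2)) / ((1 - l1) * l2) with hrdef
  have hr0 : 0 ≤ r := div_nonneg (mul_pos hl1 (by linarith)).le hy.le
  have hr1 : r < 1 := by
    rw [hrdef, div_lt_one hy]; nlinarith
  have hgeo' : ∀ j, Q (j + 1) = r * Q j := by
    intro j
    have h := hgeo j
    rw [hrdef]
    field_simp
    rw [eq_div_iff (by linarith : (1:ℝ) - l1 ≠ 0)]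
    linear_combination h
  have hpow : ∀ j, Q j = r ^ j * Q 0 := by
    intro j
    induction j with
    | zero => simp
    | succ n ih => rw [hgeo' n, ih, pow_succ]; ring
  have hQ0 : Q 0 = 1 - r := by
    have h : ∑' j, Q j = (1 - r)⁻¹ * Q 0 := by
      calc ∑' j, Q j = ∑' j, r ^ j * Q 0 := by exact tsum_congr hpow
        _ = (∑' j, r ^ j) * Q 0 := tsum_mul_right
        _ = (1 - r)⁻¹ * Q 0 := by rw [tsum_geometric_of_lt_one hr0 hr1]
    rw [hQtot] at h
    have h1r : (1 : ℝ) - r ≠ 0 := by linarith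
    field_simp at h
    linarith
  -- sum of Q (j+1)
  have hQsh : Summable fun j => Q (j + 1) := (summable_nat_add_iff 1).2 hQs
  have hQ1tot : ∑' j, Q (j + 1) = r := by
    have h := hQs.tsum_eq_zero_add
    rw [hQtot, hQ0] at h
    linarith
  -- final computation
  have hfin : ∑' j, V 0 j = (l1 * l2) * (∑' j, Q j) + ((1 - l1) * l2) * (∑' j, Q (j + 1)) := by
    calc ∑' j, V 0 j = ∑' j, ((l1 * l2) * Q j + ((1 - l1) * l2) * Q (j + 1)) :=
          tsum_congr fun j => hbal1 j
      _ = _ := by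
          rw [Summable.tsum_add (hQs.mul_left _) (hQsh.mul_left _), tsum_mul_left, tsum_mul_left]
  rw [hfin, hQtot, hQ1tot, hrdef]
  have h1l : (1:ℝ) - l1 ≠ 0 := by linarith
  field_simp
  ring
end

section
/- Let 0 < λ₁ < 1 and 0 < λ₂ < 1, set x = λ₁(1−λ₂), y = (1−λ₁)λ₂, and T = (λ₂ − λ₁ + x)·λ₁·(1 − x/y). Define the sequence (A_i) by A₁ = λ₁ and A_{i+1} = T·(1−λ₁)^{i−1} + (1−λ₂)·A_i for all i ≥ 1. Then the series Σ_{i≥1} i·A_i converges and Σ_{i≥1} i·A_i = (1/(λ₁λ₂²) + 1/(λ₁²λ₂))·T + λ₁/λ₂² = 1/λ₁. -/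
open scoped BigOperators

/-- The series computation concluding the proof of Theorem 1(i): `A i` is the
stationary probability that the Age of Actuation equals `i` in the Geo/Geo/1
queue with a controller, satisfying `A₁ = λ₁` and
`A_{i+1} = T (1−λ₁)^{i−1} + (1−λ₂) A_i`; the weighted series converges and
gives the average Age of Actuation `1/λ₁`. -/
theorem avg_AoA_series_geo_geo_1_controller
    (l1 l2 : ℝ) (hl10 : 0 < l1) (hl11 : l1 < 1) (hl20 : 0 < l2) (hl21 : l2 < 1)
    (A : ℕ → ℝ)
    (hA1 : A 1 = l1)
    (hArec : ∀ i : ℕ, 1 ≤ i →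
      A (i + 1) = ((l2 - l1 + l1 * (1 - l2)) * l1
          * (1 - (l1 * (1 - l2)) / ((1 - l1) * l2))) * (1 - l1) ^ (i - 1)
        + (1 - l2) * A i) :
    Summable (fun i : ℕ => (i : ℝ) * A i) ∧
      ∑' i : ℕ, (i : ℝ) * A i =
        (1 / (l1 * l2 ^ 2) + 1 / (l1 ^ 2 * l2))
          * ((l2 - l1 + l1 * (1 - l2)) * l1 * (1 - (l1 * (1 - l2)) / ((1 - l1) * l2)))
          + l1 / l2 ^ 2 ∧
      (1 / (l1 * l2 ^ 2) + 1 / (l1 ^ 2 * l2))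
          * ((l2 - l1 + l1 * (1 - l2)) * l1 * (1 - (l1 * (1 - l2)) / ((1 - l1) * l2)))
          + l1 / l2 ^ 2 = 1 / l1 := by
  have hl1ne : l1 ≠ 0 := hl10.ne'
  have hl2ne : l2 ≠ 0 := hl20.ne'
  have h1l1 : (1 : ℝ) - l1 ≠ 0 := by linarith
  -- T simplifies to l1 * (l2 - l1)
  have hT : (l2 - l1 + l1 * (1 - l2)) * l1 * (1 - (l1 * (1 - l2)) / ((1 - l1) * l2))
      = l1 * (l2 - l1) := by
    field_simp
    ring
  -- closed form for A
  have hA : ∀ i : ℕ, 1 ≤ i → A i = l1 * (1 - l1) ^ (i - 1) := by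
    intro i hi
    induction i, hi using Nat.le_induction with
    | base => simpa using hA1
    | succ n hn ih =>
      rw [hArec n hn, ih, hT]
      have h : n + 1 - 1 = (n - 1) + 1 := by omega
      rw [h, pow_succ]
      ring
  set r : ℝ := 1 - l1 with hr
  have hr0 : 0 ≤ r := by simp [hr]; linarith
  have hr1 : r < 1 := by simp [hr]; linarith
  have hrn : ‖r‖ < 1 := by rw [Real.norm_eq_abs, abs_of_nonneg hr0]; exact hr1
  -- pointwise identity
  have hfun : (fun i : ℕ => (i : ℝ) * A i) = fun i : ℕ => (i : ℝ) * (l1 * r ^ (i - 1)) := by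
    funext i
    rcases Nat.eq_zero_or_pos i with h | h
    · simp [h]
    · rw [hA i h]
  have h1 : Summable (fun n : ℕ => (n : ℝ) * r ^ n) := by
    have := summable_pow_mul_geometric_of_norm_lt_one 1 hrn (R := ℝ)
    simpa using this
  have h2 : Summable (fun n : ℕ => r ^ n) := summable_geometric_of_lt_one hr0 hr1
  have hshift : Summable (fun n : ℕ => ((n : ℝ) + 1) * (l1 * r ^ n)) := by
    have := ((h1.mul_left l1).add (h2.mul_left l1))
    exact this.congr (fun n => by ring)
  have hsum : Summable (fun i : ℕ => (i : ℝ) * (l1 * r ^ (i - 1))) := by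
    rw [← summable_nat_add_iff 1]
    exact hshift.congr (fun n => by push_cast; simp)
  have hsum' : Summable (fun i : ℕ => (i : ℝ) * A i) := by rw [hfun]; exact hsum
  refine ⟨hsum', ?_, ?_⟩
  · -- compute the tsum
    have ht1 : ∑' n : ℕ, (n : ℝ) * r ^ n = r / (1 - r) ^ 2 :=
      tsum_coe_mul_geometric_of_norm_lt_one hrn
    have ht2 : ∑' n : ℕ, r ^ n = (1 - r)⁻¹ := tsum_geometric_of_lt_one hr0 hr1
    have key : ∑' i : ℕ, (i : ℝ) * A i = l1 * (r / (1 - r) ^ 2) + l1 * (1 - r)⁻¹ := by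
      rw [hfun, Summable.tsum_eq_zero_add hsum]
      simp only [Nat.cast_zero, zero_mul, zero_add]
      have : ∀ n : ℕ, ((n : ℝ) + 1) * (l1 * r ^ (n + 1 - 1))
          = l1 * ((n : ℝ) * r ^ n) + l1 * r ^ n := by
        intro n; simp; ring
      calc ∑' n : ℕ, ((n + 1 : ℕ) : ℝ) * (l1 * r ^ (n + 1 - 1))
          = ∑' n : ℕ, (l1 * ((n : ℝ) * r ^ n) + l1 * r ^ n) := by
            refine tsum_congr fun n => ?_
            push_cast
            exact this n
        _ = l1 * (∑' n : ℕ, (n : ℝ) * r ^ n) + l1 * (∑' n : ℕ, r ^ n) := by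
            rw [Summable.tsum_add (h1.mul_left l1) (h2.mul_left l1), tsum_mul_left, tsum_mul_left]
        _ = l1 * (r / (1 - r) ^ 2) + l1 * (1 - r)⁻¹ := by rw [ht1, ht2]
    rw [key, hT, hr]
    have : (1 : ℝ) - (1 - l1) = l1 := by ring
    rw [this]
    field_simp
    ring
  · rw [hT]
    field_simp
    ring
end

section
/- Let 0 < λ₁ < 1 and 0 < λ₂ < 1 and set x = λ₁(1−λ₂), y = (1−λ₁)λ₂, z = (1−λ₁)(1−λ₂). Suppose V assigns nonnegative reals to states (i,q,b) with i ≥ 1 and (q,b) ∈ {(0,0),(0,1),(1,0)}, the family (V_{i,q,b}) is summable with total sum 1, V_{1,1,0} = 0, and, writing Δ_{q,b} = Σ_{i≥1} V_{i,q,b}, the stationary balance equations hold: V_{1,0,0} = λ₁λ₂·Δ_{0,0} + λ₁(1−λ₂)·Δ_{0,1} + λ₂·Δ_{1,0}; V_{1,0,1} = λ₁λ₂·Δ_{0,1}; V_{i+1,0,0} = z·V_{i,0,0}; V_{i+1,0,1} = y·V_{i,0,0} + (1−λ₁)·V_{i,0,1}; and V_{i+1,1,0} = x·V_{i,0,0}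 + (1−λ₂)·V_{i,1,0}, all for i ≥ 1. Then V_{1,0,0} = λ₁(1−(1−λ₁)(1−λ₂))(1−λ₂)λ₂ / ((1−λ₁)λ₂³ + λ₁λ₂(1−λ₂) + (1−λ₁)(1−λ₂)λ₂² + λ₁²(1−λ₂)²) and V_{1,0,1} = λ₁(1−λ₁)λ₂³ / ((1−λ₁)λ₂³ + λ₁λ₂(1−λ₂) + (1−λ₁)(1−λ₂)λ₂² + λ₁²(1−λ₂)²). -/
open scoped BigOperators

/-- The intermediate computation in the proof of Theorem 1(iii) identifying the
stationary probabilities of the states `(A, Q, B) = (1, 0, 0)` and `(1, 0, 1)`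
for the Geo/Geo/1/1 queue with a size-one battery.  Here `V00 i`, `V01 i`,
`V10 i` denote the stationary probabilities of the states
`(A, Q, B) = (i+1, 0, 0)`, `(i+1, 0, 1)`, `(i+1, 1, 0)` respectively; the state
`(1,1,0)` is infeasible. -/
theorem stationary_V100_V101_geo_geo_1_1_battery
    (l1 l2 : ℝ) (hl10 : 0 < l1) (hl11 : l1 < 1) (hl20 : 0 < l2) (hl21 : l2 < 1)
    (V00 V01 V10 : ℕ → ℝ)
    (hnn00 : ∀ i, 0 ≤ V00 i) (hnn01 : ∀ i, 0 ≤ V01 i) (hnn10 : ∀ i, 0 ≤ V10 i)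
    (hs00 : Summable V00) (hs01 : Summable V01) (hs10 : Summable V10)
    (htot : (∑' i : ℕ, V00 i) + (∑' i : ℕ, V01 i) + (∑' i : ℕ, V10 i) = 1)
    (hfeas : V10 0 = 0)
    (hbal00 : V00 0 = l1 * l2 * (∑' i : ℕ, V00 i) + l1 * (1 - l2) * (∑' i : ℕ, V01 i)
        + l2 * (∑' i : ℕ, V10 i))
    (hbal01 : V01 0 = l1 * l2 * (∑' i : ℕ, V01 i))
    (hrec00 : ∀ i : ℕ, V00 (i + 1) = ((1 - l1) * (1 - l2)) * V00 i)
    (hrec01 : ∀ i : ℕ, V01 (i + 1) = ((1 - l1) * l2) * V00 i + (1 - l1) * V01 i)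
    (hrec10 : ∀ i : ℕ, V10 (i + 1) = (l1 * (1 - l2)) * V00 i + (1 - l2) * V10 i) :
    V00 0 = l1 * (1 - (1 - l1) * (1 - l2)) * (1 - l2) * l2 /
        ((1 - l1) * l2 ^ 3 + l1 * l2 * (1 - l2) + (1 - l1) * (1 - l2) * l2 ^ 2
          + l1 ^ 2 * (1 - l2) ^ 2) ∧
    V01 0 = l1 * (1 - l1) * l2 ^ 3 /
        ((1 - l1) * l2 ^ 3 + l1 * l2 * (1 - l2) + (1 - l1) * (1 - l2) * l2 ^ 2
          + l1 ^ 2 * (1 - l2) ^ 2) := by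
  have h1' : (0:ℝ) < 1 - l1 := by linarith
  have h2' : (0:ℝ) < 1 - l2 := by linarith
  have t00 : ∑' n : ℕ, V00 (n + 1) = ((1 - l1) * (1 - l2)) * ∑' n : ℕ, V00 n := by
    simp only [hrec00]; exact tsum_mul_left
  have t01 : ∑' n : ℕ, V01 (n + 1)
      = ((1 - l1) * l2) * (∑' n : ℕ, V00 n) + (1 - l1) * ∑' n : ℕ, V01 n := by
    simp only [hrec01]
    rw [Summable.tsum_add (hs00.mul_left ((1 - l1) * l2)) (hs01.mul_left (1 - l1)),
      tsum_mul_left, tsum_mul_left]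
  have t10 : ∑' n : ℕ, V10 (n + 1)
      = (l1 * (1 - l2)) * (∑' n : ℕ, V00 n) + (1 - l2) * ∑' n : ℕ, V10 n := by
    simp only [hrec10]
    rw [Summable.tsum_add (hs00.mul_left (l1 * (1 - l2))) (hs10.mul_left (1 - l2)),
      tsum_mul_left, tsum_mul_left]
  have e1 : (∑' i : ℕ, V00 i) = V00 0 + ((1 - l1) * (1 - l2)) * ∑' i : ℕ, V00 i := by
    conv_lhs => rw [Summable.tsum_eq_zero_add hs00, t00]
  have e2 : (∑' i : ℕ, V01 i) = V01 0 + (((1 - l1) * l2) * (∑' i : ℕ, V00 i)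
      + (1 - l1) * ∑' i : ℕ, V01 i) := by
    conv_lhs => rw [Summable.tsum_eq_zero_add hs01, t01]
  have e3 : (∑' i : ℕ, V10 i) = (l1 * (1 - l2)) * (∑' i : ℕ, V00 i)
      + (1 - l2) * ∑' i : ℕ, V10 i := by
    conv_lhs => rw [Summable.tsum_eq_zero_add hs10, t10]
    rw [hfeas, zero_add]
  have h01 : l1 * (1 - l2) * (∑' i : ℕ, V01 i) = (1 - l1) * l2 * ∑' i : ℕ, V00 i := by
    linear_combination e2 + hbal01
  have hD : (0:ℝ) < (1 - l1) * l2 ^ 3 + l1 * l2 * (1 - l2) + (1 - l1) * (1 - l2) * l2 ^ 2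
      + l1 ^ 2 * (1 - l2) ^ 2 := by
    have t1 := mul_pos h1' (pow_pos hl20 3)
    have t2 := mul_pos (mul_pos hl10 hl20) h2'
    have t3 := mul_pos (mul_pos h1' h2') (pow_pos hl20 2)
    have t4 := mul_pos (pow_pos hl10 2) (pow_pos h2' 2)
    linarith
  have hS00v : ((1 - l1) * l2 ^ 3 + l1 * l2 * (1 - l2) + (1 - l1) * (1 - l2) * l2 ^ 2
      + l1 ^ 2 * (1 - l2) ^ 2) * (∑' i : ℕ, V00 i) = l1 * (1 - l2) * l2 := by
    linear_combination l1 * (1 - l2) * l2 * htot - l2 * h01 - l1 * (1 - l2) * e3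
  constructor
  · rw [eq_div_iff hD.ne']
    linear_combination (-((1 - l1) * l2 ^ 3 + l1 * l2 * (1 - l2) + (1 - l1) * (1 - l2) * l2 ^ 2
      + l1 ^ 2 * (1 - l2) ^ 2)) * e1 + (l1 + l2 - l1 * l2) * hS00v
  · rw [eq_div_iff hD.ne']
    have key : (1 - l2) * (V01 0 * ((1 - l1) * l2 ^ 3 + l1 * l2 * (1 - l2)
        + (1 - l1) * (1 - l2) * l2 ^ 2 + l1 ^ 2 * (1 - l2) ^ 2))
        = (1 - l2) * (l1 * (1 - l1) * l2 ^ 3) := by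
      linear_combination ((1 - l2) * ((1 - l1) * l2 ^ 3 + l1 * l2 * (1 - l2)
        + (1 - l1) * (1 - l2) * l2 ^ 2 + l1 ^ 2 * (1 - l2) ^ 2)) * hbal01
        + (((1 - l1) * l2 ^ 3 + l1 * l2 * (1 - l2) + (1 - l1) * (1 - l2) * l2 ^ 2
          + l1 ^ 2 * (1 - l2) ^ 2) * l2) * h01 + ((1 - l1) * l2 ^ 2) * hS00v
    exact mul_left_cancel₀ h2'.ne' key
end

section
/- Let 0 < λ₁ < 1 and 0 < λ₂ < 1 and set z = (1−λ₁)(1−λ₂). Suppose V assigns nonnegative reals to states (ai,i,0) with ai ≥ i ≥ 1 and states (ai,ai,1) with ai ≥ 1, the family is summable with total sum 1, and, writing B₁ = Σ_{i≥1} V_{i,i,1} and B₀ = 1 − B₁, the stationary balance equations hold: V_{1,1,0} = λ₁λ₂·B₀ + λ₁(1−λ₂)·B₁; V_{1,1,1} = λ₁λ₂·B₁; V_{ai,1,0} = λ₁(1−λ₂)·Σ_{I=1}^{ai−1} V_{ai−1,I,0} for ai ≥ 2; V_{ai,i,0} = z·V_{ai−1,i−1,0} for ai > i ≥ 2; V_{ai,ai,0}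 = z·V_{ai−1,ai−1,0} + (1−λ₁)λ₂·Σ_{k=ai}^{∞} V_{k,ai−1,0} for ai ≥ 2; and V_{ai,ai,1} = (1−λ₁)λ₂·V_{ai−1,ai−1,0} + (1−λ₁)·V_{ai−1,ai−1,1} for ai ≥ 2. Then V_{1,1,0} = λ₁(λ₁²(1−λ₂) + λ₂)(1−λ₂)λ₂ / (λ₁²(1−λ₂)² + λ₂² + λ₁λ₂(1 − 2λ₂)) and V_{1,1,1} = (1−λ₁)λ₁λ₂³ / (λ₁²(1−λ₂)² + λ₂² + λ₁λ₂(1 − 2λ₂)). -/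
open scoped BigOperators

/-- The intermediate computation in the proof of Theorem 2(iii) identifying the
stationary probabilities of the states `(AI, I, B) = (1, 1, 0)` and `(1, 1, 1)`
for the Geo/Geo/1/1 queue with a size-one battery.  Here `V0 ai i` denotes the
stationary probability of the state `(AI, I, B) = (ai, i, 0)` (zero unless
`1 ≤ i ≤ ai`) and `V1 ai` that of the state `(ai, ai, 1)` (zero unless
`1 ≤ ai`). -/
theorem stationary_V110_V111_geo_geo_1_1_battery
    (l1 l2 : ℝ) (hl10 : 0 < l1) (hl11 : l1 < 1) (hl20 : 0 < l2) (hl21 : l2 < 1)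
    (V0 : ℕ → ℕ → ℝ) (V1 : ℕ → ℝ)
    (hnn0 : ∀ ai i, 0 ≤ V0 ai i) (hnn1 : ∀ ai, 0 ≤ V1 ai)
    (hdom0 : ∀ ai i, ¬(1 ≤ i ∧ i ≤ ai) → V0 ai i = 0)
    (hdom1 : V1 0 = 0)
    (hs0 : Summable fun p : ℕ × ℕ => V0 p.1 p.2) (hs1 : Summable V1)
    (htot : (∑' p : ℕ × ℕ, V0 p.1 p.2) + (∑' ai : ℕ, V1 ai) = 1)
    (hinit0 : V0 1 1 = l1 * l2 * (1 - ∑' ai : ℕ, V1 ai)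
        + l1 * (1 - l2) * (∑' ai : ℕ, V1 ai))
    (hinit1 : V1 1 = l1 * l2 * (∑' ai : ℕ, V1 ai))
    (hcol1 : ∀ ai : ℕ, 1 ≤ ai →
      V0 (ai + 1) 1 = l1 * (1 - l2) * ∑ I ∈ Finset.Icc 1 ai, V0 ai I)
    (hmid : ∀ ai i : ℕ, 1 ≤ i → i < ai →
      V0 (ai + 1) (i + 1) = ((1 - l1) * (1 - l2)) * V0 ai i)
    (hdiag0 : ∀ ai : ℕ, 1 ≤ ai →
      V0 (ai + 1) (ai + 1) = ((1 - l1) * (1 - l2)) * V0 ai ai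
        + (1 - l1) * l2 * ∑' k : ℕ, V0 (ai + 1 + k) ai)
    (hdiag1 : ∀ ai : ℕ, 1 ≤ ai →
      V1 (ai + 1) = (1 - l1) * l2 * V0 ai ai + (1 - l1) * V1 ai) :
    V0 1 1 = l1 * (l1 ^ 2 * (1 - l2) + l2) * (1 - l2) * l2 /
        (l1 ^ 2 * (1 - l2) ^ 2 + l2 ^ 2 + l1 * l2 * (1 - 2 * l2)) ∧
    V1 1 = (1 - l1) * l1 * l2 ^ 3 /
        (l1 ^ 2 * (1 - l2) ^ 2 + l2 ^ 2 + l1 * l2 * (1 - 2 * l2)) := by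
  classical
  set B := ∑' ai : ℕ, V1 ai with hBdef
  set S := ∑' p : ℕ × ℕ, V0 p.1 p.2 with hSdef
  set D := ∑' n : ℕ, V0 n n with hDdef
  set U := ∑' p : ℕ × ℕ, V0 (p.1 + 2 + p.2) (p.1 + 1) with hUdef
  -- summability facts
  have hsDiag : Summable (fun n : ℕ => V0 n n) :=
    hs0.comp_injective (i := fun n : ℕ => ((n, n) : ℕ × ℕ))
      (fun a b h => by simpa using congrArg Prod.fst h)
  have hsDsh : Summable (fun n : ℕ => V0 (n + 1) (n + 1)) :=
    hs0.comp_injective (i := fun n : ℕ => ((n + 1, n + 1) : ℕ × ℕ))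
      (fun a b h => by simpa using congrArg Prod.fst h)
  have hsU : Summable (fun p : ℕ × ℕ => V0 (p.1 + 2 + p.2) (p.1 + 1)) :=
    hs0.comp_injective (i := fun p : ℕ × ℕ => ((p.1 + 2 + p.2, p.1 + 1) : ℕ × ℕ))
      (by intro p q h; simp only [Prod.mk.injEq] at h
          exact Prod.ext_iff.mpr ⟨by omega, by omega⟩)
  -- row sums
  have hrow : ∀ m : ℕ, (∑' i : ℕ, V0 m i) = ∑ I ∈ Finset.Icc 1 m, V0 m I := by
    intro m
    refine tsum_eq_sum fun i hi => hdom0 m i ?_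
    simpa using hi
  have hSrow : S = ∑' m : ℕ, ∑ I ∈ Finset.Icc 1 m, V0 m I := by
    rw [hSdef, Summable.tsum_prod hs0]
    exact tsum_congr fun m => hrow m
  have hT : Summable (fun m : ℕ => ∑ I ∈ Finset.Icc 1 m, V0 m I) :=
    hs0.prod.congr fun m => hrow m
  have hSsh : (∑' n : ℕ, ∑ I ∈ Finset.Icc 1 (n + 1), V0 (n + 1) I) = S := by
    have h0 : (∑ I ∈ Finset.Icc 1 0, V0 0 I) = 0 := by
      rw [Finset.Icc_eq_empty (by omega)]; exact Finset.sum_empty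
    rw [hSrow, Summable.tsum_eq_zero_add hT, h0, zero_add]
  -- split S into diagonal and strictly-off-diagonal parts
  have hDs : (∑' x : {p : ℕ × ℕ | p.1 = p.2}, V0 (x : ℕ × ℕ).1 (x : ℕ × ℕ).2) = D := by
    rw [hDdef]
    refine (Equiv.tsum_eq ((⟨fun n => ⟨(n, n), rfl⟩, fun x => (x : ℕ × ℕ).1,
        fun n => rfl, ?_⟩ : ℕ ≃ {p : ℕ × ℕ | p.1 = p.2}))
      (fun x : {p : ℕ × ℕ | p.1 = p.2} => V0 (x : ℕ × ℕ).1 (x : ℕ × ℕ).2)).symm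
    rintro ⟨⟨a, b⟩, h⟩
    have hb : a = b := h
    subst hb
    rfl
  have hUs : (∑' x : ↑({p : ℕ × ℕ | p.1 = p.2}ᶜ), V0 (x : ℕ × ℕ).1 (x : ℕ × ℕ).2) = U := by
    rw [hUdef]
    refine tsum_eq_tsum_of_ne_zero_bij
      (fun x => ⟨((x : ℕ × ℕ).1 + 2 + (x : ℕ × ℕ).2, (x : ℕ × ℕ).1 + 1), by
        simp only [Set.mem_compl_iff, Set.mem_setOf_eq]; omega⟩) ?_ ?_ ?_
    · intro x y h
      have h1 := congrArg (fun z : ↑({p : ℕ × ℕ | p.1 = p.2}ᶜ) => (z : ℕ × ℕ).1) h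
      have h2 := congrArg (fun z : ↑({p : ℕ × ℕ | p.1 = p.2}ᶜ) => (z : ℕ × ℕ).2) h
      simp only at h1 h2
      exact Subtype.ext (Prod.ext_iff.mpr ⟨by omega, by omega⟩)
    · rintro ⟨⟨a, b⟩, hab⟩ hx
      simp only [Function.mem_support, Set.mem_compl_iff, Set.mem_setOf_eq] at hx hab
      have hd : 1 ≤ b ∧ b ≤ a := by
        by_contra hc
        exact hx (hdom0 a b hc)
      have hba : b < a := by omega
      refine ⟨⟨(b - 1, a - b - 1), ?_⟩, ?_⟩
      · simp only [Function.mem_support]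
        rw [show b - 1 + 2 + (a - b - 1) = a by omega, show b - 1 + 1 = b by omega]
        exact hx
      · apply Subtype.ext
        show ((b - 1 + 2 + (a - b - 1), b - 1 + 1) : ℕ × ℕ) = (a, b)
        rw [Prod.mk.injEq]
        exact ⟨by omega, by omega⟩
    · intro x; rfl
  have hsplit : D + U = S := by
    rw [← hDs, ← hUs, hSdef]
    exact Summable.tsum_add_tsum_compl (hs0.subtype _) (hs0.subtype _)
  -- the off-diagonal sum equation
  have hUprod : U = ∑' j : ℕ, ∑' k : ℕ, V0 (j + 2 + k) (j + 1) := by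
    rw [hUdef]; exact Summable.tsum_prod hsU
  have houter : Summable (fun j : ℕ => ∑' k : ℕ, V0 (j + 2 + k) (j + 1)) :=
    hsU.prod
  have hC1 : (∑' k : ℕ, V0 (0 + 2 + k) (0 + 1)) = l1 * (1 - l2) * S := by
    have hpt : ∀ k : ℕ, V0 (0 + 2 + k) (0 + 1)
        = l1 * (1 - l2) * ∑ I ∈ Finset.Icc 1 (k + 1), V0 (k + 1) I := by
      intro k
      rw [show 0 + 2 + k = k + 1 + 1 by omega, show 0 + 1 = 1 by omega]
      exact hcol1 (k + 1) (by omega)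
    rw [tsum_congr hpt, tsum_mul_left, hSsh]
  have hW : (∑' j : ℕ, ∑' k : ℕ, V0 (j + 1 + 2 + k) (j + 1 + 1))
      = (1 - l1) * (1 - l2) * U := by
    have hpt : ∀ j k : ℕ, V0 (j + 1 + 2 + k) (j + 1 + 1)
        = (1 - l1) * (1 - l2) * V0 (j + 2 + k) (j + 1) := by
      intro j k
      rw [show j + 1 + 2 + k = j + 2 + k + 1 by omega]
      exact hmid (j + 2 + k) (j + 1) (by omega) (by omega)
    calc (∑' j : ℕ, ∑' k : ℕ, V0 (j + 1 + 2 + k) (j + 1 + 1))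
        = ∑' j : ℕ, (1 - l1) * (1 - l2) * ∑' k : ℕ, V0 (j + 2 + k) (j + 1) := by
          refine tsum_congr fun j => ?_
          rw [tsum_congr (hpt j), tsum_mul_left]
      _ = (1 - l1) * (1 - l2) * ∑' j : ℕ, ∑' k : ℕ, V0 (j + 2 + k) (j + 1) := tsum_mul_left
      _ = (1 - l1) * (1 - l2) * U := by rw [← hUprod]
  have e2 : U = l1 * (1 - l2) * S + (1 - l1) * (1 - l2) * U := by
    calc U = (∑' k : ℕ, V0 (0 + 2 + k) (0 + 1))
          + ∑' j : ℕ, ∑' k : ℕ, V0 (j + 1 + 2 + k) (j + 1 + 1) := by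
          rw [hUprod, Summable.tsum_eq_zero_add houter]
      _ = l1 * (1 - l2) * S + (1 - l1) * (1 - l2) * U := by rw [hC1, hW]
  -- the battery equation
  have hsV1s : Summable (fun n : ℕ => V1 (n + 1)) := (summable_nat_add_iff 1).mpr hs1
  have hDsh : (∑' n : ℕ, V0 (n + 1) (n + 1)) = D := by
    rw [hDdef, Summable.tsum_eq_zero_add hsDiag, hdom0 0 0 (by omega), zero_add]
  have h1 : (∑' n : ℕ, V1 (n + 1)) = B := by
    rw [hBdef, Summable.tsum_eq_zero_add hs1, hdom1, zero_add]
  have h2 : (∑' n : ℕ, V1 (n + 1)) = V1 1 + ∑' n : ℕ, V1 (n + 2) :=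
    Summable.tsum_eq_zero_add hsV1s
  have h3 : ∀ n : ℕ, V1 (n + 2)
      = (1 - l1) * l2 * V0 (n + 1) (n + 1) + (1 - l1) * V1 (n + 1) :=
    fun n => hdiag1 (n + 1) (by omega)
  have h4 : (∑' n : ℕ, V1 (n + 2)) = (1 - l1) * l2 * D + (1 - l1) * B := by
    rw [tsum_congr h3, Summable.tsum_add (hsDsh.mul_left _) (hsV1s.mul_left _),
      tsum_mul_left, tsum_mul_left, hDsh, h1]
  have e3 : B = V1 1 + ((1 - l1) * l2 * D + (1 - l1) * B) := by
    calc B = V1 1 + ∑' n : ℕ, V1 (n + 2) := h1.symm.trans h2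
      _ = V1 1 + ((1 - l1) * l2 * D + (1 - l1) * B) := by rw [h4]
  -- algebra
  have hg : (0 : ℝ) < l1 + l2 - l1 * l2 := by nlinarith
  have hΔ : (0 : ℝ) < l1 ^ 2 * (1 - l2) ^ 2 + l2 ^ 2 + l1 * l2 * (1 - 2 * l2) := by
    nlinarith [mul_pos (mul_pos hl10 (sub_pos.mpr hl21)) hg,
      mul_pos (sub_pos.mpr hl11) (mul_pos hl20 hl20)]
  have hΔne : (l1 ^ 2 * (1 - l2) ^ 2 + l2 ^ 2 + l1 * l2 * (1 - 2 * l2)) ≠ 0 := ne_of_gt hΔ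
  have hU' : U * (l1 + l2 - l1 * l2) = l1 * (1 - l2) * S := by linear_combination e2
  have hD' : D * (l1 + l2 - l1 * l2) = l2 * S := by
    linear_combination (l1 + l2 - l1 * l2) * hsplit - hU'
  have hE3 : l1 * (1 - l2) * B * (l1 + l2 - l1 * l2) = (1 - l1) * l2 * l2 * S := by
    linear_combination (l1 + l2 - l1 * l2) * e3 + (l1 + l2 - l1 * l2) * hinit1
      + (1 - l1) * l2 * hD'
  have hS' : S * (l1 ^ 2 * (1 - l2) ^ 2 + l2 ^ 2 + l1 * l2 * (1 - 2 * l2))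
      = l1 * (1 - l2) * (l1 + l2 - l1 * l2) := by
    linear_combination (-1 : ℝ) * hE3 + l1 * (1 - l2) * (l1 + l2 - l1 * l2) * htot
  have hB' : B * (l1 ^ 2 * (1 - l2) ^ 2 + l2 ^ 2 + l1 * l2 * (1 - 2 * l2))
      = (1 - l1) * l2 ^ 2 := by
    linear_combination (l1 ^ 2 * (1 - l2) ^ 2 + l2 ^ 2 + l1 * l2 * (1 - 2 * l2)) * htot - hS'
  constructor
  · rw [hinit0, eq_div_iff hΔne]
    linear_combination l1 * l2 * hS' + l1 * (1 - l2) * hB'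
      - l1 * l2 * (l1 ^ 2 * (1 - l2) ^ 2 + l2 ^ 2 + l1 * l2 * (1 - 2 * l2)) * htot
  · rw [hinit1, eq_div_iff hΔne]
    linear_combination l1 * l2 * hB'
end

section
/- Let 0 < λ₁ < 1 and 0 < λ₂ < 1 and set z = (1−λ₁)(1−λ₂). Suppose V assigns nonnegative reals to states (ai,i) with ai ≥ i ≥ 1, the family (V_{ai,i}) is summable with total sum 1, the family (ai·V_{ai,i}) is summable, and the stationary balance equations hold: V_{1,1} = λ₁λ₂; V_{ai+1,1} = λ₁(1−λ₂)·Σ_{j=1}^{ai} V_{ai,j} for all ai ≥ 1; V_{ai+1,ai+1} = (1−λ₁)·V_{ai,ai} + (1−λ₁)λ₂·Σ_{k=ai+1}^{∞} V_{k,ai} for all ai ≥ 1; and V_{ai+1,i+1} = (1−λ₁)(1−λ₂)·V_{ai,i} for all ai > i ≥ 1. Then Σ_{ai≥1} Σ_{i=1}^{ai} ai·V_{ai,i} = Σ_{i≥1} i·V_{i,i} + Σ_{i≥2} ((i−1)/(1−z) + 1/(1−z)²)·V_{i,1}. -/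
open scoped BigOperators

/-- Equation (45) in the proof of Theorem 2(ii): the average Age of Actuated
Information for the Geo/Geo/1/1 queue with a controller reduces to a sum over
the diagonal states `(i, i)` and the states `(i, 1)` with `i ≥ 2`.  Here
`V ai i` denotes the stationary probability of the state `(AI, I) = (ai, i)`,
which is zero unless `1 ≤ i ≤ ai`, and `z = (1−λ₁)(1−λ₂)`. -/
theorem avg_AoAI_representation_geo_geo_1_1_controller
    (l1 l2 : ℝ) (hl10 : 0 < l1) (hl11 : l1 < 1) (hl20 : 0 < l2) (hl21 : l2 < 1)
    (V : ℕ → ℕ → ℝ)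
    (hnn : ∀ ai i, 0 ≤ V ai i)
    (hdom : ∀ ai i, ¬(1 ≤ i ∧ i ≤ ai) → V ai i = 0)
    (hsum : Summable fun p : ℕ × ℕ => V p.1 p.2)
    (htot : ∑' p : ℕ × ℕ, V p.1 p.2 = 1)
    (hwsum : Summable fun p : ℕ × ℕ => (p.1 : ℝ) * V p.1 p.2)
    (hinit : V 1 1 = l1 * l2)
    (hcol1 : ∀ ai : ℕ, 1 ≤ ai →
      V (ai + 1) 1 = l1 * (1 - l2) * ∑ j ∈ Finset.Icc 1 ai, V ai j)
    (hdiag : ∀ ai : ℕ, 1 ≤ ai →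
      V (ai + 1) (ai + 1) = (1 - l1) * V ai ai + (1 - l1) * l2 * ∑' k : ℕ, V (ai + 1 + k) ai)
    (hmid : ∀ ai i : ℕ, 1 ≤ i → i < ai →
      V (ai + 1) (i + 1) = (1 - l1) * (1 - l2) * V ai i) :
    ∑' p : ℕ × ℕ, (p.1 : ℝ) * V p.1 p.2 =
      (∑' i : ℕ, (i : ℝ) * V i i) +
        ∑' k : ℕ, (((k : ℝ) + 1) / (1 - (1 - l1) * (1 - l2))
          + 1 / (1 - (1 - l1) * (1 - l2)) ^ 2) * V (k + 2) 1 := by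
  classical
  set z : ℝ := (1 - l1) * (1 - l2) with hzdef
  have hz0 : 0 < z := mul_pos (by linarith) (by linarith)
  have hz1 : z < 1 := by
    have : (1 - l1) * (1 - l2) < 1 * 1 := by
      apply mul_lt_mul' (by linarith) (by linarith) (by linarith) (by linarith)
    simpa [hzdef] using this
  have h1z : 0 < 1 - z := by linarith
  -- off-diagonal propagation formula
  have hV : ∀ k j : ℕ, V (k + j + 2) (j + 1) = z ^ j * V (k + 2) 1 := by
    intro k j
    induction j with
    | zero => simp
    | succ n ih =>
      have h := hmid (k + n + 2) (n + 1) (by omega) (by omega)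
      have e1 : k + (n + 1) + 2 = k + n + 2 + 1 := by omega
      rw [e1, h, ih, pow_succ]
      ring
  -- the summand, split into diagonal and off-diagonal parts
  set f : ℕ × ℕ → ℝ := fun p => (p.1 : ℝ) * V p.1 p.2 with hfdef
  set fd : ℕ × ℕ → ℝ := fun p => if p.1 = p.2 then f p else 0 with hfddef
  set fo : ℕ × ℕ → ℝ := fun p => if p.1 = p.2 then 0 else f p with hfodef
  have hfnn : ∀ p, 0 ≤ f p := fun p => mul_nonneg (Nat.cast_nonneg _) (hnn _ _)
  have hfd_sum : Summable fd := by
    apply hwsum.of_nonneg_of_le (fun p => by by_cases h : p.1 = p.2 <;> simp [hfddef, h, hfnn p])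
    intro p
    by_cases h : p.1 = p.2 <;> simp [hfddef, h, hfnn p]
  have hfo_sum : Summable fo := by
    have : fo = fun p => f p - fd p := by
      funext p; by_cases h : p.1 = p.2 <;> simp [hfodef, hfddef, h]
    rw [this]
    exact hwsum.sub hfd_sum
  have hsplit : ∑' p : ℕ × ℕ, f p = (∑' p, fd p) + ∑' p, fo p := by
    rw [← Summable.tsum_add hfd_sum hfo_sum]
    apply tsum_congr
    intro p
    by_cases h : p.1 = p.2 <;> simp [hfddef, hfodef, h]
  -- diagonal part
  have hdiag_eq : (∑' p, fd p) = ∑' i : ℕ, (i : ℝ) * V i i := by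
    have hinj : Function.Injective (fun i : ℕ => ((i, i) : ℕ × ℕ)) := by
      intro a b h; simpa [Prod.ext_iff] using h
    have hsupp : Function.support fd ⊆ Set.range (fun i : ℕ => ((i, i) : ℕ × ℕ)) := by
      intro p hp
      by_cases h : p.1 = p.2
      · exact ⟨p.2, by simp [Prod.ext_iff, h]⟩
      · simp [Function.mem_support, hfddef, h] at hp
    rw [← Function.Injective.tsum_eq hinj hsupp]
    apply tsum_congr
    intro i
    simp [hfddef, hfdef]
  -- off-diagonal part
  have hoinj : Function.Injective (fun q : ℕ × ℕ => ((q.1 + q.2 + 2, q.2 + 1) : ℕ × ℕ)) := by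
    rintro ⟨k, j⟩ ⟨k', j'⟩ h
    simp only [Prod.ext_iff] at h
    simp only [Prod.ext_iff]
    omega
  have hosupp : Function.support fo ⊆
      Set.range (fun q : ℕ × ℕ => ((q.1 + q.2 + 2, q.2 + 1) : ℕ × ℕ)) := by
    rintro ⟨a, b⟩ hp
    simp only [Function.mem_support, hfodef] at hp
    by_cases h : a = b
    · simp [h] at hp
    · have hVab : V a b ≠ 0 := by
        intro h0
        apply hp
        simp [h, hfdef, h0]
      have hd : 1 ≤ b ∧ b ≤ a := by
        by_contra hc
        exact hVab (hdom _ _ hc)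
      exact ⟨(a - b - 1, b - 1), by simp only [Prod.ext_iff]; omega⟩
  have hoff_eq : (∑' p, fo p) = ∑' q : ℕ × ℕ, fo (q.1 + q.2 + 2, q.2 + 1) := by
    exact (Function.Injective.tsum_eq hoinj hosupp).symm
  -- compute the off-diagonal sum
  have hfo_val : ∀ q : ℕ × ℕ, fo (q.1 + q.2 + 2, q.2 + 1) =
      ((q.1 : ℝ) + (q.2 : ℝ) + 2) * z ^ q.2 * V (q.1 + 2) 1 := by
    rintro ⟨k, j⟩
    have hne : k + j + 2 ≠ j + 1 := by omega
    simp only [hfodef, hfdef, hne, if_neg hne]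
    rw [hV k j]
    push_cast
    ring
  have hfoq_sum : Summable (fun q : ℕ × ℕ => fo (q.1 + q.2 + 2, q.2 + 1)) :=
    hfo_sum.comp_injective hoinj
  -- geometric sums
  have hzlt : |z| < 1 := by rw [abs_of_pos hz0]; exact hz1
  have hgeo : ∑' j : ℕ, z ^ j = (1 - z)⁻¹ := tsum_geometric_of_lt_one hz0.le hz1
  have hgeo_sum : Summable (fun j : ℕ => z ^ j) := summable_geometric_of_lt_one hz0.le hz1
  have hjgeo_sum : Summable (fun j : ℕ => (j : ℝ) * z ^ j) :=
    (hasSum_coe_mul_geometric_of_norm_lt_one (by simpa using hzlt)).summable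
  have hjgeo : ∑' j : ℕ, (j : ℝ) * z ^ j = z / (1 - z) ^ 2 :=
    tsum_coe_mul_geometric_of_norm_lt_one (by simpa using hzlt)
  have hinner : ∀ k : ℕ, ∑' j : ℕ, ((k : ℝ) + (j : ℝ) + 2) * z ^ j * V (k + 2) 1 =
      (((k : ℝ) + 1) / (1 - z) + 1 / (1 - z) ^ 2) * V (k + 2) 1 := by
    intro k
    have e1 : (fun j : ℕ => ((k : ℝ) + (j : ℝ) + 2) * z ^ j * V (k + 2) 1) =
        (fun j : ℕ => (((k : ℝ) + 2) * V (k + 2) 1) * z ^ j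
          + V (k + 2) 1 * ((j : ℝ) * z ^ j)) := by
      funext j; ring
    rw [e1, Summable.tsum_add (hgeo_sum.mul_left _) (hjgeo_sum.mul_left _),
      tsum_mul_left, tsum_mul_left, hgeo, hjgeo]
    field_simp
    ring
  have hinner_sum : ∀ k : ℕ,
      Summable (fun j : ℕ => ((k : ℝ) + (j : ℝ) + 2) * z ^ j * V (k + 2) 1) := by
    intro k
    have e1 : (fun j : ℕ => ((k : ℝ) + (j : ℝ) + 2) * z ^ j * V (k + 2) 1) =
        (fun j : ℕ => (((k : ℝ) + 2) * V (k + 2) 1) * z ^ j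
          + V (k + 2) 1 * ((j : ℝ) * z ^ j)) := by
      funext j; ring
    rw [e1]
    exact (hgeo_sum.mul_left _).add (hjgeo_sum.mul_left _)
  have hoff_val : (∑' p, fo p) =
      ∑' k : ℕ, (((k : ℝ) + 1) / (1 - z) + 1 / (1 - z) ^ 2) * V (k + 2) 1 := by
    rw [hoff_eq]
    have hcong : Summable (fun q : ℕ × ℕ =>
        ((q.1 : ℝ) + (q.2 : ℝ) + 2) * z ^ q.2 * V (q.1 + 2) 1) := by
      apply hfoq_sum.congr
      intro q
      exact hfo_val q
    calc ∑' q : ℕ × ℕ, fo (q.1 + q.2 + 2, q.2 + 1)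
        = ∑' q : ℕ × ℕ, ((q.1 : ℝ) + (q.2 : ℝ) + 2) * z ^ q.2 * V (q.1 + 2) 1 :=
          tsum_congr hfo_val
      _ = ∑' (k : ℕ) (j : ℕ), ((k : ℝ) + (j : ℝ) + 2) * z ^ j * V (k + 2) 1 :=
          Summable.tsum_prod' hcong (fun k => hinner_sum k)
      _ = ∑' k : ℕ, (((k : ℝ) + 1) / (1 - z) + 1 / (1 - z) ^ 2) * V (k + 2) 1 :=
          tsum_congr hinner
  rw [hsplit, hdiag_eq, hoff_val]
end

section
/- For all real λ₁, λ₂ with 0 < λ₁ < λ₂ < 1, the quantity (λ₁²(λ₂−1)(λ₁−λ₂) + λ₂³(λ₁−1))/(λ₁(λ₁−λ₂)λ₂²) is greater than or equal to 1/λ₁. -/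
/-- The paper's ordering `Ī = Ā ≤ ĀI` for the Geo/Geo/1 queue under FCFS with a
controller: the average Age of Actuated Information (Theorem 2(i)) is at least
the average Age of Information `1/λ₁`. -/
theorem avg_AoAI_ge_avg_AoI_geo_geo_1_FCFS
    (l1 l2 : ℝ) (hl1 : 0 < l1) (hl12 : l1 < l2) (hl2 : l2 < 1) :
    1 / l1 ≤ (l1 ^ 2 * (l2 - 1) * (l1 - l2) + l2 ^ 3 * (l1 - 1)) /
      (l1 * (l1 - l2) * l2 ^ 2) := by
  have h2 : (0:ℝ) < l2 := hl1.trans hl12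
  have hd : l1 * (l1 - l2) * l2 ^ 2 < 0 := by
    have : l1 - l2 < 0 := by linarith
    have := mul_pos hl1 (pow_pos h2 2)
    nlinarith
  rw [le_div_iff_of_neg hd, div_mul_eq_mul_div, one_mul, le_div_iff₀ hl1]
  have key : 0 ≤ l1 ^ 2 * (1 - l2) * ((l1 - l2) ^ 2 + l1 * l2) := by
    have h1 : (0:ℝ) ≤ 1 - l2 := by linarith
    have h3 : (0:ℝ) ≤ (l1 - l2) ^ 2 + l1 * l2 := by positivity
    positivity
  nlinarith [key]
end

section
/- For all real λ₁, λ₂ with 0 < λ₁ < 1 and 0 < λ₂ < 1: 1/λ₁ ≤ ((λ₂−1)(λ₁² + λ₁λ₂) − λ₂²)/(λ₁λ₂(λ₁(λ₂−1) − λ₂)) ≤ 1/λ₁ + 1/λ₂ − 1. -/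
/-- The paper's ordering `Ī ≤ Ā ≤ ĀI` for the Geo/Geo/1/1 queue with a
controller: the average Age of Information `1/λ₁` is at most the average Age of
Actuation (Theorem 1(ii)), which is at most the average Age of Actuated
Information `1/λ₁ + 1/λ₂ − 1` (Theorem 2(ii)). -/
theorem ordering_geo_geo_1_1_controller
    (l1 l2 : ℝ) (hl10 : 0 < l1) (hl11 : l1 < 1) (hl20 : 0 < l2) (hl21 : l2 < 1) :
    1 / l1 ≤ ((l2 - 1) * (l1 ^ 2 + l1 * l2) - l2 ^ 2) /
        (l1 * l2 * (l1 * (l2 - 1) - l2)) ∧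
    ((l2 - 1) * (l1 ^ 2 + l1 * l2) - l2 ^ 2) /
        (l1 * l2 * (l1 * (l2 - 1) - l2)) ≤ 1 / l1 + 1 / l2 - 1 := by
  have hD : 0 < l1 * l2 * (l2 - l1 * (l2 - 1)) := by nlinarith [mul_pos hl10 (sub_pos.mpr hl21), mul_pos hl10 hl20]
  have hrw : ((l2 - 1) * (l1 ^ 2 + l1 * l2) - l2 ^ 2) /
      (l1 * l2 * (l1 * (l2 - 1) - l2)) =
      (l2 ^ 2 - (l2 - 1) * (l1 ^ 2 + l1 * l2)) /
      (l1 * l2 * (l2 - l1 * (l2 - 1))) := by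
    rw [div_eq_div_iff (by nlinarith) (by nlinarith)]; ring
  rw [hrw]
  constructor
  · rw [div_le_div_iff₀ hl10 hD]; nlinarith [mul_pos (mul_pos hl10 (mul_pos hl10 hl10)) (sub_pos.mpr hl21)]
  · rw [div_le_iff₀ hD]
    have h1 : 1 / l1 + 1 / l2 - 1 = (l2 + l1 - l1 * l2) / (l1 * l2) := by
      field_simp
    rw [h1, div_mul_eq_mul_div, le_div_iff₀ (mul_pos hl10 hl20)]
    nlinarith [mul_pos (mul_pos (mul_pos hl10 hl20) (mul_pos hl10 hl20)) (mul_pos (sub_pos.mpr hl11) (sub_pos.mpr hl21))]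
end

section
/- Fix λ₂ with 0 < λ₂ < 1 and define, for 0 < λ₁ < λ₂, ĀI(λ₁) = (λ₁²(λ₂−1)(λ₁−λ₂) + λ₂³(λ₁−1))/(λ₁(λ₁−λ₂)λ₂²). Then there exists λ₁* with 0 < λ₁* < λ₂ such that ĀI(λ₁*) ≤ ĀI(λ₁) for every λ₁ ∈ (0, λ₂). (In particular, ĀI tends to +∞ both as λ₁ → 0⁺ and as λ₁ → λ₂⁻, so the minimum is attained in the interior.) -/
/-- For each fixed actuation-permission probability `λ₂`, the average Age of
Actuated Information of the Geo/Geo/1 queue under FCFS with a controller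
(Theorem 2(i)), viewed as a function of the arrival probability `λ₁` on the
stability interval `(0, λ₂)`, attains a minimum at an interior point `λ₁*`. -/
theorem exists_optimal_arrival_rate_AoAI_FCFS
    (l2 : ℝ) (hl20 : 0 < l2) (hl21 : l2 < 1) :
    ∃ l1s : ℝ, 0 < l1s ∧ l1s < l2 ∧
      ∀ l1 : ℝ, 0 < l1 → l1 < l2 →
        (l1s ^ 2 * (l2 - 1) * (l1s - l2) + l2 ^ 3 * (l1s - 1)) /
            (l1s * (l1s - l2) * l2 ^ 2) ≤
          (l1 ^ 2 * (l2 - 1) * (l1 - l2) + l2 ^ 3 * (l1 - 1)) /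
            (l1 * (l1 - l2) * l2 ^ 2) := by
  set g : ℝ → ℝ := fun x => 1/x + (1-l2)/(l2-x) - (1-l2)/l2^2 * x with hg
  obtain ⟨K, hKdef⟩ : ∃ K : ℝ, K = (1-l2)/l2 := ⟨_, rfl⟩
  -- f = g on (0, l2)
  have hfg : ∀ x : ℝ, 0 < x → x < l2 →
      (x ^ 2 * (l2 - 1) * (x - l2) + l2 ^ 3 * (x - 1)) /
        (x * (x - l2) * l2 ^ 2) = g x := by
    intro x hx0 hxl
    have h1 : x ≠ 0 := ne_of_gt hx0
    have h2 : x - l2 ≠ 0 := sub_ne_zero.mpr (ne_of_lt hxl)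
    have h3 : l2 ≠ 0 := ne_of_gt hl20
    have h4 : l2 - x ≠ 0 := sub_ne_zero.mpr (ne_of_gt hxl)
    simp only [hg]
    field_simp
    ring
  have hK : 0 < K := hKdef ▸ div_pos (by linarith) hl20
  -- lower bounds
  have hlb1 : ∀ x : ℝ, 0 < x → x < l2 → 1/x - K < g x := by
    intro x hx0 hxl
    have h1 : 0 < (1-l2)/(l2-x) := div_pos (by linarith) (by linarith)
    have h2 : (1-l2)/l2^2 * x < K := by
      rw [hKdef, div_mul_eq_mul_div, div_lt_div_iff₀ (by positivity) hl20]
      nlinarith [mul_pos (mul_pos (show (0:ℝ)<1-l2 by linarith) hl20) (show (0:ℝ)<l2-x by linarith)]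
    simp only [hg]
    linarith
  have hlb2 : ∀ x : ℝ, 0 < x → x < l2 → (1-l2)/(l2-x) - K < g x := by
    intro x hx0 hxl
    have h1 : 0 < 1/x := by positivity
    have h2 : (1-l2)/l2^2 * x < K := by
      rw [hKdef, div_mul_eq_mul_div, div_lt_div_iff₀ (by positivity) hl20]
      nlinarith [mul_pos (mul_pos (show (0:ℝ)<1-l2 by linarith) hl20) (show (0:ℝ)<l2-x by linarith)]
    simp only [hg]
    linarith
  -- continuity of g on any [u,v] ⊆ (0, l2)
  have hgcont : ∀ u v : ℝ, 0 < u → v < l2 → ContinuousOn g (Set.Icc u v) := by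
    intro u v hu hv
    apply ContinuousOn.sub
    · apply ContinuousOn.add
      · exact ContinuousOn.div continuousOn_const continuousOn_id
          (fun x hx => ne_of_gt (lt_of_lt_of_le hu hx.1))
      · exact ContinuousOn.div continuousOn_const (by fun_prop)
          (fun x hx => sub_ne_zero.mpr (ne_of_gt (lt_of_le_of_lt hx.2 hv)))
    · fun_prop
  clear_value g
  obtain ⟨M, hM⟩ : ∃ M : ℝ, M = g (l2/2) := ⟨_, rfl⟩
  have hMK : 0 < M + K := by
    have := hlb1 (l2/2) (by linarith) (by linarith)
    have h1 : 0 < 1/(l2/2) := by positivity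
    linarith
  set a : ℝ := min (M+K)⁻¹ (l2/2) with ha
  set b : ℝ := max (l2 - (1-l2)/(M+K)) (l2/2) with hb
  have ha0 : 0 < a := lt_min (by positivity) (by linarith)
  have hal : a ≤ l2/2 := min_le_right _ _
  have hlb : l2/2 ≤ b := le_max_right _ _
  have hbl2 : b < l2 := by
    apply max_lt _ (by linarith)
    have : 0 < (1-l2)/(M+K) := div_pos (by linarith) hMK
    linarith
  -- g exceeds M near the endpoints
  have key1 : ∀ x : ℝ, 0 < x → x < a → M < g x := by
    intro x hx0 hxa
    have hxi : x < (M+K)⁻¹ := lt_of_lt_of_le hxa (min_le_left _ _)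
    have h1 : M + K < 1/x := by
      rw [lt_div_iff₀ hx0]
      calc (M+K) * x < (M+K) * (M+K)⁻¹ := mul_lt_mul_of_pos_left hxi hMK
        _ = 1 := mul_inv_cancel₀ (ne_of_gt hMK)
    have := hlb1 x hx0 (by calc x < a := hxa
                              _ ≤ l2/2 := hal
                              _ < l2 := by linarith)
    linarith
  have key2 : ∀ x : ℝ, b < x → x < l2 → M < g x := by
    intro x hbx hxl
    have hx0 : 0 < x := lt_of_le_of_lt (by linarith : (0:ℝ) ≤ l2/2) (lt_of_le_of_lt hlb hbx)
    have hd : l2 - x < (1-l2)/(M+K) := by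
      have : l2 - (1-l2)/(M+K) ≤ b := le_max_left _ _
      linarith
    have h1 : M + K < (1-l2)/(l2-x) := by
      rw [lt_div_iff₀ (by linarith : (0:ℝ) < l2 - x)]
      calc (M+K) * (l2-x) < (M+K) * ((1-l2)/(M+K)) :=
            mul_lt_mul_of_pos_left hd hMK
        _ = 1 - l2 := by field_simp
    have := hlb2 x hx0 hxl
    linarith
  obtain ⟨l1s, hmem, hmin⟩ := (isCompact_Icc (a := a) (b := b)).exists_isMinOn
    (Set.nonempty_Icc.mpr (le_trans hal hlb)) (hgcont a b ha0 hbl2)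
  have hs0 : 0 < l1s := lt_of_lt_of_le ha0 hmem.1
  have hsl : l1s < l2 := lt_of_le_of_lt hmem.2 hbl2
  have hmid : l2/2 ∈ Set.Icc a b := ⟨hal, hlb⟩
  have hsM : g l1s ≤ M := hM ▸ hmin hmid
  refine ⟨l1s, hs0, hsl, ?_⟩
  intro l1 hl10 hl1l
  rw [hfg l1s hs0 hsl, hfg l1 hl10 hl1l]
  by_cases hcase : l1 ∈ Set.Icc a b
  · exact hmin hcase
  · rcases not_and_or.mp (Set.mem_Icc.not.mp hcase) with h | h
    · push_neg at h
      exact le_of_lt (lt_of_le_of_lt hsM (key1 l1 hl10 h))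
    · push_neg at h
      exact le_of_lt (lt_of_le_of_lt hsM (key2 l1 h hl1l))
end
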